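/- arXiv:math/0511310 — 8 statements merged into one kernel-verified Lean document; each statement's English description precedes it below -/
import Mathlib

section
/- For every natural number n there exists a natural number n₀, depending only on n, with the following property. Let Q and S be disjoint sets and let R ⊆ Q × Q × S; for a, b ∈ Q write R(a,b) = {s ∈ S : (a,b,s) ∈ R}. Suppose that for all a, b, c ∈ Q one has R(a,b) = R(b,a), R(a,b) ⊆ R(a,c) ∪ R(b,c), R(a,a) = ∅, and |R(a,b)| ≤ n. Then there exist a subset S₀ ⊆ S with |S₀| ≤ n₀ and a relation T ⊆ Q × S with 2·|T(a)| ≤ n for every a ∈ Q (where T(a) = {s ∈ S : (a,s) ∈ T}), such that, setting S′ = S ∖ S₀ and R′(a,b) = R(a,b) ∩ S′, one has T(a) △ T(b) ⊆ R′(a,b) ⊆ T(a) ∪ T(b) for all a, b ∈ Q. -/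
universe u v

/-!
Fix a pair `(a, b)` for which `|R a b|` is maximal and put `S₀ = R a b` and `T c = R a c \ S₀`.
Symmetry and the triangle inclusions alone give `T c △ T d ⊆ R c d \ S₀ ⊆ T c ∪ T d`,
whatever `a` and `S₀`.
Moreover `R a c` and `R b c` agree off `S₀`, while `S₀ ⊆ R a c ∪ R b c`; since neither
`R a c` nor `R b c` is larger than `S₀`, counting gives `2 |T c| ≤ |S₀| ≤ n`.
-/

open Set

lemma exists_forall_le_of_forall_le {α : Type*} [Nonempty α] {f : α → ℕ} {n : ℕ}
    (hf : ∀ x, f x ≤ n) : ∃ p, ∀ q, f q ≤ f p := by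
  have hbdd : BddAbove (range f) := ⟨n, by rintro _ ⟨x, rfl⟩; exact hf x⟩
  obtain ⟨_, ⟨p, rfl⟩, hp⟩ := hbdd.exists_isGreatest_of_nonempty (range_nonempty f)
  exact ⟨p, fun q => hp ⟨q, rfl⟩⟩

lemma Set.two_mul_ncard_diff_le {α : Type*} {A B X : Set α} (hA : A.Finite) (hB : B.Finite)
    (hX : X ⊆ A ∪ B) (hAX : A.ncard ≤ X.ncard) (hBX : B.ncard ≤ X.ncard)
    (hAB : A \ X = B \ X) : 2 * (A \ X).ncard ≤ X.ncard := by
  have hsplit : X = (A ∩ X) ∪ (B ∩ X) := by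
    rw [← union_inter_distrib_right, inter_eq_right.mpr hX]
  have hXle : X.ncard ≤ (A ∩ X).ncard + (B ∩ X).ncard :=
    (congrArg ncard hsplit).trans_le (ncard_union_le _ _)
  have hAsplit := ncard_inter_add_ncard_sdiff_eq_ncard A X hA
  have hBsplit := ncard_inter_add_ncard_sdiff_eq_ncard B X hB
  rw [← hAB] at hBsplit
  omega

namespace TriangleRelation

variable {Q S : Type*} {R : Q → Q → Set S}

lemma diff_subset_of_triangle (htri : ∀ a b c, R a b ⊆ R a c ∪ R b c) (a c d : Q) :
    R a c \ R a d ⊆ R c d :=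
  fun _ hs => (htri a c d hs.1).resolve_left hs.2

lemma subset_union_of_triangle (hsymm : ∀ a b, R a b = R b a)
    (htri : ∀ a b c, R a b ⊆ R a c ∪ R b c) (a c d : Q) : R c d ⊆ R a c ∪ R a d := by
  simpa only [hsymm c a, hsymm d a] using htri c d a

lemma diff_eq_diff_of_triangle (hsymm : ∀ a b, R a b = R b a)
    (htri : ∀ a b c, R a b ⊆ R a c ∪ R b c) (a b c : Q) : R a c \ R a b = R b c \ R a b := by
  apply Subset.antisymm
  · rintro s ⟨hac, hab⟩
    exact ⟨hsymm c b ▸ (htri a c b hac).resolve_left hab, hab⟩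
  · rintro s ⟨hbc, hab⟩
    exact ⟨hsymm c a ▸ (htri b c a hbc).resolve_left (hsymm a b ▸ hab), hab⟩

lemma symmDiff_subset_and_subset_union (hsymm : ∀ a b, R a b = R b a)
    (htri : ∀ a b c, R a b ⊆ R a c ∪ R b c) (X : Set S) (a c d : Q) :
    ((R a c \ X) \ (R a d \ X)) ∪ ((R a d \ X) \ (R a c \ X)) ⊆ R c d \ X ∧
      R c d \ X ⊆ (R a c \ X) ∪ (R a d \ X) := by
  refine ⟨union_subset ?_ ?_, ?_⟩
  · rintro s ⟨⟨hac, hX⟩, had⟩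
    exact ⟨diff_subset_of_triangle htri a c d ⟨hac, fun h => had ⟨h, hX⟩⟩, hX⟩
  · rintro s ⟨⟨had, hX⟩, hac⟩
    exact ⟨hsymm d c ▸ diff_subset_of_triangle htri a d c ⟨had, fun h => hac ⟨h, hX⟩⟩, hX⟩
  · rintro s ⟨hcd, hX⟩
    exact (subset_union_of_triangle hsymm htri a c d hcd).imp (⟨·, hX⟩) (⟨·, hX⟩)

end TriangleRelation

open TriangleRelation in
/-- combinatorial content of Lemma 6.2 of Haskell–Hrushovski–Macpherson.
For every `n` there is `n₀` (depending only on `n`) such that for any sets `Q`, `S`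
(disjointness is automatic since they are distinct types) and any relation
`R ⊆ Q × Q × S`, written as `R : Q → Q → Set S`, satisfying symmetry, the triangle
inclusion `R a b ⊆ R a c ∪ R b c`, `R a a = ∅`, and `|R a b| ≤ n`, there are
`S₀ ⊆ S` with `|S₀| ≤ n₀` and `T ⊆ Q × S` (written `T : Q → Set S`) with
`2 * |T a| ≤ n`, such that, with `S' = S \ S₀` and `R' a b = R a b ∩ S'`,
`T a △ T b ⊆ R' a b ⊆ T a ∪ T b` for all `a b`.  (The symmetric difference is written
as the union of the two set differences.) -/
theorem combinatorial_lemma (n : ℕ) :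
    ∃ n₀ : ℕ, ∀ (Q : Type u) (S : Type v) (R : Q → Q → Set S),
      (∀ a b : Q, R a b = R b a) →
      (∀ a b c : Q, R a b ⊆ R a c ∪ R b c) →
      (∀ a : Q, R a a = ∅) →
      (∀ a b : Q, (R a b).Finite) →
      (∀ a b : Q, (R a b).ncard ≤ n) →
      ∃ (S₀ : Set S) (T : Q → Set S),
        S₀.Finite ∧ S₀.ncard ≤ n₀ ∧
        (∀ a : Q, (T a).Finite) ∧ (∀ a : Q, 2 * (T a).ncard ≤ n) ∧
        ∀ a b : Q,
          (T a \ T b) ∪ (T b \ T a) ⊆ R a b \ S₀ ∧ R a b \ S₀ ⊆ T a ∪ T b := by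
  refine ⟨n, fun Q S R hsymm htri _ hfin hcard => ?_⟩
  cases isEmpty_or_nonempty Q
  · exact ⟨∅, fun _ => ∅, finite_empty, by simp, fun _ => finite_empty, by simp, isEmptyElim⟩
  obtain ⟨⟨a, b⟩, hmax⟩ :=
    exists_forall_le_of_forall_le (f := fun p : Q × Q => (R p.1 p.2).ncard) fun p => hcard p.1 p.2
  refine ⟨R a b, fun c => R a c \ R a b, hfin a b, hcard a b, fun c => (hfin a c).sdiff,
    fun c => ?_, symmDiff_subset_and_subset_union hsymm htri (R a b) a⟩
  calc 2 * (R a c \ R a b).ncard ≤ (R a b).ncard :=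
        two_mul_ncard_diff_le (hfin a c) (hfin b c) (htri a b c) (hmax (a, c)) (hmax (b, c))
          (diff_eq_diff_of_triangle hsymm htri a b c)
    _ ≤ n := hcard a b
end

section
/- Let n be a natural number and N = n + 2. Let Q and S be sets and R ⊆ Q × Q × S; for a, b ∈ Q write R(a,b) = {s ∈ S : (a,b,s) ∈ R}. Suppose that for all a, b, c ∈ Q one has R(a,b) = R(b,a), R(a,b) ⊆ R(a,c) ∪ R(b,c), R(a,a) = ∅, and |R(a,b)| ≤ n. Assume there are a₀,…,a_N, b₀,…,b_N ∈ Q and c₀,…,c_N ∈ S such that c_i ∈ R(a_i, b_j) whenever 0 ≤ i < j ≤ N. Then c_i ∈ R(a_i, b_j) for some i, j with i ≥ j. -/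
universe u v

/-- Claim 1 in the proof of Lemma 6.2 of Haskell–Hrushovski–Macpherson;
stability of the relation `c ∈ R (a, b)`.  Here `N = n + 2`, and the tuples
`a₀, …, a_N`, `b₀, …, b_N`, `c₀, …, c_N` are indexed by `Fin (n + 3)`. -/
theorem stability_claim {Q : Type u} {S : Type v} (n : ℕ) (R : Q → Q → Set S)
    (hsymm : ∀ a b : Q, R a b = R b a)
    (htri : ∀ a b c : Q, R a b ⊆ R a c ∪ R b c)
    (hdiag : ∀ a : Q, R a a = ∅)
    (hfin : ∀ a b : Q, (R a b).Finite)
    (hcard : ∀ a b : Q, (R a b).ncard ≤ n)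
    (a b : Fin (n + 3) → Q) (c : Fin (n + 3) → S)
    (h : ∀ i j : Fin (n + 3), (i : ℕ) < (j : ℕ) → c i ∈ R (a i) (b j)) :
    ∃ i j : Fin (n + 3), (j : ℕ) ≤ (i : ℕ) ∧ c i ∈ R (a i) (b j) := by
  classical
  by_contra hcon
  push_neg at hcon
  -- hcon : ∀ i j, (j:ℕ) ≤ i → c i ∉ R (a i) (b j)
  have hne : ∀ i j : Fin (n + 3), (i : ℕ) < (j : ℕ) → c i ≠ c j := by
    intro i j hij heq
    have h1 : c i ∈ R (a i) (b j) := h i j hij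
    rcases htri (a i) (b j) (a j) h1 with h2 | h2
    · rcases htri (a i) (a j) (b i) h2 with h3 | h3
      · exact hcon i i le_rfl h3
      · rw [heq] at h3
        exact hcon j i hij.le h3
    · rw [hsymm (b j) (a j), heq] at h2
      exact hcon j j le_rfl h2
  set N : Fin (n + 3) := ⟨n + 2, by omega⟩ with hN
  have hmem : ∀ i : Fin (n + 3), (i : ℕ) < n + 2 → c i ∈ R (b 0) (b N) := by
    intro i hi
    have h1 : c i ∈ R (a i) (b N) := h i N hi
    rcases htri (a i) (b N) (b 0) h1 with h2 | h2
    · exact absurd h2 (hcon i 0 (by simp))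
    · rw [hsymm (b N) (b 0)] at h2
      exact h2
  have hT := hfin (b 0) (b N)
  have hcardT : hT.toFinset.card ≤ n := by
    rw [← Set.ncard_eq_toFinset_card _ hT]
    exact hcard _ _
  have hf : Function.Injective (fun i : Fin (n + 2) => c i.castSucc) := by
    intro i j hij
    by_contra hij'
    rcases lt_trichotomy (i : ℕ) (j : ℕ) with hlt | heq | hlt
    · exact hne i.castSucc j.castSucc hlt hij
    · exact hij' (Fin.ext heq)
    · exact hne j.castSucc i.castSucc hlt hij.symm
  have hsub : Finset.image (fun i : Fin (n + 2) => c i.castSucc) Finset.univ ⊆ hT.toFinset := by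
    intro x hx
    simp only [Finset.mem_image, Finset.mem_univ, true_and] at hx
    obtain ⟨i, rfl⟩ := hx
    rw [Set.Finite.mem_toFinset]
    exact hmem i.castSucc (by simpa using i.isLt)
  have := Finset.card_le_card hsub
  rw [Finset.card_image_of_injective _ hf, Finset.card_univ, Fintype.card_fin] at this
  omega
end

section
/- Let G be a group with subgroups N, H and F such that N is normal in G, N ∩ H = {1}, NH = G, and F = (N ∩ F)(H ∩ F). Then for all n, n′ ∈ N and h, h′ ∈ H: n h F = n′ h′ F if and only if h(H ∩ F) = h′(H ∩ F) and n(N ∩ hFh⁻¹) = n′(N ∩ h′F h′⁻¹). -/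
open Pointwise

/-!
Write `(n h)⁻¹ (n' h') = c b` with `c = h⁻¹ (n⁻¹ n') h ∈ N` and `b = h⁻¹ h' ∈ H`. Because
`F = (N ∩ F)(H ∩ F)` and `N ∩ H = 1`, the product `c b` lies in `F` exactly when both factors do:
`b ∈ F` is the condition on the `H`-cosets, and `c ∈ F` says `n⁻¹ n' ∈ h F h⁻¹`, which is the
condition on the `N`-cosets once `b ∈ F` makes `h F h⁻¹ = h' F h'⁻¹`.
-/

namespace Subgroup

variable {G : Type*} [Group G]

theorem coe_conj_smul (g : G) (F : Subgroup G) :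
    ((MulAut.conj g • F : Subgroup G) : Set G) = (fun x => g * x * g⁻¹) '' (F : Set G) := by
  rw [coe_pointwise_smul]
  rfl

theorem mem_conj_smul_iff {F : Subgroup G} {g x : G} :
    x ∈ MulAut.conj g • F ↔ g⁻¹ * x * g ∈ F := by
  rw [mem_pointwise_smul_iff_inv_smul_mem, ← map_inv, MulAut.smul_def, MulAut.conj_apply, inv_inv]

theorem conj_mul_smul_eq_of_mem {F : Subgroup G} (g : G) {b : G} (hb : b ∈ F) :
    MulAut.conj (g * b) • F = MulAut.conj g • F := by
  rw [map_mul, mul_smul, conj_smul_eq_self_of_mem hb]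

theorem mul_mem_iff_of_inf_eq_bot {N H F : Subgroup G} (hNH : N ⊓ H = ⊥)
    (hF : (F : Set G) = ((N ⊓ F : Subgroup G) : Set G) * ((H ⊓ F : Subgroup G) : Set G))
    {c b : G} (hc : c ∈ N) (hb : b ∈ H) : c * b ∈ F ↔ c ∈ F ∧ b ∈ F := by
  refine ⟨fun hcb => ?_, fun ⟨hcF, hbF⟩ => F.mul_mem hcF hbF⟩
  rw [← SetLike.mem_coe, hF] at hcb
  obtain ⟨a, ⟨haN, haF⟩, b', ⟨hb'H, hb'F⟩, hab⟩ := hcb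
  have hcommon : a⁻¹ * c = b' * b⁻¹ := by
    rw [inv_mul_eq_iff_eq_mul, ← mul_assoc, eq_mul_inv_iff_mul_eq]
    exact hab.symm
  have hone : a⁻¹ * c ∈ N ⊓ H :=
    ⟨N.mul_mem (N.inv_mem haN) hc, hcommon ▸ H.mul_mem hb'H (H.inv_mem hb)⟩
  rw [hNH, mem_bot] at hone
  exact ⟨inv_mul_eq_one.mp hone ▸ haF, mul_inv_eq_one.mp (hcommon ▸ hone) ▸ hb'F⟩

end Subgroup

theorem coset_criterion_general {G : Type*} [Group G] (N H F : Subgroup G)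
    (hNnormal : N.Normal)
    (hNH : N ⊓ H = ⊥)
    (hF : (F : Set G) = ((N ⊓ F : Subgroup G) : Set G) * ((H ⊓ F : Subgroup G) : Set G))
    {n n' h h' : G} (hn : n ∈ N) (hn' : n' ∈ N) (hh : h ∈ H) (hh' : h' ∈ H) :
    (n * h) • (F : Set G) = (n' * h') • (F : Set G) ↔
      (h • ((H ⊓ F : Subgroup G) : Set G) = h' • ((H ⊓ F : Subgroup G) : Set G) ∧
        n • ((N : Set G) ∩ ((fun x => h * x * h⁻¹) '' (F : Set G))) =
          n' • ((N : Set G) ∩ ((fun x => h' * x * h'⁻¹) '' (F : Set G)))) := by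
  have hm : n⁻¹ * n' ∈ N := N.mul_mem (N.inv_mem hn) hn'
  have hb : h⁻¹ * h' ∈ H := H.mul_mem (H.inv_mem hh) hh'
  have hsplit : (n * h)⁻¹ * (n' * h') = (h⁻¹ * (n⁻¹ * n') * h) * (h⁻¹ * h') := by group
  rw [leftCoset_eq_iff, hsplit,
    Subgroup.mul_mem_iff_of_inf_eq_bot hNH hF (hNnormal.conj_mem' _ hm h) hb, leftCoset_eq_iff,
    Subgroup.mem_inf, and_iff_right hb, and_comm]
  refine and_congr_right fun hbF => ?_
  have hconj : MulAut.conj h' • F = MulAut.conj h • F := by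
    simpa using Subgroup.conj_mul_smul_eq_of_mem h hbF
  rw [← Subgroup.coe_conj_smul, ← Subgroup.coe_conj_smul, hconj, ← Subgroup.coe_inf,
    leftCoset_eq_iff, Subgroup.mem_inf, and_iff_right hm, Subgroup.mem_conj_smul_iff]

/-- coset criterion from the proof of Lemma 11.4 of
Haskell–Hrushovski–Macpherson.  `G` is a group with subgroups `N, H, F`, `N` normal,
`N ∩ H = 1`, `N H = G`, and `F = (N ∩ F)(H ∩ F)`.  Then for `n, n' ∈ N` and
`h, h' ∈ H`: `n h F = n' h' F` iff `h (H ∩ F) = h' (H ∩ F)` and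
`n (N ∩ h F h⁻¹) = n' (N ∩ h' F h'⁻¹)`.  Cosets are written as translates of the
underlying sets, and `h F h⁻¹` as the image of `F` under conjugation by `h`. -/
theorem coset_criterion {G : Type*} [Group G] (N H F : Subgroup G)
    (hNnormal : N.Normal)
    (hNH : N ⊓ H = ⊥)
    (hprod : (N : Set G) * (H : Set G) = Set.univ)
    (hF : (F : Set G) = ((N ⊓ F : Subgroup G) : Set G) * ((H ⊓ F : Subgroup G) : Set G))
    {n n' h h' : G} (hn : n ∈ N) (hn' : n' ∈ N) (hh : h ∈ H) (hh' : h' ∈ H) :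
    (n * h) • (F : Set G) = (n' * h') • (F : Set G) ↔
      (h • ((H ⊓ F : Subgroup G) : Set G) = h' • ((H ⊓ F : Subgroup G) : Set G) ∧
        n • ((N : Set G) ∩ ((fun x => h * x * h⁻¹) '' (F : Set G))) =
          n' • ((N : Set G) ∩ ((fun x => h' * x * h'⁻¹) '' (F : Set G)))) :=
  coset_criterion_general N H F hNnormal hNH hF hn hn' hh hh'
end

section
/- Fix n ≥ 1 and let N = n(n+1)/2. Let A be an integral domain, and let B_n(A) denote the group of invertible upper triangular n × n matrices over A (equivalently, upper triangular matrices all of whose diagonal entries are units of A; the inverse is again upper triangular). Then there exist subgroups G₀ ≤ G₁ ≤ … ≤ G_N = B_n(A) and, for each 0 ≤ i ≤ N−1, a subgroup H_i ≤ G_{i+1}, such that: G₀ = {1}; each G_i is normal in B_n(A); G_i ∩ H_i = {1} and G_i H_i = G_{i+1} for each i; each H_i is isomorphic as a group either to the additive group (A, +) or to the multiplicative group A^× of units of A; and moreover, for each i, if a ∈ G_i and b ∈ H_i and the matrix ab fixes the standard basis column vector e_n (i.e. (ab)·e_n = e_n), then a·e_n = e_n and b·e_n = e_n. -/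
universe u

open Pointwise

namespace Stmt3

/-- The group `B_n(A)` of invertible upper triangular `n × n` matrices over `A` whose
inverse is again upper triangular, as a subgroup of the units of the matrix ring.
(Over a commutative ring the inverse of an invertible upper triangular matrix is
automatically upper triangular, and such matrices are exactly the upper triangular
ones with unit diagonal entries.) -/
def upperTriangularUnits (n : ℕ) (A : Type u) [CommRing A] :
    Subgroup (Matrix (Fin n) (Fin n) A)ˣ where
  carrier := {g | Matrix.BlockTriangular (g : Matrix (Fin n) (Fin n) A) id ∧
      Matrix.BlockTriangular (↑(g⁻¹) : Matrix (Fin n) (Fin n) A) id}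
  one_mem' := by
    refine ⟨?_, ?_⟩
    · rw [Units.val_one]; exact Matrix.blockTriangular_one
    · rw [inv_one, Units.val_one]; exact Matrix.blockTriangular_one
  mul_mem' := by
    rintro a b ⟨ha1, ha2⟩ ⟨hb1, hb2⟩
    refine ⟨?_, ?_⟩
    · rw [Units.val_mul]; exact ha1.mul hb1
    · rw [mul_inv_rev, Units.val_mul]; exact hb2.mul ha2
  inv_mem' := by
    rintro a ⟨ha1, ha2⟩
    refine ⟨ha2, ?_⟩
    rw [inv_inv]; exact ha1

/-- The last standard basis (column) vector `e_n` of `A^n`. -/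
def lastStd (n : ℕ) (A : Type u) [CommRing A] : Fin n → A :=
  fun j => if (j : ℕ) = n - 1 then 1 else 0

/-!
Read a position `(i, j)` with `i ≤ j` as the interval `[i, j]` and list these positions as
`p₀, …, p_{N-1}` so that an interval comes before every interval it contains. Let `G_t`
consist of the `g ∈ B_n(A)` with `g - 1` supported on `{p_s | s < t}`, and `H_t` of those with
`g - 1` supported on `{p_t}`. A support set that is transitive as a relation gives a subgroup,
and one that is closed under moving up and to the right is preserved by conjugation in
`B_n(A)`, since conjugation by an upper triangular matrix only spreads entries up and to the
right. The group `H_t` is the root group `{1 + c E_kl} ≅ (A, +)` when `p_t = (k, l)` lies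
above the diagonal and the torus factor `≅ Aˣ` when it lies on it, and `G_{t+1} = G_t H_t`
because the entry at `p_t` can be cleared by a right multiplication with an element of `H_t`.
Finally, if `a ∈ G_t`, `b ∈ H_t` and `ab` fixes `e_n`, then `b e_n = a⁻¹ e_n`; the supports
of `b - 1` and `a⁻¹ - 1` are disjoint, so both vectors are `e_n`.
-/

open Matrix

section Support

variable {ι R : Type*}

def IsSupportedIn [Zero R] (S : ι → ι → Prop) (M : Matrix ι ι R) : Prop :=
  ∀ i j, ¬ S i j → M i j = 0

theorem IsSupportedIn.add [AddZeroClass R] {S : ι → ι → Prop} {M N : Matrix ι ι R}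
    (hM : IsSupportedIn S M) (hN : IsSupportedIn S N) : IsSupportedIn S (M + N) :=
  fun i j h => by rw [Matrix.add_apply, hM i j h, hN i j h, add_zero]

theorem IsSupportedIn.mul [Fintype ι] [NonUnitalNonAssocSemiring R] {S : ι → ι → Prop}
    [IsTrans ι S] {M N : Matrix ι ι R} (hM : IsSupportedIn S M) (hN : IsSupportedIn S N) :
    IsSupportedIn S (M * N) := by
  intro i j hij
  rw [mul_apply]
  refine Finset.sum_eq_zero fun k _ => ?_
  by_cases hik : S i k
  · rw [hN k j fun hkj => hij (_root_.trans hik hkj), mul_zero]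
  · rw [hM i k hik, zero_mul]

def singletonRel (p : ι × ι) (i j : ι) : Prop := (i, j) = p

instance (p : ι × ι) : IsTrans ι (singletonRel p) :=
  ⟨fun _ _ _ h₁ h₂ => by
    simp only [singletonRel, Prod.ext_iff] at h₁ h₂ ⊢
    exact ⟨h₁.1, h₂.2⟩⟩

theorem isSupportedIn_single [DecidableEq ι] [Zero R] (k l : ι) (c : R) :
    IsSupportedIn (singletonRel (k, l)) (single k l c) :=
  fun i j h => single_apply_of_ne _ _ _ _ _ fun ⟨hi, hj⟩ => h (by rw [singletonRel, hi, hj])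

theorem isSupportedIn_diagonal_mulSingle_sub_one [DecidableEq ι] [Ring R] (k : ι) (r : R) :
    IsSupportedIn (singletonRel (k, k)) (diagonal (Pi.mulSingle k r) - 1) := by
  intro i j hij
  rw [Matrix.sub_apply]
  by_cases h : i = j
  · subst h
    have hik : i ≠ k := fun h => hij (by rw [singletonRel, h])
    simp [hik]
  · simp [h]

theorem eq_of_isSupportedIn_sub_one [DecidableEq ι] [Ring R] {k l : ι} {M N : Matrix ι ι R}
    (hM : IsSupportedIn (singletonRel (k, l)) (M - 1))
    (hN : IsSupportedIn (singletonRel (k, l)) (N - 1)) (h : M k l = N k l) : M = N := by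
  rw [← sub_left_inj (a := (1 : Matrix ι ι R))]
  ext i j
  by_cases hij : (i, j) = (k, l)
  · obtain ⟨rfl, rfl⟩ := Prod.mk.inj hij
    rw [Matrix.sub_apply, Matrix.sub_apply, h]
  · rw [hM i j hij, hN i j hij]

theorem mul_apply_self_of_blockTriangular [LinearOrder ι] [Fintype ι]
    [NonUnitalNonAssocSemiring R] {M N : Matrix ι ι R} (hM : M.BlockTriangular id)
    (hN : N.BlockTriangular id) (i : ι) : (M * N) i i = M i i * N i i := by
  rw [mul_apply]
  refine Finset.sum_eq_single i (fun k _ hk => ?_) (by simp)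
  rcases hk.lt_or_gt with h | h
  · rw [hM h, zero_mul]
  · rw [hN h, mul_zero]

theorem mulVec_single_one_eq_iff [Fintype ι] [DecidableEq ι] [Ring R] {M : Matrix ι ι R}
    {j : ι} :
    M *ᵥ Pi.single j 1 = Pi.single j 1 ↔ ∀ i, (M - 1) i j = 0 := by
  have h : M *ᵥ Pi.single j 1 - Pi.single j 1 = (M - 1) *ᵥ Pi.single j (1 : R) := by
    rw [sub_mulVec, one_mulVec]
  rw [← sub_eq_zero, h, mulVec_single_one, funext_iff]
  rfl

end Support

section Generators

variable {ι R : Type*} [Fintype ι] [DecidableEq ι] [CommRing R]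

def transvectionHom {k l : ι} (hkl : k ≠ l) : Multiplicative R →* (Matrix ι ι R)ˣ :=
  MonoidHom.toHomUnits
    { toFun := fun c => transvection k l c.toAdd
      map_one' := transvection_zero k l
      map_mul' := fun c d => (transvection_mul_transvection_same k l hkl c.toAdd d.toAdd).symm }

theorem val_transvectionHom {k l : ι} (hkl : k ≠ l) (c : Multiplicative R) :
    (transvectionHom hkl c : Matrix ι ι R) = transvection k l c.toAdd :=
  rfl

theorem transvectionHom_injective {k l : ι} (hkl : k ≠ l) :
    Function.Injective (transvectionHom (R := R) hkl) := fun c d h => by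
  have := congrArg (fun g : (Matrix ι ι R)ˣ => (g : Matrix ι ι R) k l) h
  simpa [val_transvectionHom, transvection, one_apply_ne hkl] using this

def diagonalHom (k : ι) : Rˣ →* (Matrix ι ι R)ˣ :=
  ((diagonalRingHom ι R).toMonoidHom.comp
    ((MonoidHom.mulSingle _ k).comp (Units.coeHom R))).toHomUnits

theorem val_diagonalHom (k : ι) (u : Rˣ) :
    (diagonalHom k u : Matrix ι ι R) = diagonal (Pi.mulSingle k (u : R)) :=
  rfl

theorem diagonalHom_injective (k : ι) : Function.Injective (diagonalHom (R := R) k) :=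
  fun u v h => Units.ext <| by
    have := congrArg (fun g : (Matrix ι ι R)ˣ => (g : Matrix ι ι R) k k) h
    simpa [val_diagonalHom] using this

end Generators

section Triangular

variable {n : ℕ} {A : Type u} [CommRing A]

local notation "𝕄" => Matrix (Fin n) (Fin n) A

theorem val_mul_inv_apply_self {g : 𝕄ˣ} (hg : g ∈ upperTriangularUnits n A) (i : Fin n) :
    (g : 𝕄) i i * (↑g⁻¹ : 𝕄) i i = 1 := by
  rw [← mul_apply_self_of_blockTriangular hg.1 hg.2, ← Units.val_mul, mul_inv_cancel,
    Units.val_one, one_apply_eq]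

theorem val_inv_mul_apply_self {g : 𝕄ˣ} (hg : g ∈ upperTriangularUnits n A) (i : Fin n) :
    (↑g⁻¹ : 𝕄) i i * (g : 𝕄) i i = 1 := by
  rw [mul_comm, val_mul_inv_apply_self hg]

variable {S T : Fin n → Fin n → Prop} [IsTrans (Fin n) S] [IsTrans (Fin n) T]

/-- Row `i` of `g * (g⁻¹ - 1) = 1 - g` only involves rows `k > i` of `g⁻¹ - 1`, which
allows a downward induction on `i`. -/
theorem IsSupportedIn.inv_sub_one {g : 𝕄ˣ}
    (hg : g ∈ upperTriangularUnits n A) (h : IsSupportedIn S ((g : 𝕄) - 1)) :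
    IsSupportedIn S ((↑g⁻¹ : 𝕄) - 1) := by
  intro i j
  induction i using WellFoundedGT.induction with
  | _ i ih =>
  intro hij
  have hrow : ((g : 𝕄) * (↑g⁻¹ - 1)) i j = (g : 𝕄) i i * (↑g⁻¹ - 1 : 𝕄) i j := by
    rw [mul_apply]
    refine Finset.sum_eq_single i (fun k _ hk => ?_) (by simp)
    rcases hk.lt_or_gt with hki | hik
    · rw [hg.1 hki, zero_mul]
    · by_cases hS : S i k
      · rw [ih k hik fun hkj => hij (_root_.trans hS hkj), mul_zero]
      · have hgik := h i k hS
        rw [Matrix.sub_apply, one_apply_ne hik.ne, sub_zero] at hgik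
        rw [hgik, zero_mul]
  have hzero : ((g : 𝕄) * (↑g⁻¹ - 1)) i j = 0 := by
    rw [mul_sub, mul_one, ← Units.val_mul, mul_inv_cancel, Units.val_one, ← neg_sub,
      Matrix.neg_apply, h i j hij, neg_zero]
  rw [hrow] at hzero
  calc (↑g⁻¹ - 1 : 𝕄) i j
      = (↑g⁻¹ : 𝕄) i i * ((g : 𝕄) i i * (↑g⁻¹ - 1 : 𝕄) i j) := by
        rw [← mul_assoc, val_inv_mul_apply_self hg, one_mul]
    _ = 0 := by rw [hzero, mul_zero]

variable (A S) in
def patternSubgroup : Subgroup 𝕄ˣ where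
  carrier := {g | g ∈ upperTriangularUnits n A ∧ IsSupportedIn S ((g : 𝕄) - 1)}
  one_mem' := ⟨one_mem _, fun i j _ => by simp⟩
  mul_mem' := by
    rintro a b ⟨ha, ha'⟩ ⟨hb, hb'⟩
    refine ⟨mul_mem ha hb, ?_⟩
    have : ((a * b : 𝕄ˣ) : 𝕄) - 1 =
        ((a : 𝕄) - 1) + ((b : 𝕄) - 1) + ((a : 𝕄) - 1) * ((b : 𝕄) - 1) := by
      rw [Units.val_mul]; noncomm_ring
    rw [this]
    exact (ha'.add hb').add (ha'.mul hb')
  inv_mem' := fun ⟨ha, ha'⟩ => ⟨inv_mem ha, ha'.inv_sub_one ha⟩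

theorem patternSubgroup_mono (h : ∀ i j, S i j → T i j) :
    patternSubgroup A S ≤ patternSubgroup A T :=
  fun _ hg => ⟨hg.1, fun i j hT => hg.2 i j fun hS => hT (h i j hS)⟩

theorem patternSubgroup_eq_bot (h : ∀ i j, ¬ S i j) : patternSubgroup A S = ⊥ :=
  (Subgroup.eq_bot_iff_forall _).2 fun _ hg =>
    Units.ext (sub_eq_zero.1 (Matrix.ext fun i j => hg.2 i j (h i j)))

theorem patternSubgroup_inf_eq_bot (h : ∀ i j, S i j → ¬ T i j) :
    patternSubgroup A S ⊓ patternSubgroup A T = ⊥ :=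
  (Subgroup.eq_bot_iff_forall _).2 fun _ ⟨hS, hT⟩ =>
    Units.ext (sub_eq_zero.1 (Matrix.ext fun i j => by
      by_cases hij : S i j
      exacts [hT.2 i j (h i j hij), hS.2 i j hij]))

theorem patternSubgroup_eq_upperTriangularUnits (h : ∀ i j, i ≤ j → S i j) :
    patternSubgroup A S = upperTriangularUnits n A := by
  refine le_antisymm (fun _ hg => hg.1) fun g hg => ⟨hg, fun i j hij => ?_⟩
  have hji : j < i := lt_of_not_ge fun hij' => hij (h i j hij')
  rw [Matrix.sub_apply, hg.1 hji, one_apply_ne hji.ne', sub_zero]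

def IsUpRightClosed (S : Fin n → Fin n → Prop) : Prop :=
  ∀ ⦃i j k l⦄, i ≤ k → l ≤ j → S k l → S i j

theorem conj_mem_patternSubgroup (hS : IsUpRightClosed S) {g x : 𝕄ˣ}
    (hg : g ∈ upperTriangularUnits n A) (hx : x ∈ patternSubgroup A S) :
    g * x * g⁻¹ ∈ patternSubgroup A S := by
  refine ⟨mul_mem (mul_mem hg hx.1) (inv_mem hg), fun i j hij => ?_⟩
  have hconj : ((g * x * g⁻¹ : 𝕄ˣ) : 𝕄) - 1 = g * ((x : 𝕄) - 1) * ((g⁻¹ : 𝕄ˣ) : 𝕄) := by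
    rw [mul_sub, sub_mul, mul_one, ← Units.val_mul, ← Units.val_mul, ← Units.val_mul,
      mul_inv_cancel, Units.val_one]
  rw [hconj, mul_apply]
  refine Finset.sum_eq_zero fun l _ => ?_
  by_cases hjl : j < l
  · rw [hg.2 hjl, mul_zero]
  rw [mul_apply, Finset.sum_mul]
  refine Finset.sum_eq_zero fun k _ => ?_
  by_cases hki : k < i
  · rw [hg.1 hki, zero_mul, zero_mul]
  rw [hx.2 k l fun hkl => hij (hS (not_lt.1 hki) (not_lt.1 hjl) hkl), mul_zero, zero_mul]

variable (A) in
abbrev entrySubgroup (p : Fin n × Fin n) : Subgroup 𝕄ˣ :=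
  patternSubgroup A (singletonRel p)

theorem map_mem_upperTriangularUnits {G : Type*} [Group G] (ψ : G →* 𝕄ˣ)
    (h : ∀ c, (ψ c : 𝕄).BlockTriangular id) (c : G) : ψ c ∈ upperTriangularUnits n A :=
  ⟨h c, by rw [← map_inv]; exact h c⁻¹⟩

theorem range_transvectionHom {k l : Fin n} (hkl : k < l) :
    (transvectionHom (R := A) hkl.ne).range = entrySubgroup A (k, l) := by
  have hsupp : ∀ c : Multiplicative A,
      IsSupportedIn (singletonRel (k, l)) ((transvectionHom hkl.ne c : 𝕄) - 1) := fun c => by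
    rw [val_transvectionHom, transvection, add_sub_cancel_left]
    exact isSupportedIn_single k l _
  ext x
  constructor
  · rintro ⟨c, rfl⟩
    exact ⟨map_mem_upperTriangularUnits _ (fun _ => blockTriangular_transvection hkl.le _) c,
      hsupp c⟩
  · intro hx
    refine ⟨Multiplicative.ofAdd ((x : 𝕄) k l),
      Units.ext (eq_of_isSupportedIn_sub_one (hsupp _) hx.2 ?_)⟩
    simp [val_transvectionHom, transvection, one_apply_ne hkl.ne]

theorem range_diagonalHom (k : Fin n) :
    (diagonalHom (R := A) k).range = entrySubgroup A (k, k) := by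
  ext x
  constructor
  · rintro ⟨u, rfl⟩
    exact ⟨map_mem_upperTriangularUnits _ (fun _ => blockTriangular_diagonal _) u,
      isSupportedIn_diagonal_mulSingle_sub_one k _⟩
  · intro hx
    refine ⟨Units.mkOfMulEqOne _ _ (val_mul_inv_apply_self hx.1 k),
      Units.ext (eq_of_isSupportedIn_sub_one (isSupportedIn_diagonal_mulSingle_sub_one k _)
        hx.2 ?_)⟩
    simp [val_diagonalHom]

theorem nonempty_entrySubgroup_mulEquiv {p : Fin n × Fin n} (hp : p.1 ≤ p.2) :
    Nonempty (entrySubgroup A p ≃* Multiplicative A) ∨ Nonempty (entrySubgroup A p ≃* Aˣ) := by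
  obtain ⟨k, l⟩ := p
  rcases hp.lt_or_eq with hkl | hkl
  · exact .inl ⟨(MulEquiv.subgroupCongr (range_transvectionHom hkl)).symm.trans
      (MonoidHom.ofInjective (transvectionHom_injective hkl.ne)).symm⟩
  · obtain rfl : k = l := hkl
    exact .inr ⟨(MulEquiv.subgroupCongr (range_diagonalHom k)).symm.trans
      (MonoidHom.ofInjective (diagonalHom_injective k)).symm⟩

variable {S' : Fin n → Fin n → Prop} [IsTrans (Fin n) S']

/-- Right multiplication by `transvection k l (-c)` subtracts `c` times column `k` from
column `l`; `c = x_kk⁻¹ x_kl` clears the entry `(k, l)`. -/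
theorem exists_mul_transvection_eq {k l : Fin n} (hkl : k < l)
    (hS' : ∀ i j, S' i j ↔ S i j ∨ (i, j) = (k, l)) (hup : IsUpRightClosed S')
    {x : 𝕄ˣ} (hx : x ∈ patternSubgroup A S') :
    ∃ a ∈ patternSubgroup A S, ∃ b ∈ entrySubgroup A (k, l), a * b = x := by
  set c := (↑x⁻¹ : 𝕄) k k * (x : 𝕄) k l
  set b := transvectionHom hkl.ne (Multiplicative.ofAdd c)
  have hb : b ∈ entrySubgroup A (k, l) := (range_transvectionHom hkl).le ⟨_, rfl⟩
  have hb_inv : ((b⁻¹ : 𝕄ˣ) : 𝕄) = transvection k l (-c) := by rw [← map_inv]; rfl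
  have hx' : ∀ i j, ¬ S' i j → (x : 𝕄) i j = (1 : 𝕄) i j :=
    fun i j h => sub_eq_zero.1 (hx.2 i j h)
  refine ⟨x * b⁻¹, ⟨mul_mem hx.1 (inv_mem hb.1), fun i j hij => ?_⟩, b, hb,
    inv_mul_cancel_right x b⟩
  rw [Units.val_mul, hb_inv, Matrix.sub_apply, sub_eq_zero]
  by_cases hjl : j = l
  · obtain rfl := hjl
    rw [mul_transvection_apply_same]
    by_cases hik : i = k
    · obtain rfl := hik
      rw [one_apply_ne hkl.ne]
      linear_combination (-(x : 𝕄) i j) * val_inv_mul_apply_self hx.1 i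
    · have hil : ¬ S' i j := by
        rw [hS']; rintro (h | h)
        exacts [hij h, hik (Prod.mk.inj h).1]
      have hik' : ¬ S' i k := fun h => hil (hup le_rfl hkl.le h)
      rw [hx' i j hil, hx' i k hik', one_apply_ne hik, mul_zero, add_zero]
  · rw [mul_transvection_apply_of_ne k l i j hjl]
    refine hx' i j ?_
    rw [hS']; rintro (h | h)
    exacts [hij h, hjl (Prod.mk.inj h).2]

theorem exists_mul_diagonal_eq {k : Fin n} (hS' : ∀ i j, S' i j ↔ S i j ∨ (i, j) = (k, k))
    {x : 𝕄ˣ} (hx : x ∈ patternSubgroup A S') :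
    ∃ a ∈ patternSubgroup A S, ∃ b ∈ entrySubgroup A (k, k), a * b = x := by
  set u : Aˣ := Units.mkOfMulEqOne _ _ (val_mul_inv_apply_self hx.1 k)
  set b := diagonalHom k u
  have hb : b ∈ entrySubgroup A (k, k) := (range_diagonalHom k).le ⟨_, rfl⟩
  have hb_inv : ((b⁻¹ : 𝕄ˣ) : 𝕄) = diagonal (Pi.mulSingle k ↑u⁻¹) := by rw [← map_inv]; rfl
  refine ⟨x * b⁻¹, ⟨mul_mem hx.1 (inv_mem hb.1), fun i j hij => ?_⟩, b, hb,
    inv_mul_cancel_right x b⟩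
  rw [Units.val_mul, hb_inv, Matrix.sub_apply, mul_diagonal, sub_eq_zero]
  by_cases hijk : (i, j) = (k, k)
  · obtain ⟨rfl, rfl⟩ := Prod.mk.inj hijk
    rw [Pi.mulSingle_eq_same, one_apply_eq]
    exact u.mul_inv
  · rw [sub_eq_zero.1 (hx.2 i j fun h => ((hS' i j).1 h).elim hij hijk)]
    by_cases hjk : j = k
    · obtain rfl := hjk
      rw [one_apply_ne fun h => hijk (by rw [h]), zero_mul]
    · rw [Pi.mulSingle_eq_of_ne hjk, mul_one]

theorem coe_patternSubgroup_mul_entrySubgroup {p : Fin n × Fin n} (hp : p.1 ≤ p.2)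
    (hS' : ∀ i j, S' i j ↔ S i j ∨ (i, j) = p) (hup : IsUpRightClosed S') :
    (patternSubgroup A S : Set 𝕄ˣ) * (entrySubgroup A p : Set 𝕄ˣ) = patternSubgroup A S' := by
  refine subset_antisymm ?_ fun x hx => ?_
  · rintro _ ⟨a, ha, b, hb, rfl⟩
    exact mul_mem (patternSubgroup_mono (fun i j h => (hS' i j).2 (.inl h)) ha)
      (patternSubgroup_mono (S := singletonRel p) (fun i j h => (hS' i j).2 (.inr h)) hb)
  obtain ⟨k, l⟩ := p
  obtain ⟨a, ha, b, hb, rfl⟩ : ∃ a ∈ patternSubgroup A S, ∃ b ∈ entrySubgroup A (k, l),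
      a * b = x := by
    rcases hp.lt_or_eq with hkl | hkl
    · exact exists_mul_transvection_eq hkl hS' hup hx
    · obtain rfl : k = l := hkl
      exact exists_mul_diagonal_eq hS' hx
  exact Set.mul_mem_mul ha hb

theorem mulVec_single_one_eq_of_mul_eq {j : Fin n} (hj : ∀ i, T i j → ¬ S i j) {a b : 𝕄ˣ}
    (ha : a ∈ patternSubgroup A S) (hb : b ∈ patternSubgroup A T)
    (hab : ((a * b : 𝕄ˣ) : 𝕄) *ᵥ Pi.single j 1 = Pi.single j 1) :
    (a : 𝕄) *ᵥ Pi.single j 1 = Pi.single j 1 ∧ (b : 𝕄) *ᵥ Pi.single j 1 = Pi.single j 1 := by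
  have hb_eq : (b : 𝕄) *ᵥ Pi.single j 1 = (↑a⁻¹ : 𝕄) *ᵥ Pi.single j 1 :=
    calc (b : 𝕄) *ᵥ Pi.single j 1 = ((a⁻¹ * (a * b) : 𝕄ˣ) : 𝕄) *ᵥ Pi.single j 1 := by
          rw [inv_mul_cancel_left]
      _ = (↑a⁻¹ : 𝕄) *ᵥ Pi.single j 1 := by rw [Units.val_mul, ← mulVec_mulVec, hab]
  have hcol : ((b : 𝕄) - 1) *ᵥ Pi.single j 1 = ((↑a⁻¹ : 𝕄) - 1) *ᵥ Pi.single j 1 := by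
    rw [sub_mulVec, sub_mulVec, hb_eq]
  have hb_fix : (b : 𝕄) *ᵥ Pi.single j 1 = Pi.single j 1 := by
    refine mulVec_single_one_eq_iff.2 fun i => ?_
    by_cases hT : T i j
    · have hi := congrFun hcol i
      simp only [mulVec_single_one, col_apply] at hi
      rw [hi]
      exact (inv_mem ha).2 i j (hj i hT)
    · exact hb.2 i j hT
  refine ⟨?_, hb_fix⟩
  calc (a : 𝕄) *ᵥ Pi.single j 1 = (a : 𝕄) *ᵥ ((b : 𝕄) *ᵥ Pi.single j 1) := by rw [hb_fix]
    _ = Pi.single j 1 := by rw [mulVec_mulVec, ← Units.val_mul, hab]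

end Triangular

section Positions

variable {n : ℕ}

def UpperPos (n : ℕ) : Type := {p : Fin n × Fin n // p.1 ≤ p.2}

instance : Fintype (UpperPos n) := inferInstanceAs (Fintype {p : Fin n × Fin n // p.1 ≤ p.2})

/-- Intervals `[i, j]` are listed by decreasing length, ties broken by `i`. Any linear order
in which an interval precedes the intervals it contains would do. -/
def UpperPos.key (p : UpperPos n) : ℕᵒᵈ ×ₗ ℕ :=
  toLex (OrderDual.toDual ((p.1.2 : ℕ) - p.1.1), (p.1.1 : ℕ))

theorem UpperPos.key_injective : Function.Injective (UpperPos.key (n := n)) := by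
  rintro ⟨⟨i, j⟩, hij⟩ ⟨⟨k, l⟩, hkl⟩ h
  simp only [UpperPos.key, toLex_inj, Prod.mk.injEq, OrderDual.toDual_inj] at h
  have hik : i = k := Fin.ext h.2
  have hjl : j = l := Fin.ext (by have : (i : ℕ) ≤ j := hij; have : (k : ℕ) ≤ l := hkl; omega)
  subst hik hjl
  rfl

instance : LinearOrder (UpperPos n) := LinearOrder.lift' UpperPos.key UpperPos.key_injective

theorem UpperPos.le_of_subset {p q : UpperPos n} (h₁ : p.1.1 ≤ q.1.1) (h₂ : q.1.2 ≤ p.1.2) :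
    p ≤ q := by
  show p.key ≤ q.key
  rw [UpperPos.key, UpperPos.key, Prod.Lex.toLex_le_toLex]
  have hp := p.2
  have hq := q.2
  have h₁' : (p.1.1 : ℕ) ≤ q.1.1 := h₁
  have h₂' : (q.1.2 : ℕ) ≤ p.1.2 := h₂
  rcases (show (q.1.2 : ℕ) - q.1.1 < p.1.2 - p.1.1 ∨ (q.1.2 : ℕ) - q.1.1 = p.1.2 - p.1.1 by omega)
    with h | h
  · exact .inl h
  · exact .inr ⟨congrArg OrderDual.toDual h.symm, by dsimp only; omega⟩

theorem card_upperPos : Fintype.card (UpperPos n) = n * (n + 1) / 2 := by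
  rw [← Fintype.card_congr (β := UpperPos n) Sym2.sortEquiv, Sym2.card, Fintype.card_fin,
    Nat.choose_two_right, Nat.add_sub_cancel, mul_comm]

variable (n) in
def upperPosIso : Fin (n * (n + 1) / 2) ≃o UpperPos n :=
  Fintype.orderIsoFinOfCardEq _ card_upperPos

end Positions

section Filtration

variable {n : ℕ}

variable (n) in
def posBefore (t : ℕ) (i j : Fin n) : Prop :=
  ∃ s : Fin (n * (n + 1) / 2), (s : ℕ) < t ∧ (upperPosIso n s).1 = (i, j)

theorem le_of_posBefore {t : ℕ} {i j : Fin n} (h : posBefore n t i j) : i ≤ j := by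
  obtain ⟨s, -, hs⟩ := h
  have := (upperPosIso n s).2
  rwa [hs] at this

theorem isUpRightClosed_posBefore (t : ℕ) : IsUpRightClosed (posBefore n t) := by
  rintro i j k l hik hlj ⟨s, hst, hs⟩
  have hkl : k ≤ l := le_of_posBefore ⟨s, hst, hs⟩
  let q : UpperPos n := ⟨(i, j), hik.trans (hkl.trans hlj)⟩
  refine ⟨(upperPosIso n).symm q, lt_of_le_of_lt ?_ hst, by rw [OrderIso.apply_symm_apply]⟩
  show (upperPosIso n).symm q ≤ s
  rw [← (upperPosIso n).le_iff_le, OrderIso.apply_symm_apply]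
  exact UpperPos.le_of_subset (by rw [hs]; exact hik) (by rw [hs]; exact hlj)

instance (t : ℕ) : IsTrans (Fin n) (posBefore n t) :=
  ⟨fun _ _ _ hik hkj => isUpRightClosed_posBefore t le_rfl (le_of_posBefore hkj) hik⟩

theorem posBefore_mono {s t : ℕ} (hst : s ≤ t) {i j : Fin n} :
    posBefore n s i j → posBefore n t i j :=
  fun ⟨r, hr, h⟩ => ⟨r, hr.trans_le hst, h⟩

theorem not_posBefore_zero {i j : Fin n} : ¬ posBefore n 0 i j :=
  fun ⟨_, hs, _⟩ => Nat.not_lt_zero _ hs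

theorem posBefore_of_le {i j : Fin n} (hij : i ≤ j) : posBefore n (n * (n + 1) / 2) i j :=
  let q : UpperPos n := ⟨(i, j), hij⟩
  ⟨(upperPosIso n).symm q, Fin.is_lt _, congrArg Subtype.val ((upperPosIso n).apply_symm_apply q)⟩

theorem posBefore_succ_iff (t : Fin (n * (n + 1) / 2)) {i j : Fin n} :
    posBefore n (t + 1) i j ↔ posBefore n t i j ∨ (i, j) = (upperPosIso n t).1 := by
  constructor
  · rintro ⟨s, hs, h⟩
    rcases Nat.lt_succ_iff_lt_or_eq.1 hs with hs | hs
    · exact .inl ⟨s, hs, h⟩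
    · exact .inr (h ▸ by rw [Fin.ext hs])
  · rintro (h | h)
    · exact posBefore_mono t.val.le_succ h
    · exact ⟨t, t.val.lt_succ_self, h.symm⟩

theorem not_posBefore_self (t : Fin (n * (n + 1) / 2)) {i j : Fin n}
    (h : (i, j) = (upperPosIso n t).1) : ¬ posBefore n t i j := by
  rintro ⟨s, hs, hsij⟩
  have : s = t := (upperPosIso n).injective (Subtype.ext (hsij.trans h))
  exact hs.ne (congrArg Fin.val this)

end Filtration

theorem lastStd_eq_single {n : ℕ} {A : Type u} [CommRing A] (hn : 1 ≤ n) :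
    lastStd n A = Pi.single ⟨n - 1, by omega⟩ 1 := by
  ext j
  simp [lastStd, Pi.single_apply, Fin.ext_iff]

theorem triangular_group_filtration_general (n : ℕ) (hn : 1 ≤ n) (A : Type u) [CommRing A] :
    ∃ (G : Fin (n * (n + 1) / 2 + 1) → Subgroup (Matrix (Fin n) (Fin n) A)ˣ)
      (H : Fin (n * (n + 1) / 2) → Subgroup (Matrix (Fin n) (Fin n) A)ˣ),
      G 0 = ⊥ ∧
      G (Fin.last (n * (n + 1) / 2)) = upperTriangularUnits n A ∧
      Monotone G ∧
      (∀ i, ∀ g ∈ upperTriangularUnits n A, ∀ x ∈ G i, g * x * g⁻¹ ∈ G i) ∧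
      (∀ i : Fin (n * (n + 1) / 2), H i ≤ G i.succ) ∧
      (∀ i : Fin (n * (n + 1) / 2), G i.castSucc ⊓ H i = ⊥) ∧
      (∀ i : Fin (n * (n + 1) / 2),
        (G i.castSucc : Set (Matrix (Fin n) (Fin n) A)ˣ) *
            (H i : Set (Matrix (Fin n) (Fin n) A)ˣ)
          = (G i.succ : Set (Matrix (Fin n) (Fin n) A)ˣ)) ∧
      (∀ i : Fin (n * (n + 1) / 2),
        Nonempty (↥(H i) ≃* Multiplicative A) ∨ Nonempty (↥(H i) ≃* Aˣ)) ∧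
      (∀ i : Fin (n * (n + 1) / 2), ∀ a ∈ G i.castSucc, ∀ b ∈ H i,
        Matrix.mulVec ((a * b : (Matrix (Fin n) (Fin n) A)ˣ) : Matrix (Fin n) (Fin n) A)
            (lastStd n A) = lastStd n A →
          Matrix.mulVec ((a : (Matrix (Fin n) (Fin n) A)ˣ) : Matrix (Fin n) (Fin n) A)
              (lastStd n A) = lastStd n A ∧
          Matrix.mulVec ((b : (Matrix (Fin n) (Fin n) A)ˣ) : Matrix (Fin n) (Fin n) A)
              (lastStd n A) = lastStd n A) := by
  refine ⟨fun s => patternSubgroup A (posBefore n s),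
    fun t => entrySubgroup A (upperPosIso n t).1,
    patternSubgroup_eq_bot fun _ _ => not_posBefore_zero,
    patternSubgroup_eq_upperTriangularUnits fun _ _ => posBefore_of_le,
    fun s t hst => patternSubgroup_mono fun _ _ => posBefore_mono hst,
    fun s _ hg _ hx => conj_mem_patternSubgroup (isUpRightClosed_posBefore s) hg hx,
    fun t => patternSubgroup_mono fun _ _ h => (posBefore_succ_iff t).2 (.inr h),
    fun t => patternSubgroup_inf_eq_bot fun _ _ h h' => not_posBefore_self t h' h,
    fun t => coe_patternSubgroup_mul_entrySubgroup (upperPosIso n t).2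
      (fun _ _ => posBefore_succ_iff t) (isUpRightClosed_posBefore _),
    fun t => nonempty_entrySubgroup_mulEquiv (upperPosIso n t).2,
    fun t a ha b hb => ?_⟩
  rw [lastStd_eq_single hn]
  exact mulVec_single_one_eq_of_mul_eq (fun _ h h' => not_posBefore_self t h h') ha hb

/-- Lemma 11.8 of Haskell–Hrushovski–Macpherson, instance at an
arbitrary integral domain `A`.  With `N = n(n+1)/2` there is a chain
`G₀ = {1} ≤ G₁ ≤ … ≤ G_N = B_n(A)` of subgroups normal in `B_n(A)`, and subgroups
`H_i ≤ G_{i+1}` with `G_i ∩ H_i = {1}` and `G_i H_i = G_{i+1}`, each `H_i`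
isomorphic as a group to `(A, +)` or to `Aˣ`, and such that if `a ∈ G_i`, `b ∈ H_i`
and `a * b` fixes `e_n` (by left multiplication on column vectors), then so do `a`
and `b`. -/
theorem triangular_group_filtration (n : ℕ) (hn : 1 ≤ n) (A : Type u) [CommRing A]
    [IsDomain A] :
    ∃ (G : Fin (n * (n + 1) / 2 + 1) → Subgroup (Matrix (Fin n) (Fin n) A)ˣ)
      (H : Fin (n * (n + 1) / 2) → Subgroup (Matrix (Fin n) (Fin n) A)ˣ),
      G 0 = ⊥ ∧
      G (Fin.last (n * (n + 1) / 2)) = upperTriangularUnits n A ∧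
      Monotone G ∧
      (∀ i, ∀ g ∈ upperTriangularUnits n A, ∀ x ∈ G i, g * x * g⁻¹ ∈ G i) ∧
      (∀ i : Fin (n * (n + 1) / 2), H i ≤ G i.succ) ∧
      (∀ i : Fin (n * (n + 1) / 2), G i.castSucc ⊓ H i = ⊥) ∧
      (∀ i : Fin (n * (n + 1) / 2),
        (G i.castSucc : Set (Matrix (Fin n) (Fin n) A)ˣ) *
            (H i : Set (Matrix (Fin n) (Fin n) A)ˣ)
          = (G i.succ : Set (Matrix (Fin n) (Fin n) A)ˣ)) ∧
      (∀ i : Fin (n * (n + 1) / 2),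
        Nonempty (↥(H i) ≃* Multiplicative A) ∨ Nonempty (↥(H i) ≃* Aˣ)) ∧
      (∀ i : Fin (n * (n + 1) / 2), ∀ a ∈ G i.castSucc, ∀ b ∈ H i,
        Matrix.mulVec ((a * b : (Matrix (Fin n) (Fin n) A)ˣ) : Matrix (Fin n) (Fin n) A)
            (lastStd n A) = lastStd n A →
          Matrix.mulVec ((a : (Matrix (Fin n) (Fin n) A)ˣ) : Matrix (Fin n) (Fin n) A)
              (lastStd n A) = lastStd n A ∧
          Matrix.mulVec ((b : (Matrix (Fin n) (Fin n) A)ˣ) : Matrix (Fin n) (Fin n) A)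
              (lastStd n A) = lastStd n A) :=
  triangular_group_filtration_general n hn A

end Stmt3
end

section
/- Let C < A be an extension of nontrivially valued fields with C maximally complete, and let V be a finite-dimensional C-vector subspace of A. Then V has a separated basis over C: a basis {v₁,…,v_k} of V such that |c₁v₁ + … + c_kv_k| = max_i |c_iv_i| for all c₁,…,c_k ∈ C. -/
universe u w

namespace Stmt4

variable {K : Type u} {Γ : Type w} [Field K] [LinearOrderedCommGroupWithZero Γ]

/-- The restriction of `a` below the ordinal `α` is a pseudo-convergent sequence with
respect to the valuation `v` : `|a ν − a μ| < |a λ − a μ|` whenever `λ < μ < ν < α`. -/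
def PseudoConvergent (v : Valuation K Γ) (α : Ordinal.{u}) (a : Ordinal.{u} → K) : Prop :=
  ∀ ⦃l m n : Ordinal.{u}⦄, l < m → m < n → n < α → v (a n - a m) < v (a l - a m)

/-- `x` is a pseudo-limit of the sequence `a` (restricted below `α`): for some `λ < α`,
`|a μ − a ν| = |x − a μ|` for all `λ < μ < ν < α`. -/
def IsPseudoLimit (v : Valuation K Γ) (α : Ordinal.{u}) (a : Ordinal.{u} → K) (x : K) :
    Prop :=
  ∃ l, l < α ∧ ∀ ⦃m n : Ordinal.{u}⦄, l < m → m < n → n < α → v (a m - a n) = v (x - a m)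

/-- The valued subfield `C` of `K` is maximally complete: every pseudo-convergent
sequence (indexed by a limit ordinal) with terms in `C` has a pseudo-limit in `C`. -/
def MaximallyComplete (v : Valuation K Γ) (C : Subfield K) : Prop :=
  ∀ α : Ordinal.{u}, Order.IsSuccLimit α → ∀ a : Ordinal.{u} → K,
    (∀ γ, γ < α → a γ ∈ C) → PseudoConvergent v α a → ∃ x ∈ C, IsPseudoLimit v α a x

/-- The valuation `v` is nontrivial on the subfield `C`. -/
def NontriviallyValued (v : Valuation K Γ) (C : Subfield K) : Prop :=
  ∃ x ∈ C, v x ≠ 0 ∧ v x ≠ 1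

/-! ### Auxiliary definitions and lemmas -/

/-- Membership in the `C`-span of a finite family. -/
def InSpan (C : Subfield K) {k : ℕ} (b : Fin k → K) (x : K) : Prop :=
  ∃ c : Fin k → K, (∀ i, c i ∈ C) ∧ x = ∑ i, c i * b i

/-- The family `b` is separated over `C` with respect to `v`. -/
def Separated (v : Valuation K Γ) (C : Subfield K) {k : ℕ} (b : Fin k → K) : Prop :=
  ∀ c : Fin k → K, (∀ i, c i ∈ C) → ∀ j, v (c j * b j) ≤ v (∑ i, c i * b i)

theorem inSpan_zero (C : Subfield K) {k : ℕ} (b : Fin k → K) : InSpan C b 0 :=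
  ⟨fun _ => 0, fun _ => C.zero_mem, by simp⟩

theorem inSpan_add (C : Subfield K) {k : ℕ} {b : Fin k → K} {x y : K}
    (hx : InSpan C b x) (hy : InSpan C b y) : InSpan C b (x + y) := by
  obtain ⟨c, hc, rfl⟩ := hx
  obtain ⟨d, hd, rfl⟩ := hy
  exact ⟨fun i => c i + d i, fun i => C.add_mem (hc i) (hd i), by
    rw [← Finset.sum_add_distrib]; exact Finset.sum_congr rfl fun i _ => (add_mul _ _ _).symm⟩

theorem inSpan_smul (C : Subfield K) {k : ℕ} {b : Fin k → K} {d x : K}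
    (hd : d ∈ C) (hx : InSpan C b x) : InSpan C b (d * x) := by
  obtain ⟨c, hc, rfl⟩ := hx
  exact ⟨fun i => d * c i, fun i => C.mul_mem hd (hc i), by
    rw [Finset.mul_sum]; exact Finset.sum_congr rfl fun i _ => (mul_assoc _ _ _).symm⟩

theorem inSpan_sub (C : Subfield K) {k : ℕ} {b : Fin k → K} {x y : K}
    (hx : InSpan C b x) (hy : InSpan C b y) : InSpan C b (x - y) := by
  have := inSpan_add C hx (inSpan_smul C (C.neg_mem C.one_mem) hy)
  simpa [sub_eq_add_neg] using this

theorem inSpan_mem (C : Subfield K) {k : ℕ} {b : Fin k → K} {x : K}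
    (V : Set K) (h0 : (0 : K) ∈ V)
    (hadd : ∀ x ∈ V, ∀ y ∈ V, x + y ∈ V)
    (hsmul : ∀ c ∈ C, ∀ x ∈ V, c * x ∈ V)
    (hb : ∀ i, b i ∈ V) (hx : InSpan C b x) : x ∈ V := by
  obtain ⟨c, hc, rfl⟩ := hx
  exact Finset.sum_induction _ (· ∈ V) (fun a b ha hb => hadd a ha b hb) h0
    (fun i _ => hsmul _ (hc i) _ (hb i))

theorem Separated.term_eq_zero {v : Valuation K Γ} {C : Subfield K} {k : ℕ} {b : Fin k → K}
    (hsep : Separated v C b) {c : Fin k → K} (hc : ∀ i, c i ∈ C)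
    (hsum : ∑ i, c i * b i = 0) (j : Fin k) : c j * b j = 0 := by
  have := hsep c hc j
  rw [hsum, map_zero] at this
  exact (Valuation.zero_iff v).mp (le_antisymm this zero_le')

/-! ### The subsequence extraction used for pseudo-limits of coefficient sequences -/

open scoped Classical in
noncomputable def phiseq (v : Valuation K Γ) (c : Ordinal.{u} → K) (e : Ordinal.{u} → Γ)
    (α : Ordinal.{u}) : Ordinal.{u} → Ordinal.{u} :=
  Ordinal.lt_wf.fix fun γ ih =>
    if h : ∃ ν, ν < α ∧ (∀ δ (hδ : δ < γ), ih δ hδ < ν) ∧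
        (∀ δ (hδ : δ < γ), γ = Order.succ δ → e ν < v (c ν - c (ih δ hδ))) then
      h.choose else α

def PSucc (v : Valuation K Γ) (c : Ordinal.{u} → K) (e : Ordinal.{u} → Γ)
    (α : Ordinal.{u}) (γ : Ordinal.{u}) : Prop :=
  ∃ ν, ν < α ∧ (∀ δ (_ : δ < γ), phiseq v c e α δ < ν) ∧
    (∀ δ (_ : δ < γ), γ = Order.succ δ → e ν < v (c ν - c (phiseq v c e α δ)))

open scoped Classical in
theorem phiseq_def (v : Valuation K Γ) (c : Ordinal.{u} → K) (e : Ordinal.{u} → Γ)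
    (α : Ordinal.{u}) (γ : Ordinal.{u}) :
    phiseq v c e α γ = if h : PSucc v c e α γ then h.choose else α := by
  delta phiseq PSucc
  rw [WellFounded.fix_eq]

theorem PSucc_spec {v : Valuation K Γ} {c : Ordinal.{u} → K} {e : Ordinal.{u} → Γ}
    {α : Ordinal.{u}} {γ : Ordinal.{u}} (h : PSucc v c e α γ) :
    phiseq v c e α γ < α ∧ (∀ δ, δ < γ → phiseq v c e α δ < phiseq v c e α γ) ∧
      (∀ δ, δ < γ → γ = Order.succ δ →
        e (phiseq v c e α γ) < v (c (phiseq v c e α γ) - c (phiseq v c e α δ))) := by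
  rw [phiseq_def v c e α γ, dif_pos h]
  exact ⟨h.choose_spec.1, fun δ hδ => h.choose_spec.2.1 δ hδ,
    fun δ hδ hs => h.choose_spec.2.2 δ hδ hs⟩

theorem exists_not_PSucc (v : Valuation K Γ) (c : Ordinal.{u} → K) (e : Ordinal.{u} → Γ)
    {α : Ordinal.{u}} (hα : α ≠ 0) : ∃ γ : Ordinal.{u}, ¬ PSucc v c e α γ := by
  by_contra hall
  push_neg at hall
  have hmono : ∀ δ γ : Ordinal.{u}, δ < γ → phiseq v c e α δ < phiseq v c e α γ :=
    fun δ γ h => (PSucc_spec (hall γ)).2.1 δ h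
  have hle : ∀ γ : Ordinal.{u}, γ ≤ phiseq v c e α γ := by
    intro γ
    induction γ using Ordinal.lt_wf.induction with
    | _ γ ih =>
      by_contra hlt
      push_neg at hlt
      exact absurd (ih _ hlt) (not_le.mpr (hmono _ _ hlt))
  exact absurd (hle α) (not_le.mpr (PSucc_spec (hall α)).1)

/-- **Key lemma**: in a maximally complete valued subfield, any sequence whose successive
differences are bounded by a strictly decreasing sequence of values admits an element
approximating it to within those bounds. -/
theorem coeff_limit (v : Valuation K Γ) (C : Subfield K)
    (hmax : MaximallyComplete v C) {α : Ordinal.{u}} (hα : Order.IsSuccLimit α)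
    (c : Ordinal.{u} → K) (hc : ∀ γ, γ < α → c γ ∈ C) (e : Ordinal.{u} → Γ)
    (he : ∀ ⦃μ ν⦄, μ < ν → ν < α → e ν < e μ)
    (hce : ∀ ⦃μ ν⦄, μ < ν → ν < α → v (c ν - c μ) ≤ e μ) :
    ∃ x ∈ C, ∀ μ, μ < α → v (x - c μ) ≤ e μ := by
  by_cases hcase : ∃ μ, μ < α ∧ ∀ ν, μ < ν → ν < α → v (c ν - c μ) ≤ e ν
  · obtain ⟨μ, hμα, hμ⟩ := hcase
    refine ⟨c μ, hc μ hμα, fun ν hνα => ?_⟩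
    rcases lt_trichotomy ν μ with h | h | h
    · exact hce h hμα
    · subst h; simp
    · rw [Valuation.map_sub_swap]
      exact hμ ν h hνα
  · push_neg at hcase
    obtain ⟨γ₀, hγ₀⟩ := exists_not_PSucc v c e hα.pos.ne'
    set φ : Ordinal.{u} → Ordinal.{u} := phiseq v c e α with hφdef
    set F : Set Ordinal.{u} := {γ | ¬ PSucc v c e α γ} with hFdef
    have hFne : F.Nonempty := ⟨γ₀, hγ₀⟩
    set lam := Ordinal.lt_wf.min F hFne with hlamdef
    have hlamF : ¬ PSucc v c e α lam := Ordinal.lt_wf.min_mem F hFne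
    have hsucc : ∀ γ, γ < lam → PSucc v c e α γ := by
      intro γ h
      by_contra hn
      exact Ordinal.lt_wf.not_lt_min F hn h
    have hlt : ∀ γ, γ < lam → φ γ < α := fun γ h => (PSucc_spec (hsucc γ h)).1
    have hmono : ∀ δ γ, δ < γ → γ < lam → φ δ < φ γ :=
      fun δ γ h hγ => (PSucc_spec (hsucc γ hγ)).2.1 δ h
    have hsuccstep : ∀ δ, Order.succ δ < lam →
        e (φ (Order.succ δ)) < v (c (φ (Order.succ δ)) - c (φ δ)) :=
      fun δ hs => (PSucc_spec (hsucc _ hs)).2.2 δ (Order.lt_succ δ) rfl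
    have hlam0 : lam ≠ 0 := by
      intro h
      apply hlamF
      rw [h]
      exact ⟨0, hα.pos, fun δ hδ => absurd hδ (not_lt_of_ge zero_le),
        fun δ hδ => absurd hδ (not_lt_of_ge zero_le)⟩
    have hlamnots : ∀ δ, lam ≠ Order.succ δ := by
      intro δ h
      have hδlam : δ < lam := by rw [h]; exact Order.lt_succ δ
      obtain ⟨ν, hν1, hν2, hν3⟩ := hcase (φ δ) (hlt δ hδlam)
      apply hlamF
      refine ⟨ν, hν2, ?_, ?_⟩
      · intro δ' hδ'
        rcases eq_or_lt_of_le (Order.le_of_lt_succ (h ▸ hδ')) with h' | h'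
        · rw [h']; exact hν1
        · exact lt_trans (hmono δ' δ h' hδlam) hν1
      · intro δ' hδ' hs
        rw [Order.succ_eq_succ_iff.mp (hs.symm.trans h)]
        exact hν3
    have hlamlim : Order.IsSuccLimit lam := by
      rcases Ordinal.zero_or_succ_or_isSuccLimit lam with h | ⟨δ, h⟩ | h
      · exact absurd h hlam0
      · exact absurd h.symm (hlamnots δ)
      · exact h
    have hcof : ∀ ν, ν < α → ∃ δ, δ < lam ∧ ν ≤ φ δ := by
      intro ν hνα
      by_contra hno
      push_neg at hno
      apply hlamF
      exact ⟨ν, hνα, fun δ hδ => hno δ hδ, fun δ hδ hs => absurd hs (hlamnots δ)⟩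
    have hD : ∀ δ μ, δ < μ → μ < lam →
        e (φ μ) ≤ e (φ (Order.succ δ)) ∧
          v (c (φ μ) - c (φ δ)) = v (c (φ (Order.succ δ)) - c (φ δ)) := by
      intro δ μ hδμ hμlam
      have hsle : Order.succ δ ≤ μ := Order.succ_le_of_lt hδμ
      have hslam : Order.succ δ < lam := lt_of_le_of_lt hsle hμlam
      have hstep := hsuccstep δ hslam
      rcases eq_or_lt_of_le hsle with h | h
      · rw [← h]; exact ⟨le_refl _, rfl⟩
      · constructor
        · exact (he (hmono _ _ h hμlam) (hlt μ hμlam)).le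
        · have h2 : v (c (φ μ) - c (φ (Order.succ δ))) < v (c (φ (Order.succ δ)) - c (φ δ)) :=
            lt_of_le_of_lt (hce (hmono _ _ h hμlam) (hlt μ hμlam)) hstep
          have heq : c (φ μ) - c (φ δ) =
              (c (φ μ) - c (φ (Order.succ δ))) + (c (φ (Order.succ δ)) - c (φ δ)) := by ring
          rw [heq, Valuation.map_add_eq_of_lt_right v h2]
    set a : Ordinal.{u} → K := fun γ => c (φ γ) with hadef
    have hpc : PseudoConvergent v lam a := by
      intro l m n hlm hmn hnlam
      have hmlam : m < lam := lt_trans hmn hnlam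
      obtain ⟨hD1, hD2⟩ := hD l m hlm hmlam
      have hslam : Order.succ l < lam := lt_of_le_of_lt (Order.succ_le_of_lt hlm) hmlam
      rw [Valuation.map_sub_swap v (a l) (a m)]
      calc v (a n - a m) ≤ e (φ m) := hce (hmono m n hmn hnlam) (hlt n hnlam)
        _ ≤ e (φ (Order.succ l)) := hD1
        _ < v (c (φ (Order.succ l)) - c (φ l)) := hsuccstep l hslam
        _ = v (a m - a l) := hD2.symm
    obtain ⟨x, hxC, l₀, hl₀, hpl⟩ := hmax lam hlamlim a (fun γ hγ => hc _ (hlt γ hγ)) hpc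
    refine ⟨x, hxC, fun μ hμα => ?_⟩
    obtain ⟨δ, hδlam, hδφ⟩ := hcof (Order.succ μ) (hα.succ_lt hμα)
    set m := max (Order.succ l₀) δ with hmdef
    have hmlam : m < lam := max_lt (hlamlim.succ_lt hl₀) hδlam
    have hl₀m : l₀ < m := lt_of_lt_of_le (Order.lt_succ l₀) (le_max_left _ _)
    have hφδm : φ δ ≤ φ m := by
      rcases eq_or_lt_of_le (le_max_right (Order.succ l₀) δ) with h | h
      · rw [h]
      · exact (hmono δ m h hmlam).le
    have hμφm : μ < φ m := lt_of_lt_of_le (Order.lt_succ μ) (le_trans hδφ hφδm)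
    have hn : Order.succ m < lam := hlamlim.succ_lt hmlam
    have h4 : v (x - a m) ≤ e (φ m) := by
      rw [← hpl hl₀m (Order.lt_succ m) hn, Valuation.map_sub_swap]
      exact hce (hmono m (Order.succ m) (Order.lt_succ m) hn) (hlt _ hn)
    have h5 : e (φ m) < e μ := he hμφm (hlt m hmlam)
    have h6 : v (a m - c μ) ≤ e μ := hce hμφm (hlt m hmlam)
    have heq2 : x - c μ = (x - a m) + (a m - c μ) := by ring
    rw [heq2]
    exact le_trans (v.map_add _ _) (max_le (le_trans h4 h5.le) h6)

/-! ### The approximating sequence to an element outside the span -/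

open scoped Classical in
noncomputable def Useq (v : Valuation K Γ) (C : Subfield K) {k : ℕ} (b : Fin k → K)
    (w : K) : Ordinal.{u} → K :=
  Ordinal.lt_wf.fix fun γ ih =>
    if h : ∃ u, InSpan C b u ∧ ∀ δ (hδ : δ < γ), v (w - u) < v (w - ih δ hδ) then
      h.choose else w

def USucc (v : Valuation K Γ) (C : Subfield K) {k : ℕ} (b : Fin k → K) (w : K)
    (γ : Ordinal.{u}) : Prop :=
  ∃ u, InSpan C b u ∧ ∀ δ (_ : δ < γ), v (w - u) < v (w - Useq v C b w δ)

open scoped Classical in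
theorem Useq_def (v : Valuation K Γ) (C : Subfield K) {k : ℕ} (b : Fin k → K) (w : K)
    (γ : Ordinal.{u}) :
    Useq v C b w γ = if h : USucc v C b w γ then h.choose else w := by
  delta Useq USucc
  rw [WellFounded.fix_eq]

theorem USucc_spec {v : Valuation K Γ} {C : Subfield K} {k : ℕ} {b : Fin k → K} {w : K}
    {γ : Ordinal.{u}} (h : USucc v C b w γ) :
    InSpan C b (Useq v C b w γ) ∧
      ∀ δ, δ < γ → v (w - Useq v C b w γ) < v (w - Useq v C b w δ) := by
  rw [Useq_def v C b w γ, dif_pos h]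
  exact ⟨h.choose_spec.1, fun δ hδ => h.choose_spec.2 δ hδ⟩

theorem exists_not_USucc (v : Valuation K Γ) (C : Subfield K) {k : ℕ} (b : Fin k → K)
    (w : K) : ∃ γ : Ordinal.{u}, ¬ USucc v C b w γ := by
  by_contra hall
  push_neg at hall
  set o : Ordinal.{u} := (Order.succ (Cardinal.mk K)).ord with ho
  have key : ∀ p q : Ordinal.{u}, p < q → Useq v C b w q ≠ Useq v C b w p := by
    intro p q hpq heq
    have := (USucc_spec (hall q)).2 p hpq
    rw [heq] at this; exact lt_irrefl _ this
  have hinj : Function.Injective fun x : o.ToType =>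
      Useq v C b w ((@Ordinal.ToType.mk o).symm x : Set.Iio o) := by
    intro x y hxy
    dsimp only at hxy
    by_contra hne
    have hne' : (@Ordinal.ToType.mk o).symm x ≠ (@Ordinal.ToType.mk o).symm y :=
      fun h => hne ((@Ordinal.ToType.mk o).symm.injective h)
    rcases hne'.lt_or_gt with h | h
    · exact key _ _ (Subtype.coe_lt_coe.mpr h) (hxy.symm)
    · exact key _ _ (Subtype.coe_lt_coe.mpr h) hxy
  have hle := Cardinal.mk_le_of_injective hinj
  rw [Cardinal.mk_toType, ho, Cardinal.card_ord] at hle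
  exact absurd hle (not_le.mpr (Order.lt_succ _))

/-- **Existence of a best approximation**: if `b` is a separated family with nonzero
entries and `w` is any element, then the distance from `w` to the `C`-span of `b`
is attained. -/
theorem exists_min (v : Valuation K Γ) (C : Subfield K) (hmax : MaximallyComplete v C)
    {k : ℕ} {b : Fin k → K} (hb0 : ∀ i, b i ≠ 0) (hsep : Separated v C b) (w : K) :
    ∃ u, InSpan C b u ∧ ∀ u', InSpan C b u' → v (w - u) ≤ v (w - u') := by
  obtain ⟨γ₁, hγ₁⟩ := exists_not_USucc v C b w
  set F : Set Ordinal.{u} := {γ | ¬ USucc v C b w γ} with hF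
  have hFne : F.Nonempty := ⟨γ₁, hγ₁⟩
  set α := Ordinal.lt_wf.min F hFne with hαdef
  have hαF : ¬ USucc v C b w α := Ordinal.lt_wf.min_mem F hFne
  have hsucc : ∀ γ, γ < α → USucc v C b w γ := by
    intro γ h
    by_contra hn
    exact Ordinal.lt_wf.not_lt_min F hn h
  set U := Useq v C b w with hU
  have hspan : ∀ γ, γ < α → InSpan C b (U γ) := fun γ h => (USucc_spec (hsucc γ h)).1
  have hdec : ∀ δ γ, δ < γ → γ < α → v (w - U γ) < v (w - U δ) :=
    fun δ γ h hγ => (USucc_spec (hsucc γ hγ)).2 δ h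
  have hα0 : α ≠ 0 := by
    intro h
    apply hαF; rw [h]
    exact ⟨0, inSpan_zero C b, fun δ hδ => absurd hδ (not_lt_of_ge zero_le)⟩
  have hfail : ∀ u', InSpan C b u' → ∃ δ, δ < α ∧ v (w - U δ) ≤ v (w - u') := by
    intro u' hu'
    by_contra hno
    push_neg at hno
    exact hαF ⟨u', hu', fun δ hδ => hno δ hδ⟩
  rcases Ordinal.zero_or_succ_or_isSuccLimit α with h | ⟨δ, h⟩ | hlim
  · exact absurd h hα0
  · have hδα : δ < α := by rw [← h]; exact Order.lt_succ δ
    refine ⟨U δ, hspan δ hδα, fun u' hu' => ?_⟩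
    obtain ⟨δ', hδ', hle⟩ := hfail u' hu'
    rcases eq_or_lt_of_le (Order.le_of_lt_succ (h.symm ▸ hδ')) with h' | h'
    · rw [← h']; exact hle
    · exact le_trans (hdec δ' δ h' hδα).le hle
  · set e : Ordinal.{u} → Γ := fun γ => v (w - U γ) with he_def
    have he : ∀ ⦃μ ν : Ordinal.{u}⦄, μ < ν → ν < α → e ν < e μ :=
      fun μ ν h hν => hdec μ ν h hν
    classical
    set cf : Ordinal.{u} → Fin k → K := fun γ =>
      if h : InSpan C b (U γ) then h.choose else 0 with hcf
    have hcfspec : ∀ γ, γ < α → (∀ i, cf γ i ∈ C) ∧ U γ = ∑ i, cf γ i * b i := by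
      intro γ hγ
      have h := hspan γ hγ
      simp only [hcf, dif_pos h]
      exact ⟨h.choose_spec.1, h.choose_spec.2⟩
    have hbne : ∀ i : Fin k, v (b i) ≠ 0 := fun i h => hb0 i ((Valuation.zero_iff v).mp h)
    have hdiffsum : ∀ μ ν, μ < ν → ν < α → U ν - U μ = ∑ i, (cf ν i - cf μ i) * b i := by
      intro μ ν h hν
      rw [(hcfspec ν hν).2, (hcfspec μ (lt_trans h hν)).2, ← Finset.sum_sub_distrib]
      exact Finset.sum_congr rfl fun i _ => (sub_mul _ _ _).symm
    have hUdiff : ∀ μ ν, μ < ν → ν < α → v (U ν - U μ) = e μ := by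
      intro μ ν h hν
      have h2 : v (w - U ν) < v (w - U μ) := hdec μ ν h hν
      have heq : U ν - U μ = (w - U μ) - (w - U ν) := by ring
      rw [heq, Valuation.map_sub_eq_of_lt_left v h2]
    have hcoef : ∀ i : Fin k, ∀ ⦃μ ν : Ordinal.{u}⦄, μ < ν → ν < α →
        v (cf ν i - cf μ i) ≤ e μ * (v (b i))⁻¹ := by
      intro i μ ν h hν
      have h1 : v ((cf ν i - cf μ i) * b i) ≤ v (∑ j, (cf ν j - cf μ j) * b j) :=
        hsep _ (fun j => C.sub_mem ((hcfspec ν hν).1 j) ((hcfspec μ (lt_trans h hν)).1 j)) i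
      rw [← hdiffsum μ ν h hν, hUdiff μ ν h hν, map_mul] at h1
      calc v (cf ν i - cf μ i) = v (cf ν i - cf μ i) * v (b i) * (v (b i))⁻¹ := by
            rw [mul_inv_cancel_right₀ (hbne i)]
        _ ≤ e μ * (v (b i))⁻¹ := mul_le_mul_left h1 _
    have hei : ∀ i : Fin k, ∀ ⦃μ ν : Ordinal.{u}⦄, μ < ν → ν < α →
        e ν * (v (b i))⁻¹ < e μ * (v (b i))⁻¹ := by
      intro i μ ν h hν
      have : (v (b i))⁻¹ * e ν < (v (b i))⁻¹ * e μ :=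
        mul_lt_mul_of_pos_left (he h hν) (zero_lt_iff.mpr (inv_ne_zero (hbne i)))
      rwa [mul_comm, mul_comm ((v (b i))⁻¹) (e μ)] at this
    have hx := fun i : Fin k => coeff_limit v C hmax hlim (fun γ => cf γ i)
      (fun γ hγ => (hcfspec γ hγ).1 i) (fun γ => e γ * (v (b i))⁻¹) (hei i) (hcoef i)
    choose x hxC hxb using hx
    refine ⟨∑ i, x i * b i, ⟨x, hxC, rfl⟩, fun u' hu' => ?_⟩
    have hus : ∀ μ, μ < α → v (∑ i, x i * b i - U μ) ≤ e μ := by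
      intro μ hμ
      have heq : ∑ i, x i * b i - U μ = ∑ i, (x i - cf μ i) * b i := by
        rw [(hcfspec μ hμ).2, ← Finset.sum_sub_distrib]
        exact Finset.sum_congr rfl fun i _ => (sub_mul _ _ _).symm
      rw [heq]
      refine Valuation.map_sum_le v fun i _ => ?_
      rw [map_mul]
      calc v (x i - cf μ i) * v (b i) ≤ (e μ * (v (b i))⁻¹) * v (b i) :=
            mul_le_mul_left (hxb i μ hμ) _
        _ = e μ := by rw [inv_mul_cancel_right₀ (hbne i)]
    obtain ⟨δ, hδα, hδle⟩ := hfail u' hu'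
    have h7 : v (w - ∑ i, x i * b i) ≤ e δ := by
      have heq : w - ∑ i, x i * b i = (w - U δ) + (U δ - ∑ i, x i * b i) := by ring
      rw [heq]
      refine le_trans (v.map_add _ _) (max_le (le_refl _) ?_)
      rw [Valuation.map_sub_swap]
      exact hus δ hδα
    exact le_trans h7 hδle

/-! ### Extending a separated family by one element -/

theorem inSpan_snoc (C : Subfield K) {k : ℕ} {b : Fin k → K} (z : K) {x : K}
    (hx : InSpan C b x) : InSpan C (Fin.snoc b z) x := by
  obtain ⟨c, hc, rfl⟩ := hx
  refine ⟨Fin.snoc c 0, ?_, ?_⟩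
  · intro i
    refine Fin.lastCases ?_ (fun j => ?_) i
    · rw [Fin.snoc_last]; exact C.zero_mem
    · rw [Fin.snoc_castSucc]; exact hc j
  · rw [Fin.sum_univ_castSucc]
    simp [Fin.snoc_last, Fin.snoc_castSucc]

theorem separated_snoc (v : Valuation K Γ) (C : Subfield K) {k : ℕ} {b : Fin k → K}
    (hsep : Separated v C b) {w u₀ : K} (hu₀ : InSpan C b u₀)
    (hmin : ∀ u', InSpan C b u' → v (w - u₀) ≤ v (w - u')) :
    Separated v C (Fin.snoc b (w - u₀)) := by
  intro c hc j
  set s := ∑ i : Fin k, c (Fin.castSucc i) * b i with hs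
  set t := c (Fin.last k) * (w - u₀) with ht
  have hsumeq : ∑ i : Fin (k + 1), c i * (Fin.snoc b (w - u₀) : Fin (k + 1) → K) i = s + t := by
    rw [Fin.sum_univ_castSucc]
    simp only [hs, ht, Fin.snoc_castSucc, Fin.snoc_last]
  have hts : v t ≤ v (s + t) := by
    by_cases hck : c (Fin.last k) = 0
    · simp [ht, hck]
    · have hinv : (c (Fin.last k))⁻¹ ∈ C := C.inv_mem (hc _)
      have hu' : InSpan C b (u₀ - (c (Fin.last k))⁻¹ * s) := by
        refine inSpan_sub C hu₀ (inSpan_smul C hinv ?_)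
        exact ⟨fun i => c (Fin.castSucc i), fun i => hc _, rfl⟩
      have hmin' := hmin _ hu'
      have heq : s + t = c (Fin.last k) * (w - (u₀ - (c (Fin.last k))⁻¹ * s)) := by
        rw [ht]
        field_simp
        ring
      rw [heq, ht, map_mul, map_mul]
      exact mul_le_mul_right hmin' _
  have hss : v s ≤ v (s + t) := by
    have h1 : v s ≤ max (v (s + t)) (v t) := by
      conv_lhs => rw [show s = (s + t) - t by ring]
      exact Valuation.map_sub v _ _
    exact le_trans h1 (max_le (le_refl _) hts)
  rw [hsumeq]
  refine Fin.lastCases ?_ (fun i => ?_) j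
  · rw [Fin.snoc_last, ← ht]; exact hts
  · rw [Fin.snoc_castSucc]
    exact le_trans (hsep (fun i => c (Fin.castSucc i)) (fun i => hc _) i) hss

/-! ### The main theorem -/

/-- Proposition 12.1(i) of Haskell–Hrushovski–Macpherson.  Let `C` be a
maximally complete nontrivially valued subfield of the valued field `K` (playing the
role of the extension `A`), and let `V` be a finite-dimensional `C`-subspace of `K`
(encoded elementwise: `V` is closed under `0`, addition and multiplication by elements
of `C`, and is spanned over `C` by finitely many elements `wgen i`).  Then `V` has a
separated basis `b 0, …, b (k-1)` over `C`: a `C`-linearly independent spanning family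
such that `|∑ cᵢ bᵢ| = maxᵢ |cᵢ bᵢ|` for all coefficients `cᵢ ∈ C`.  Since
`|∑ cᵢ bᵢ| ≤ maxᵢ |cᵢ bᵢ|` always holds (ultrametric inequality), the equality with
the maximum is expressed by the reverse inequalities `|cⱼ bⱼ| ≤ |∑ cᵢ bᵢ|` for each `j`. -/
theorem separated_basis_exists (v : Valuation K Γ) (C : Subfield K)
    (hC : NontriviallyValued v C) (hmax : MaximallyComplete v C)
    (V : Set K) (h0 : (0 : K) ∈ V)
    (hadd : ∀ x ∈ V, ∀ y ∈ V, x + y ∈ V)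
    (hsmul : ∀ c ∈ C, ∀ x ∈ V, c * x ∈ V)
    (m : ℕ) (wgen : Fin m → K) (hwV : ∀ i, wgen i ∈ V)
    (hwspan : ∀ x ∈ V, ∃ c : Fin m → K, (∀ i, c i ∈ C) ∧ x = ∑ i, c i * wgen i) :
    ∃ (k : ℕ) (b : Fin k → K),
      (∀ i, b i ∈ V) ∧
      (∀ c : Fin k → K, (∀ i, c i ∈ C) → ∑ i, c i * b i = 0 → ∀ i, c i = 0) ∧
      (∀ x ∈ V, ∃ c : Fin k → K, (∀ i, c i ∈ C) ∧ x = ∑ i, c i * b i) ∧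
      (∀ c : Fin k → K, (∀ i, c i ∈ C) →
        ∀ j, v (c j * b j) ≤ v (∑ i, c i * b i)) := by
  have key : ∀ j : ℕ, ∃ (k : ℕ) (b : Fin k → K),
      (∀ i, b i ∈ V) ∧ (∀ i, b i ≠ 0) ∧ Separated v C b ∧
      ∀ i : Fin m, (i : ℕ) < j → InSpan C b (wgen i) := by
    intro j
    induction j with
    | zero =>
      refine ⟨0, Fin.elim0, fun i => i.elim0, fun i => i.elim0, fun c hc i => i.elim0,
        fun i hi => absurd hi (Nat.not_lt_zero _)⟩
    | succ j ih =>
      obtain ⟨k, b, hbV, hb0, hsep, hwsp⟩ := ih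
      by_cases hjm : j < m
      · set w := wgen ⟨j, hjm⟩ with hwdef
        by_cases hwin : InSpan C b w
        · refine ⟨k, b, hbV, hb0, hsep, fun i hi => ?_⟩
          rcases Nat.lt_succ_iff_lt_or_eq.mp hi with h | h
          · exact hwsp i h
          · rw [show i = ⟨j, hjm⟩ from Fin.ext h]; exact hwin
        · obtain ⟨u₀, hu₀, hmin⟩ := exists_min v C hmax hb0 hsep w
          refine ⟨k + 1, Fin.snoc b (w - u₀), ?_, ?_,
            separated_snoc v C hsep hu₀ hmin, ?_⟩
          · intro i
            refine Fin.lastCases ?_ (fun i => ?_) i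
            · rw [Fin.snoc_last]
              have huV : u₀ ∈ V := inSpan_mem C V h0 hadd hsmul hbV hu₀
              rw [show w - u₀ = w + (-1 : K) * u₀ by ring]
              exact hadd _ (hwV _) _ (hsmul _ (C.neg_mem C.one_mem) _ huV)
            · rw [Fin.snoc_castSucc]; exact hbV i
          · intro i
            refine Fin.lastCases ?_ (fun i => ?_) i
            · rw [Fin.snoc_last]
              intro h
              exact hwin (by rw [show w = u₀ from sub_eq_zero.mp h]; exact hu₀)
            · rw [Fin.snoc_castSucc]; exact hb0 i
          · intro i hi
            rcases Nat.lt_succ_iff_lt_or_eq.mp hi with h | h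
            · exact inSpan_snoc C _ (hwsp i h)
            · rw [show i = ⟨j, hjm⟩ from Fin.ext h, ← hwdef]
              obtain ⟨cu, hcu, hcueq⟩ := hu₀
              refine ⟨Fin.snoc cu 1, ?_, ?_⟩
              · intro i'
                refine Fin.lastCases ?_ (fun i'' => ?_) i'
                · rw [Fin.snoc_last]; exact C.one_mem
                · rw [Fin.snoc_castSucc]; exact hcu i''
              · rw [Fin.sum_univ_castSucc]
                simp only [Fin.snoc_castSucc, Fin.snoc_last]
                rw [← hcueq]; ring
      · exact ⟨k, b, hbV, hb0, hsep,
          fun i hi => hwsp i (lt_of_lt_of_le i.isLt (Nat.le_of_not_lt hjm))⟩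
  obtain ⟨k, b, hbV, hb0, hsep, hwsp⟩ := key m
  refine ⟨k, b, hbV, ?_, ?_, hsep⟩
  · intro c hc hsum i
    have := Separated.term_eq_zero hsep hc hsum i
    exact (mul_eq_zero.mp this).resolve_right (hb0 i)
  · intro x hx
    obtain ⟨d, hd, rfl⟩ := hwspan x hx
    exact Finset.sum_induction _ (InSpan C b) (fun _ _ => inSpan_add C) (inSpan_zero C b)
      (fun i _ => inSpan_smul C (hd i) (hwsp i i.isLt))

end Stmt4
end

section
/- Let C < A be an extension of nontrivially valued fields with C maximally complete, and assume Γ_C = Γ_A. Let V be a finite-dimensional C-vector subspace of A and let S = V ∩ R_A, an R_C-submodule of A. Then S is a free R_C-module, and it has a free R_C-generating set d₁,…,d_k such that |d_i| = 1 for each i = 1,…,k and |f₁d₁ + … + f_kd_k| = max{|f₁|,…,|f_k|} for all f₁,…,f_k ∈ R_C. -/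
universe u w

namespace Stmt5

variable {K : Type u} {Γ : Type w} [Field K] [LinearOrderedCommGroupWithZero Γ]

/-- The restriction of `a` below the ordinal `α` is a pseudo-convergent sequence with
respect to the valuation `v` : `|a ν − a μ| < |a λ − a μ|` whenever `λ < μ < ν < α`. -/
def PseudoConvergent (v : Valuation K Γ) (α : Ordinal.{u}) (a : Ordinal.{u} → K) : Prop :=
  ∀ ⦃l m n : Ordinal.{u}⦄, l < m → m < n → n < α → v (a n - a m) < v (a l - a m)

/-- `x` is a pseudo-limit of the sequence `a` (restricted below `α`): for some `λ < α`,
`|a μ − a ν| = |x − a μ|` for all `λ < μ < ν < α`. -/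
def IsPseudoLimit (v : Valuation K Γ) (α : Ordinal.{u}) (a : Ordinal.{u} → K) (x : K) :
    Prop :=
  ∃ l, l < α ∧ ∀ ⦃m n : Ordinal.{u}⦄, l < m → m < n → n < α → v (a m - a n) = v (x - a m)

/-- The valued subfield `C` of `K` is maximally complete: every pseudo-convergent
sequence (indexed by a limit ordinal) with terms in `C` has a pseudo-limit in `C`. -/
def MaximallyComplete (v : Valuation K Γ) (C : Subfield K) : Prop :=
  ∀ α : Ordinal.{u}, Order.IsSuccLimit α → ∀ a : Ordinal.{u} → K,
    (∀ γ, γ < α → a γ ∈ C) → PseudoConvergent v α a → ∃ x ∈ C, IsPseudoLimit v α a x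

/-- The valuation `v` is nontrivial on the subfield `C`. -/
def NontriviallyValued (v : Valuation K Γ) (C : Subfield K) : Prop :=
  ∃ x ∈ C, v x ≠ 0 ∧ v x ≠ 1

theorem nested_balls (v : Valuation K Γ) (C : Subfield K)
    (hmax : MaximallyComplete v C) {α : Ordinal.{u}} (hα : Order.IsSuccLimit α)
    (c : Ordinal.{u} → K) (hc : ∀ γ, γ < α → c γ ∈ C) (ρ : Ordinal.{u} → Γ)
    (hnest : ∀ ⦃γ δ : Ordinal.{u}⦄, γ < δ → δ < α → v (c δ - c γ) ≤ ρ γ)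
    (hmono : ∀ ⦃γ δ : Ordinal.{u}⦄, γ ≤ δ → δ < α → ρ δ ≤ ρ γ) :
    ∃ x ∈ C, ∀ γ, γ < α → v (x - c γ) ≤ ρ γ := by
  classical
  by_contra hcon
  push_neg at hcon
  -- escape: every element of C eventually escapes all later balls
  have hesc : ∀ x : K, x ∈ C → ∃ β, β < α ∧ ∀ δ, β ≤ δ → δ < α → ρ δ < v (x - c δ) := by
    intro x hx
    obtain ⟨γ, hγ, hlt⟩ := hcon x hx
    refine ⟨γ + 1, by rw [Ordinal.add_one_eq_succ]; exact hα.succ_lt hγ, ?_⟩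
    intro δ h1 h2
    have hγδ : γ < δ := lt_of_lt_of_le (by rw [Ordinal.add_one_eq_succ]; exact Order.lt_succ γ) h1
    have h3 : v (c δ - c γ) < v (x - c γ) := lt_of_le_of_lt (hnest hγδ h2) hlt
    have h4 : v (x - c δ) = v (x - c γ) := by
      have : x - c δ = (x - c γ) - (c δ - c γ) := by ring
      rw [this, Valuation.map_sub_eq_of_lt_left _ h3]
    rw [h4]
    exact lt_of_le_of_lt (hmono hγδ.le h2) hlt
  choose E hE1 hE2 using hesc
  set E' : K → Ordinal.{u} := fun x => if h : x ∈ C then E x h else 0 with hE'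
  set T : Ordinal.{u} → Ordinal.{u} := fun γ => max (E' (c γ)) (γ + 1) with hT
  have hTlt : ∀ γ, γ < α → T γ < α := by
    intro γ hγ
    apply max_lt
    · by_cases h : c γ ∈ C
      · simp only [hE', dif_pos h]; exact hE1 _ h
      · simp only [hE', dif_neg h]; exact hα.pos
    · rw [Ordinal.add_one_eq_succ]; exact hα.succ_lt hγ
  have wf : WellFounded ((· < ·) : Ordinal.{u} → Ordinal.{u} → Prop) := Ordinal.lt_wf
  set g : Ordinal.{u} → Ordinal.{u} :=
    wf.fix (fun o ih => Ordinal.bsup.{u, u} o fun o' h => T (ih o' h)) with hgdef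
  have hg : ∀ o, g o = Ordinal.bsup.{u, u} o fun o' _ => T (g o') := by
    intro o
    exact wf.fix_eq _ o
  have hgmono : ∀ {o1 o2 : Ordinal.{u}}, o1 < o2 → g o1 < g o2 := by
    intro o1 o2 h
    have h1 : T (g o1) ≤ g o2 := by rw [hg o2]; exact Ordinal.le_bsup _ o1 h
    refine lt_of_lt_of_le (lt_of_lt_of_le ?_ (le_max_right (E' (c (g o1))) _)) h1
    rw [Ordinal.add_one_eq_succ]; exact Order.lt_succ _
  have hgle : ∀ o, o ≤ g o := by
    by_contra h
    push_neg at h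
    obtain ⟨o₀, ho₀, hmin⟩ := wf.has_min {o | g o < o} h
    exact hmin (g o₀) (hgmono ho₀) ho₀
  have hstuck : ∃ o, α ≤ g o := ⟨α, hgle α⟩
  set lam := wf.min {o | α ≤ g o} hstuck with hlamdef
  have hlam : α ≤ g lam := wf.min_mem _ hstuck
  have hltlam : ∀ o, o < lam → g o < α := by
    intro o ho
    by_contra h
    exact wf.not_lt_min {o | α ≤ g o} (le_of_not_gt h) ho
  have hlimit : Order.IsSuccLimit lam := by
    rcases Ordinal.zero_or_succ_or_isSuccLimit lam with h0 | ⟨β, hβ⟩ | hl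
    · exfalso
      have : g lam ≤ 0 := by
        rw [hg lam, h0, Ordinal.bsup_le_iff]
        intro i h
        exact absurd h (not_lt_of_ge zero_le)
      exact absurd (lt_of_lt_of_le hα.pos (hlam.trans this)) (lt_irrefl 0)
    · exfalso
      have hβlam : β < lam := by rw [← hβ]; exact Order.lt_succ β
      have hgβ : g β < α := hltlam β hβlam
      have h1 : g lam ≤ max (g β) (T (g β)) := by
        rw [hg lam, Ordinal.bsup_le_iff]
        intro o' ho'
        have ho'' : o' ≤ β := by rw [← hβ, Order.lt_succ_iff] at ho'; exact ho'
        rcases lt_or_eq_of_le ho'' with h | h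
        · refine le_trans ?_ (le_max_left _ _)
          rw [hg β]
          exact Ordinal.le_bsup _ o' h
        · rw [h]; exact le_max_right _ _
      have h2 : max (g β) (T (g β)) < α := max_lt hgβ (hTlt _ hgβ)
      exact absurd (hlam.trans h1) (not_le_of_gt h2)
    · exact hl
  have hcof : ∀ β, β < α → ∃ o, o < lam ∧ β < g o := by
    intro β hβ
    by_contra h
    push_neg at h
    have h1 : ∀ o', o' < lam → T (g o') ≤ β := by
      intro o' ho'
      have ho'' : o' + 1 < lam := by
        rw [Ordinal.add_one_eq_succ]; exact hlimit.succ_lt ho'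
      have : T (g o') ≤ g (o' + 1) := by
        rw [hg (o' + 1)]
        exact Ordinal.le_bsup _ o' (by rw [Ordinal.add_one_eq_succ]; exact Order.lt_succ _)
      exact this.trans (h _ ho'')
    have : g lam ≤ β := by
      rw [hg lam, Ordinal.bsup_le_iff]
      exact fun o' ho' => h1 o' ho'
    exact absurd (hlam.trans this) (not_le_of_gt hβ)
  set a : Ordinal.{u} → K := fun o => c (g o) with ha
  have hmemb : ∀ o, o < lam → a o ∈ C := fun o ho => hc _ (hltlam o ho)
  have hkey : ∀ {o1 o2 : Ordinal.{u}}, o1 < o2 → o2 < lam → ρ (g o2) < v (a o1 - a o2) := by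
    intro o1 o2 h12 h2
    have hC1 : c (g o1) ∈ C := hc _ (hltlam _ (h12.trans h2))
    have hTle : T (g o1) ≤ g o2 := by rw [hg o2]; exact Ordinal.le_bsup _ o1 h12
    have hEle : E' (c (g o1)) ≤ g o2 := le_trans (le_max_left _ _) hTle
    have hE'eq : E' (c (g o1)) = E (c (g o1)) hC1 := by simp only [hE', dif_pos hC1]
    exact hE2 (c (g o1)) hC1 (g o2) (by rw [← hE'eq]; exact hEle) (hltlam _ h2)
  have hpc : PseudoConvergent v lam a := by
    intro l m n hlm hmn hn
    have h1 : v (a n - a m) ≤ ρ (g m) := hnest (hgmono hmn) (hltlam _ hn)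
    have h2 : ρ (g m) < v (a l - a m) := hkey hlm (hmn.trans hn)
    exact lt_of_le_of_lt h1 h2
  obtain ⟨x, hxC, l, hl, hx⟩ := hmax lam hlimit a hmemb hpc
  have hβ : E x hxC < α := hE1 x hxC
  have hgl1 : g (l + 1) < α := hltlam _ (by rw [Ordinal.add_one_eq_succ]; exact hlimit.succ_lt hl)
  obtain ⟨o, holam, hgo⟩ := hcof (max (E x hxC) (g (l + 1))) (max_lt hβ hgl1)
  have hol : l + 1 < o := by
    by_contra h
    push_neg at h
    have : g o ≤ g (l + 1) := by
      rcases lt_or_eq_of_le h with h' | h'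
      · exact (hgmono h').le
      · rw [h']
    exact absurd hgo (not_lt_of_ge (this.trans (le_max_right _ _)))
  have hl_o : l < o := lt_trans (by rw [Ordinal.add_one_eq_succ]; exact Order.lt_succ l) hol
  have honlam : o + 1 < lam := by rw [Ordinal.add_one_eq_succ]; exact hlimit.succ_lt holam
  have hoo1 : o < o + 1 := by rw [Ordinal.add_one_eq_succ]; exact Order.lt_succ o
  have h1 : v (a o - a (o + 1)) = v (x - a o) := hx hl_o hoo1 honlam
  have h2 : v (a o - a (o + 1)) ≤ ρ (g o) := by
    rw [Valuation.map_sub_swap]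
    exact hnest (hgmono hoo1) (hltlam _ honlam)
  have h3 : ρ (g o) < v (x - c (g o)) :=
    hE2 x hxC (g o) (le_of_lt (lt_of_le_of_lt (le_max_left _ _) hgo)) (hltlam _ holam)
  rw [h1] at h2
  exact absurd h2 (not_le_of_gt h3)


theorem exists_min (v : Valuation K Γ) (C : Subfield K)
    (hmax : MaximallyComplete v C) {k : ℕ} (d : Fin k → K)
    (hd1 : ∀ i, v (d i) = 1)
    (hsep : ∀ c : Fin k → K, (∀ i, c i ∈ C) → ∀ j, v (c j) ≤ v (∑ i, c i * d i))
    (a : K) :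
    ∃ c₀ : Fin k → K, (∀ i, c₀ i ∈ C) ∧
      ∀ c : Fin k → K, (∀ i, c i ∈ C) →
        v (a - ∑ i, c₀ i * d i) ≤ v (a - ∑ i, c i * d i) := by
  classical
  set W : Set K := {x | ∃ cc : Fin k → K, (∀ i, cc i ∈ C) ∧ x = ∑ i, cc i * d i} with hW
  have h0W : (0 : K) ∈ W := ⟨fun _ => 0, fun _ => zero_mem C, by simp⟩
  by_cases hno : ∀ w ∈ W, ∃ w' ∈ W, v (a - w') < v (a - w)
  swap
  · push_neg at hno
    obtain ⟨w, ⟨cc, hccC, hcceq⟩, hmin⟩ := hno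
    refine ⟨cc, hccC, fun c hc => ?_⟩
    rw [← hcceq]
    exact hmin _ ⟨c, hc, rfl⟩
  -- the distance is not attained; construct a minimizer via nested balls
  set r := (WellOrderingRel : K → K → Prop)
  set ρfn : K → Γ := fun w => v (a - w) with hρfn
  set D' : Set K := {w | w ∈ W ∧ ∀ w', r w' w → w' ∈ W → ρfn w < ρfn w'} with hD'
  have hcoin : ∀ z ∈ W, ∃ w ∈ D', ρfn w ≤ ρfn z := by
    intro z hz
    obtain ⟨w₀, hw₀S, hmin'⟩ :=
      (IsWellFounded.wf (r := r)).has_min {w | w ∈ W ∧ ρfn w ≤ ρfn z} ⟨z, hz, le_rfl⟩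
    refine ⟨w₀, ⟨hw₀S.1, ?_⟩, hw₀S.2⟩
    intro w' hr hw'W
    by_contra hle
    push_neg at hle
    exact hmin' w' ⟨hw'W, hle.trans hw₀S.2⟩ hr
  have hD'lt : ∀ w1 ∈ D', ∀ w2 ∈ D', r w1 w2 → ρfn w2 < ρfn w1 :=
    fun w1 h1 w2 h2 hr => h2.2 w1 hr h1.1
  haveI : IsWellOrder (Subtype D') (Subrel r D') := Subrel.instIsWellOrderSubtype _ _
  set α := Ordinal.type (Subrel r D') with hαdef
  have hlim : Order.IsSuccLimit α := by
    rcases Ordinal.zero_or_succ_or_isSuccLimit α with h0 | ⟨β, hβ⟩ | hl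
    · exfalso
      rw [hαdef, Ordinal.type_eq_zero_iff_isEmpty] at h0
      obtain ⟨w, hw, -⟩ := hcoin 0 h0W
      exact h0.false ⟨w, hw⟩
    · exfalso
      set e : ↥D' := Ordinal.enum (Subrel r D') ⟨β, by rw [← hαdef, ← hβ]; exact Order.lt_succ β⟩
      obtain ⟨w', hw'W, hlt⟩ := hno e.val e.prop.1
      obtain ⟨w'', hw''D, hle⟩ := hcoin w' hw'W
      have hne : (⟨w'', hw''D⟩ : ↥D') ≠ e := by
        intro h
        have : ρfn w'' = ρfn e.val := by rw [← h]
        exact absurd (hle.trans_lt hlt) (by rw [this]; exact lt_irrefl _)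
      have hrel : Subrel r D' ⟨w'', hw''D⟩ e := by
        have h1 : Ordinal.typein (Subrel r D') ⟨w'', hw''D⟩ < α := Ordinal.typein_lt_type _ _
        rw [← hβ, Order.lt_succ_iff] at h1
        rcases lt_or_eq_of_le h1 with h2 | h2
        · apply (Ordinal.typein_lt_typein (Subrel r D')).mp
          rw [show Ordinal.typein (Subrel r D') e = β from Ordinal.typein_enum _ _]
          exact h2
        · exfalso
          apply hne
          rw [← Ordinal.enum_typein (Subrel r D') ⟨w'', hw''D⟩]
          congr 1
          exact Subtype.ext h2
      exact absurd (hD'lt _ hw''D _ e.prop hrel) (not_lt_of_ge (hle.trans hlt.le))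
    · exact hl
  set wseq : Ordinal.{u} → K := fun γ =>
    if h : γ < α then (Ordinal.enum (Subrel r D') ⟨γ, h⟩ : ↥D').val else 0 with hwseq
  have hwseqD : ∀ γ (h : γ < α), wseq γ ∈ D' := by
    intro γ h
    simp only [hwseq, dif_pos h]
    exact (Ordinal.enum (Subrel r D') ⟨γ, h⟩).prop
  have hdec : ∀ {γ δ : Ordinal.{u}}, γ < δ → δ < α → ρfn (wseq δ) < ρfn (wseq γ) := by
    intro γ δ hγδ hδ
    have hγ : γ < α := hγδ.trans hδ
    have hrel : Subrel r D' (Ordinal.enum (Subrel r D') ⟨γ, hγ⟩)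
        (Ordinal.enum (Subrel r D') ⟨δ, hδ⟩) := by
      exact Ordinal.enum_lt_enum.mpr (Subtype.mk_lt_mk.mpr hγδ)
    have := hD'lt _ (Ordinal.enum (Subrel r D') ⟨γ, hγ⟩).prop _
      (Ordinal.enum (Subrel r D') ⟨δ, hδ⟩).prop hrel
    simpa only [hwseq, dif_pos hγ, dif_pos hδ] using this
  have hcoin' : ∀ z ∈ W, ∃ γ, γ < α ∧ ρfn (wseq γ) ≤ ρfn z := by
    intro z hz
    obtain ⟨w, hwD, hle⟩ := hcoin z hz
    refine ⟨Ordinal.typein (Subrel r D') ⟨w, hwD⟩, Ordinal.typein_lt_type _ _, ?_⟩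
    have : wseq (Ordinal.typein (Subrel r D') ⟨w, hwD⟩) = w := by
      simp only [hwseq, dif_pos (Ordinal.typein_lt_type (Subrel r D') ⟨w, hwD⟩)]
      exact (dif_pos (Ordinal.typein_lt_type (Subrel r D') ⟨w, hwD⟩)).trans
        (congrArg Subtype.val (Ordinal.enum_typein (Subrel r D') ⟨w, hwD⟩))
    rw [this]
    exact hle
  have hcfex : ∀ γ : Ordinal.{u}, ∃ cc : Fin k → K,
      (∀ i, cc i ∈ C) ∧ wseq γ = ∑ i, cc i * d i := by
    intro γ
    by_cases h : γ < α
    · exact (hwseqD γ h).1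
    · exact ⟨fun _ => 0, fun _ => zero_mem C, by simp [hwseq, dif_neg h]⟩
  choose cf hcf1 hcf2 using hcfex
  have hdiff : ∀ {γ δ : Ordinal.{u}}, γ < δ → δ < α →
      v (wseq δ - wseq γ) = ρfn (wseq γ) := by
    intro γ δ hγδ hδ
    have : wseq δ - wseq γ = (a - wseq γ) - (a - wseq δ) := by ring
    rw [this, Valuation.map_sub_eq_of_lt_left _ (hdec hγδ hδ)]
  have hballs : ∀ i : Fin k, ∃ x ∈ C, ∀ γ, γ < α → v (x - cf γ i) ≤ ρfn (wseq γ) := by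
    intro i
    apply nested_balls v C hmax hlim (fun γ => cf γ i) (fun γ _ => hcf1 γ i)
      (fun γ => ρfn (wseq γ))
    · intro γ δ hγδ hδ
      have hsub : wseq δ - wseq γ = ∑ j, (cf δ j - cf γ j) * d j := by
        rw [hcf2 δ, hcf2 γ, ← Finset.sum_sub_distrib]
        congr 1
        ext j
        ring
      have h1 : v (cf δ i - cf γ i) ≤ v (wseq δ - wseq γ) := by
        rw [hsub]
        exact hsep (fun j => cf δ j - cf γ j) (fun j => sub_mem (hcf1 δ j) (hcf1 γ j)) i
      rw [hdiff hγδ hδ] at h1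
      exact h1
    · intro γ δ hγδ hδ
      rcases lt_or_eq_of_le hγδ with h | h
      · exact (hdec h hδ).le
      · rw [h]
  choose xs hxsC hxs using hballs
  refine ⟨xs, hxsC, fun c hc => ?_⟩
  obtain ⟨γ, hγ, hle⟩ := hcoin' (∑ i, c i * d i) ⟨c, hc, rfl⟩
  refine le_trans (le_trans ?_ hle) le_rfl
  -- v (a - ∑ xs i * d i) ≤ ρfn (wseq γ)
  have h2 : v (wseq γ - ∑ i, xs i * d i) ≤ ρfn (wseq γ) := by
    have hsub : wseq γ - ∑ i, xs i * d i = ∑ j, (cf γ j - xs j) * d j := by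
      rw [hcf2 γ, ← Finset.sum_sub_distrib]
      congr 1
      ext j
      ring
    rw [hsub]
    apply Valuation.map_sum_le
    intro j _
    rw [Valuation.map_mul, hd1 j, mul_one, Valuation.map_sub_swap]
    exact hxs j γ hγ
  have h1 : a - ∑ i, xs i * d i = (a - wseq γ) + (wseq γ - ∑ i, xs i * d i) := by ring
  calc v (a - ∑ i, xs i * d i)
      ≤ max (v (a - wseq γ)) (v (wseq γ - ∑ i, xs i * d i)) := by
        rw [h1]; exact Valuation.map_add _ _ _
    _ ≤ ρfn (wseq γ) := max_le le_rfl h2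


/-- Proposition 12.1(ii) of Haskell–Hrushovski–Macpherson.  Let `C` be
a maximally complete nontrivially valued subfield of the valued field `K` (playing the
role of the extension `A`) with `Γ_C = Γ_A` (every value of a nonzero element of `K` is
the value of a nonzero element of `C`), and let `V` be a finite-dimensional
`C`-subspace of `K` (encoded elementwise as in Statement 4).  Then
`S = V ∩ R_K = {x ∈ V | |x| ≤ 1}` is a free module over `R_C = {c ∈ C | |c| ≤ 1}` with
free generators `d 0, …, d (k-1)` of value `1`, satisfying
`|∑ fᵢ dᵢ| = max {|f₁|, …, |f_k|}` for all `fᵢ ∈ R_C`; the equality with the maximum is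
expressed by the reverse inequalities `|fⱼ| ≤ |∑ fᵢ dᵢ|` (the direction
`|∑ fᵢ dᵢ| ≤ max |fᵢ|` being automatic since `|dᵢ| = 1`). -/
theorem free_module_generators (v : Valuation K Γ) (C : Subfield K)
    (hC : NontriviallyValued v C) (hmax : MaximallyComplete v C)
    (hval : ∀ x : K, x ≠ 0 → ∃ c ∈ C, c ≠ 0 ∧ v c = v x)
    (V : Set K) (h0 : (0 : K) ∈ V)
    (hadd : ∀ x ∈ V, ∀ y ∈ V, x + y ∈ V)
    (hsmul : ∀ c ∈ C, ∀ x ∈ V, c * x ∈ V)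
    (m : ℕ) (wgen : Fin m → K) (hwV : ∀ i, wgen i ∈ V)
    (hwspan : ∀ x ∈ V, ∃ c : Fin m → K, (∀ i, c i ∈ C) ∧ x = ∑ i, c i * wgen i) :
    ∃ (k : ℕ) (d : Fin k → K),
      (∀ i, d i ∈ V) ∧ (∀ i, v (d i) = 1) ∧
      (∀ f : Fin k → K, (∀ i, f i ∈ C ∧ v (f i) ≤ 1) →
        ∑ i, f i * d i = 0 → ∀ i, f i = 0) ∧
      (∀ x ∈ V, v x ≤ 1 →
        ∃ f : Fin k → K, (∀ i, f i ∈ C ∧ v (f i) ≤ 1) ∧ x = ∑ i, f i * d i) ∧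
      (∀ f : Fin k → K, (∀ i, f i ∈ C ∧ v (f i) ≤ 1) →
        ∀ j, v (f j) ≤ v (∑ i, f i * d i)) := by
  classical
  -- main induction: separated families of value 1 spanning ever more generators
  have main : ∀ n : ℕ, ∃ (k : ℕ) (d : Fin k → K),
      (∀ i, d i ∈ V) ∧ (∀ i, v (d i) = 1) ∧
      (∀ c : Fin k → K, (∀ i, c i ∈ C) → ∀ j, v (c j) ≤ v (∑ i, c i * d i)) ∧
      (∀ i : Fin m, (i : ℕ) < n →
        ∃ c : Fin k → K, (∀ i', c i' ∈ C) ∧ wgen i = ∑ i', c i' * d i') := by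
    intro n
    induction n with
    | zero =>
      exact ⟨0, Fin.elim0, fun i => i.elim0, fun i => i.elim0, fun c _ j => j.elim0,
        fun i hi => absurd hi (Nat.not_lt_zero _)⟩
    | succ n ih =>
      obtain ⟨k, d, hdV, hd1, hsep, hspan⟩ := ih
      by_cases hnm : n < m
      swap
      · refine ⟨k, d, hdV, hd1, hsep, fun i hi => hspan i ?_⟩
        exact lt_of_lt_of_le i.isLt (le_of_not_gt hnm)
      set a := wgen ⟨n, hnm⟩ with hadef
      obtain ⟨c₀, hc₀C, hc₀min⟩ := exists_min v C hmax d hd1 hsep a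
      set w₀ := ∑ i, c₀ i * d i with hw₀
      have hw₀V : w₀ ∈ V := by
        rw [hw₀]
        have : ∀ s : Finset (Fin k), (∑ i ∈ s, c₀ i * d i) ∈ V := by
          intro s
          induction s using Finset.induction with
          | empty => simpa using h0
          | insert _ _ hnot ihs =>
            rw [Finset.sum_insert hnot]
            exact hadd _ (hsmul _ (hc₀C _) _ (hdV _)) _ ihs
        exact this _
      by_cases hz : a - w₀ = 0
      · refine ⟨k, d, hdV, hd1, hsep, ?_⟩
        intro i hi
        rcases Nat.lt_succ_iff_lt_or_eq.mp hi with h | h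
        · exact hspan i h
        · have hieq : i = ⟨n, hnm⟩ := Fin.ext h
          exact ⟨c₀, hc₀C, by rw [hieq, ← hadef, sub_eq_zero.mp hz]⟩
      · obtain ⟨e, heC, he0, heval⟩ := hval (a - w₀) hz
        set Dnew := e⁻¹ * (a - w₀) with hDnew
        have hve : v e ≠ 0 := by
          rw [Valuation.ne_zero_iff]; exact he0
        have hDval : v Dnew = 1 := by
          rw [hDnew, Valuation.map_mul, Valuation.map_inv, heval, inv_mul_cancel₀]
          rw [heval] at hve; exact hve
        have hamV : a - w₀ ∈ V := by
          have h1 : (-1 : K) * w₀ ∈ V := hsmul _ (neg_mem (one_mem C)) _ hw₀V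
          have h2 := hadd _ (hwV ⟨n, hnm⟩) _ h1
          have : a + (-1 : K) * w₀ = a - w₀ := by ring
          rwa [this] at h2
        have hDV : Dnew ∈ V := hsmul _ (inv_mem heC) _ hamV
        set d' : Fin (k + 1) → K := Fin.snoc d Dnew with hd'
        have hd'cast : ∀ j : Fin k, d' j.castSucc = d j := fun j => Fin.snoc_castSucc _ _ _
        have hd'last : d' (Fin.last k) = Dnew := Fin.snoc_last _ _
        have hsum' : ∀ c : Fin (k + 1) → K,
            (∑ i, c i * d' i) = (∑ i : Fin k, c i.castSucc * d i) + c (Fin.last k) * Dnew := by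
          intro c
          rw [Fin.sum_univ_castSucc]
          simp only [hd'cast, hd'last]
        have hsep' : ∀ c : Fin (k + 1) → K, (∀ i, c i ∈ C) →
            ∀ j, v (c j) ≤ v (∑ i, c i * d' i) := by
          intro c hcC
          set g := c (Fin.last k) with hgdef
          set t := ∑ i : Fin k, c i.castSucc * d i with htdef
          have hkey : v (g * Dnew) ≤ v (t + g * Dnew) := by
            by_cases hg : g = 0
            · rw [hg]; simp
            · set w' := w₀ - (e * g⁻¹) * t with hw'
              have hginv : g * g⁻¹ = 1 := mul_inv_cancel₀ hg
              have heinv : e⁻¹ * e = 1 := inv_mul_cancel₀ he0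
              have hw'eq : t + g * Dnew = (g * e⁻¹) * (a - w') := by
                rw [hw', hDnew]
                field_simp
                ring
              have hw'c : a - w' = a - ∑ j, (c₀ j - (e * g⁻¹) * c j.castSucc) * d j := by
                rw [hw', hw₀, htdef, Finset.mul_sum, ← Finset.sum_sub_distrib]
                congr 2
                ext j
                ring
              have hmem : ∀ j, (c₀ j - (e * g⁻¹) * c j.castSucc) ∈ C := fun j =>
                sub_mem (hc₀C j) (mul_mem (mul_mem heC (inv_mem (hcC _))) (hcC _))
              have hmin' : v (a - w₀) ≤ v (a - w') := by
                rw [hw'c]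
                exact hc₀min _ hmem
              calc v (g * Dnew) = v g * v e⁻¹ * v (a - w₀) := by
                    rw [hDnew, Valuation.map_mul, Valuation.map_mul, mul_assoc]
                _ ≤ v g * v e⁻¹ * v (a - w') := mul_le_mul_right hmin' _
                _ = v (t + g * Dnew) := by
                    rw [hw'eq, Valuation.map_mul, Valuation.map_mul]
          intro j
          rw [hsum' c]
          refine Fin.lastCases ?_ ?_ j
          · have : v g = v (g * Dnew) := by rw [Valuation.map_mul, hDval, mul_one]
            rw [← hgdef, this]
            exact hkey
          · intro jj
            have h1 : v (c jj.castSucc) ≤ v t :=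
              hsep (fun i => c i.castSucc) (fun i => hcC _) jj
            have h2 : v t ≤ v (t + g * Dnew) := by
              have heq : t = (t + g * Dnew) - g * Dnew := by ring
              calc v t = v ((t + g * Dnew) - g * Dnew) := by rw [← heq]
                _ ≤ max (v (t + g * Dnew)) (v (g * Dnew)) := Valuation.map_sub _ _ _
                _ = v (t + g * Dnew) := max_eq_left hkey
            exact h1.trans h2
        refine ⟨k + 1, d', ?_, ?_, hsep', ?_⟩
        · intro i
          refine Fin.lastCases ?_ ?_ i
          · rw [hd'last]; exact hDV
          · intro jj; rw [hd'cast]; exact hdV jj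
        · intro i
          refine Fin.lastCases ?_ ?_ i
          · rw [hd'last]; exact hDval
          · intro jj; rw [hd'cast]; exact hd1 jj
        · intro i hi
          rcases Nat.lt_succ_iff_lt_or_eq.mp hi with h | h
          · obtain ⟨cc, hccC, hcceq⟩ := hspan i h
            refine ⟨Fin.snoc cc 0, ?_, ?_⟩
            · intro i'
              refine Fin.lastCases ?_ ?_ i'
              · rw [Fin.snoc_last]; exact zero_mem C
              · intro jj; rw [Fin.snoc_castSucc]; exact hccC jj
            · rw [hsum' (Fin.snoc cc 0), Fin.snoc_last, zero_mul, add_zero]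
              simpa only [Fin.snoc_castSucc] using hcceq
          · have hieq : i = ⟨n, hnm⟩ := Fin.ext h
            refine ⟨Fin.snoc c₀ e, ?_, ?_⟩
            · intro i'
              refine Fin.lastCases ?_ ?_ i'
              · rw [Fin.snoc_last]; exact heC
              · intro jj; rw [Fin.snoc_castSucc]; exact hc₀C jj
            · rw [hsum' (Fin.snoc c₀ e), Fin.snoc_last]
              have : e * Dnew = a - w₀ := by
                rw [hDnew, ← mul_assoc, mul_inv_cancel₀ he0, one_mul]
              simp only [Fin.snoc_castSucc]
              rw [← hw₀, this, hieq, ← hadef]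
              ring
  obtain ⟨k, d, hdV, hd1, hsep, hspan⟩ := main m
  have hgen : ∀ i : Fin m, ∃ c : Fin k → K,
      (∀ i', c i' ∈ C) ∧ wgen i = ∑ i', c i' * d i' := fun i => hspan i i.isLt
  choose cf hcfC hcfeq using hgen
  refine ⟨k, d, hdV, hd1, ?_, ?_, ?_⟩
  · intro f hf hsum i
    have h1 := hsep f (fun i => (hf i).1) i
    rw [hsum] at h1
    simp only [Valuation.map_zero, le_zero_iff] at h1
    exact (Valuation.zero_iff v).mp h1
  · intro x hxV hx1
    obtain ⟨c, hcC, hceq⟩ := hwspan x hxV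
    set f : Fin k → K := fun j => ∑ i, c i * cf i j with hf
    have hfC : ∀ j, f j ∈ C := fun j => Subfield.sum_mem C (fun i _ => mul_mem (hcC i) (hcfC i j))
    have hxeq : x = ∑ j, f j * d j := by
      rw [hceq]
      calc ∑ i, c i * wgen i = ∑ i, ∑ j, c i * (cf i j * d j) := by
            refine Finset.sum_congr rfl fun i _ => ?_
            rw [hcfeq i, Finset.mul_sum]
        _ = ∑ j, ∑ i, c i * (cf i j * d j) := Finset.sum_comm
        _ = ∑ j, f j * d j := by
            refine Finset.sum_congr rfl fun j _ => ?_
            rw [hf, Finset.sum_mul]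
            refine Finset.sum_congr rfl fun i _ => ?_
            ring
    have hfle : ∀ j, v (f j) ≤ 1 := by
      intro j
      have := hsep f hfC j
      rw [← hxeq] at this
      exact this.trans hx1
    exact ⟨f, fun j => ⟨hfC j, hfle j⟩, hxeq⟩
  · intro f hf j
    exact hsep f (fun i => (hf i).1) j


end Stmt5
end

section
/- Let C < A be valued fields with C maximally complete, and let V be a C-vector subspace of A of finite or countable dimension. Then V has a good separated basis over C: a basis B of V such that for every finite subset {v₁,…,v_k} of B and all c₁,…,c_k ∈ C one has |c₁v₁ + … + c_kv_k| = max_i |c_iv_i|, and such that any b, b′ ∈ B with |b| ∈ |b′|·Γ_C satisfy |b| = |b′|. -/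
universe u w

namespace Stmt7

variable {K : Type u} {Γ : Type w} [Field K] [LinearOrderedCommGroupWithZero Γ]

/-- The restriction of `a` below the ordinal `α` is a pseudo-convergent sequence with
respect to the valuation `v` : `|a ν − a μ| < |a λ − a μ|` whenever `λ < μ < ν < α`. -/
def PseudoConvergent (v : Valuation K Γ) (α : Ordinal.{u}) (a : Ordinal.{u} → K) : Prop :=
  ∀ ⦃l m n : Ordinal.{u}⦄, l < m → m < n → n < α → v (a n - a m) < v (a l - a m)

/-- `x` is a pseudo-limit of the sequence `a` (restricted below `α`): for some `λ < α`,
`|a μ − a ν| = |x − a μ|` for all `λ < μ < ν < α`. -/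
def IsPseudoLimit (v : Valuation K Γ) (α : Ordinal.{u}) (a : Ordinal.{u} → K) (x : K) :
    Prop :=
  ∃ l, l < α ∧ ∀ ⦃m n : Ordinal.{u}⦄, l < m → m < n → n < α → v (a m - a n) = v (x - a m)

/-- The valued subfield `C` of `K` is maximally complete: every pseudo-convergent
sequence (indexed by a limit ordinal) with terms in `C` has a pseudo-limit in `C`. -/
def MaximallyComplete (v : Valuation K Γ) (C : Subfield K) : Prop :=
  ∀ α : Ordinal.{u}, Order.IsSuccLimit α → ∀ a : Ordinal.{u} → K,
    (∀ γ, γ < α → a γ ∈ C) → PseudoConvergent v α a → ∃ x ∈ C, IsPseudoLimit v α a x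

/-- The valuation `v` is nontrivial on the subfield `C`. -/
def NontriviallyValued (v : Valuation K Γ) (C : Subfield K) : Prop :=
  ∃ x ∈ C, v x ≠ 0 ∧ v x ≠ 1

theorem spherical (v : Valuation K Γ) (C : Subfield K) (hmax : MaximallyComplete v C)
    (α : Ordinal.{u}) (hα : Order.IsSuccLimit α) (c : Ordinal.{u} → K) (r : Ordinal.{u} → Γ)
    (hmem : ∀ ρ, ρ < α → c ρ ∈ C)
    (hnest : ∀ ρ σ, ρ < σ → σ < α → v (c σ - c ρ) ≤ r ρ)
    (hr : ∀ ρ σ, ρ < σ → σ < α → r σ < r ρ) :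
    ∃ x ∈ C, ∀ ρ, ρ < α → v (x - c ρ) ≤ r ρ := by
  by_cases hstab : ∃ ρ₀, ρ₀ < α ∧ ∀ σ, ρ₀ < σ → σ < α → v (c ρ₀ - c σ) ≤ r σ
  · obtain ⟨ρ₀, hρ₀, hst⟩ := hstab
    refine ⟨c ρ₀, hmem _ hρ₀, fun ρ hρ => ?_⟩
    rcases lt_trichotomy ρ ρ₀ with h | rfl | h
    · exact hnest ρ ρ₀ h hρ₀
    · simp
    · exact hst ρ h hρ
  · push_neg at hstab
    -- choice of a "moving" next index
    have hstab' : ∀ ρ : Ordinal.{u}, ∃ σ, ρ < α → (ρ < σ ∧ σ < α ∧ r σ < v (c ρ - c σ)) := by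
      intro ρ
      by_cases h : ρ < α
      · obtain ⟨σ, h1, h2, h3⟩ := hstab ρ h
        exact ⟨σ, fun _ => ⟨h1, h2, h3⟩⟩
      · exact ⟨0, fun hc => absurd hc h⟩
    choose f hf using hstab'
    -- the subsequence of indices
    set g : Ordinal.{u} → Ordinal.{u} := fun β =>
      Ordinal.limitRecOn β 0 (fun _ ih => f ih) (fun o _ ih => Ordinal.bsup.{u,u} o ih) with hg
    have hg0 : g 0 = 0 := Ordinal.limitRecOn_zero _ _ _
    have hgs : ∀ o, g (Order.succ o) = f (g o) := fun o => Ordinal.limitRecOn_succ _ _ _ _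
    have hgl : ∀ o (h : Order.IsSuccLimit o), g o = Ordinal.bsup.{u,u} o (fun a _ => g a) :=
      fun o h => Ordinal.limitRecOn_limit _ _ _ _ h
    -- termination
    have hterm : ∃ β, α ≤ g β := by
      by_contra hall
      push_neg at hall
      have hsm : StrictMono g := by
        have key : ∀ β γ : Ordinal.{u}, γ < β → g γ < g β := by
          intro β
          induction β using Ordinal.limitRecOn with
          | zero => intro γ h; exact absurd h (fun h' => not_lt_zero h')
          | add_one o ih =>
            rw [Ordinal.add_one_eq_succ]
            intro γ h
            have h1 : g o < f (g o) := (hf (g o) (hall o)).1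
            rcases Order.lt_succ_iff.1 h |>.lt_or_eq with h' | rfl
            · exact (ih γ h').trans (by rw [hgs]; exact h1)
            · rw [hgs]; exact h1
          | limit o ho ih =>
            intro γ h
            have h1 : g γ < g (Order.succ γ) := by
              rw [hgs]; exact (hf (g γ) (hall γ)).1
            refine h1.trans_le ?_
            rw [hgl o ho]
            exact Ordinal.le_bsup (fun a _ => g a) _ (ho.succ_lt h)
        exact fun γ β h => key β γ h
      exact absurd (hall α) (not_lt.2 hsm.le_apply)
    set β₀ : Ordinal.{u} := sInf {β | α ≤ g β} with hβ₀def
    have hβ₀mem : α ≤ g β₀ := csInf_mem hterm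
    have hlt : ∀ γ, γ < β₀ → g γ < α := by
      intro γ h
      by_contra hc
      have : β₀ ≤ γ := csInf_le' (show γ ∈ {β | α ≤ g β} from not_lt.1 hc)
      exact absurd this (not_le.2 h)
    have hβ₀lim : Order.IsSuccLimit β₀ := by
      rcases Ordinal.zero_or_succ_or_isSuccLimit β₀ with h | ⟨o, h⟩ | h
      · exfalso
        rw [h] at hβ₀mem
        rw [hg0] at hβ₀mem
        exact absurd hβ₀mem (not_le.2 hα.pos)
      · exfalso
        have ho : g o < α := hlt o (h ▸ Order.lt_succ o)
        have hgb : g β₀ < α := by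
          rw [← h, hgs]
          exact (hf (g o) ho).2.1
        exact absurd hβ₀mem (not_le.2 hgb)
      · exact h
    -- monotonicity below β₀
    have hM : ∀ δ, δ < β₀ → ∀ γ, γ < δ → g γ < g δ := by
      intro δ
      induction δ using Ordinal.limitRecOn with
      | zero => intro _ γ h; exact absurd h (fun h' => not_lt_zero h')
      | add_one o ih =>
        rw [Ordinal.add_one_eq_succ]
        intro hδ γ h
        have ho : o < β₀ := (Order.lt_succ o).trans hδ
        have h1 : g o < f (g o) := (hf (g o) (hlt o ho)).1
        rcases Order.lt_succ_iff.1 h |>.lt_or_eq with h' | rfl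
        · exact (ih ho γ h').trans (by rw [hgs]; exact h1)
        · rw [hgs]; exact h1
      | limit o ho ih =>
        intro hδ γ h
        have h1 : g γ < g (Order.succ γ) := by
          rw [hgs]; exact (hf (g γ) (hlt γ (h.trans hδ))).1
        refine h1.trans_le ?_
        rw [hgl o ho]
        exact Ordinal.le_bsup (fun a _ => g a) _ (ho.succ_lt h)
    have hMle : ∀ δ, δ < β₀ → ∀ γ, γ ≤ δ → g γ ≤ g δ := by
      intro δ hδ γ h
      rcases h.lt_or_eq with h | rfl
      · exact (hM δ hδ γ h).le
      · exact le_rfl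
    -- cofinality
    have hcof : ∀ ρ, ρ < α → ∃ γ, γ < β₀ ∧ ρ < g γ := by
      intro ρ hρ
      have : ρ < Ordinal.bsup.{u,u} β₀ (fun a _ => g a) := by
        rw [← hgl β₀ hβ₀lim]
        exact hρ.trans_le hβ₀mem
      obtain ⟨i, hi, h⟩ := (Ordinal.lt_bsup _).1 this
      exact ⟨i, hi, h⟩
    -- the pseudo-convergent sequence
    set d : Ordinal.{u} → K := fun β => c (g β) with hd
    have key1 : ∀ e, e < β₀ → r (g (Order.succ e)) < v (d (Order.succ e) - d e) := by
      intro e he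
      have hge : g e < α := hlt e he
      show r (g (Order.succ e)) < v (c (g (Order.succ e)) - c (g e))
      rw [hgs, v.map_sub_swap]
      exact (hf (g e) hge).2.2
    have L1 : ∀ l m, l < m → m < β₀ → r (g m) < v (d m - d l) := by
      intro l m hlm hm
      have hsl : Order.succ l ≤ m := Order.succ_le_of_lt hlm
      have hl : l < β₀ := hlm.trans hm
      rcases hsl.lt_or_eq with h | rfl
      · have hsuc : Order.succ l < β₀ := h.trans hm
        have h1 : v (d m - d (Order.succ l)) ≤ r (g (Order.succ l)) :=
          hnest _ _ (hM m hm _ h) (hlt m hm)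
        have h2 : r (g (Order.succ l)) < v (d (Order.succ l) - d l) := key1 l hl
        have h3 : v (d m - d l) = v (d (Order.succ l) - d l) := by
          have : d m - d l = (d m - d (Order.succ l)) + (d (Order.succ l) - d l) := by ring
          rw [this, Valuation.map_add_eq_of_lt_right _ (h1.trans_lt h2)]
        rw [h3]
        exact (hr _ _ (hM m hm _ h) (hlt m hm)).trans h2
      · exact key1 l hl
    have hpc : PseudoConvergent v β₀ d := by
      intro l m n hlm hmn hn
      have h1 : v (d n - d m) ≤ r (g m) := hnest _ _ (hM n hn _ hmn) (hlt n hn)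
      have h2 : r (g m) < v (d m - d l) := L1 l m hlm (hmn.trans hn)
      rw [v.map_sub_swap (d l)]
      exact h1.trans_lt h2
    obtain ⟨x, hxC, l₀, hl₀, hpl⟩ := hmax β₀ hβ₀lim d (fun γ h => hmem _ (hlt γ h)) hpc
    refine ⟨x, hxC, fun ρ hρ => ?_⟩
    obtain ⟨γ, hγ, hργ⟩ := hcof ρ hρ
    set m : Ordinal.{u} := max γ (Order.succ l₀) with hmdef
    have hm : m < β₀ := max_lt hγ (hβ₀lim.succ_lt hl₀)
    have hl₀m : l₀ < m := (Order.lt_succ l₀).trans_le (le_max_right _ _)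
    have hn : Order.succ m < β₀ := hβ₀lim.succ_lt hm
    have h1 : v (x - d m) = v (d m - d (Order.succ m)) :=
      (hpl hl₀m (Order.lt_succ m) hn).symm
    have h2 : v (d m - d (Order.succ m)) ≤ r (g m) := by
      rw [v.map_sub_swap]
      exact hnest _ _ (hM _ hn _ (Order.lt_succ m)) (hlt _ hn)
    have hρgm : ρ < g m := hργ.trans_le (hMle m hm γ (le_max_left _ _))
    have h3 : v (d m - c ρ) ≤ r ρ := hnest _ _ hρgm (hlt m hm)
    have h4 : x - c ρ = (x - d m) + (d m - c ρ) := by ring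
    calc v (x - c ρ) ≤ max (v (x - d m)) (v (d m - c ρ)) := h4 ▸ v.map_add _ _
      _ ≤ r ρ := max_le (h1.trans_le (h2.trans (hr _ _ hρgm (hlt m hm)).le)) h3

variable {K : Type u} {Γ : Type w} [Field K] [LinearOrderedCommGroupWithZero Γ]

theorem attain (v : Valuation K Γ) (C : Subfield K) (hmax : MaximallyComplete v C)
    (k : ℕ) (b : Fin k → K) (hb0 : ∀ i, b i ≠ 0)
    (hsep : ∀ cc : Fin k → K, (∀ i, cc i ∈ C) → ∀ j, v (cc j * b j) ≤ v (∑ i, cc i * b i))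
    (w : K) :
    ∃ cs : Fin k → K, (∀ i, cs i ∈ C) ∧ ∀ cc : Fin k → K, (∀ i, cc i ∈ C) →
      v (w - ∑ i, cs i * b i) ≤ v (w - ∑ i, cc i * b i) := by
  classical
  set U : (Fin k → K) → K := fun cc => ∑ i, cc i * b i with hU
  set F : Ordinal.{u} → (Fin k → K) := Ordinal.lt_wf.fix
    (fun γ rec => if h : ∃ cc : Fin k → K, (∀ i, cc i ∈ C) ∧ ∀ δ (hδ : δ < γ),
        v (w - U cc) < v (w - U (rec δ hδ)) then h.choose else fun _ => 0) with hF
  have Feq : ∀ γ, F γ = if h : ∃ cc : Fin k → K, (∀ i, cc i ∈ C) ∧ ∀ δ (hδ : δ < γ),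
      v (w - U cc) < v (w - U (F δ)) then h.choose else fun _ => 0 := by
    intro γ
    rw [hF]
    exact Ordinal.lt_wf.fix_eq _ γ
  set P : Ordinal.{u} → Prop := fun γ => ∃ cc : Fin k → K, (∀ i, cc i ∈ C) ∧
      ∀ δ (hδ : δ < γ), v (w - U cc) < v (w - U (F δ)) with hP
  have hFP : ∀ γ, P γ → (∀ i, F γ i ∈ C) ∧
      ∀ δ, δ < γ → v (w - U (F γ)) < v (w - U (F δ)) := by
    intro γ h
    have : F γ = h.choose := by rw [Feq γ, dif_pos h]
    rw [this]
    exact ⟨h.choose_spec.1, fun δ hδ => h.choose_spec.2 δ hδ⟩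
  have hP0 : P 0 := ⟨fun _ => 0, fun _ => C.zero_mem,
    fun δ hδ => absurd hδ (fun h' => not_lt_zero h')⟩
  have hne : {γ : Ordinal.{u} | ¬ P γ}.Nonempty := by
    by_contra hall
    push_neg at hall
    simp only [Set.eq_empty_iff_forall_notMem, Set.mem_setOf_eq, not_not] at hall
    have hinj : Function.Injective F := by
      intro γ δ h
      by_contra hnee
      rcases lt_trichotomy γ δ with h' | h' | h'
      · have := (hFP δ (hall δ)).2 γ h'
        rw [h] at this
        exact absurd this (lt_irrefl _)
      · exact hnee h'
      · have := (hFP γ (hall γ)).2 δ h'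
        rw [h] at this
        exact absurd this (lt_irrefl _)
    exact not_small_ordinal.{u,u} (small_of_injective hinj)
  set α : Ordinal.{u} := sInf {γ | ¬ P γ} with hαdef
  have hnP : ¬ P α := csInf_mem hne
  have hPlt : ∀ γ, γ < α → P γ := by
    intro γ h
    by_contra hc
    have : α ≤ γ := csInf_le' (show γ ∈ {γ | ¬ P γ} from hc)
    exact absurd this (not_le.2 h)
  -- it suffices to find `cs` beating every `F δ`, `δ < α`
  have Key : ∀ cs : Fin k → K, (∀ i, cs i ∈ C) →
      (∀ δ, δ < α → v (w - U cs) ≤ v (w - U (F δ))) →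
      ∃ cs : Fin k → K, (∀ i, cs i ∈ C) ∧ ∀ cc : Fin k → K, (∀ i, cc i ∈ C) →
        v (w - U cs) ≤ v (w - U cc) := by
    intro cs hcsC hbound
    refine ⟨cs, hcsC, fun cc hcc => ?_⟩
    by_contra hc
    push_neg at hc
    refine hnP ⟨cc, hcc, fun δ hδ => ?_⟩
    exact hc.trans_le (hbound δ hδ)
  rcases Ordinal.zero_or_succ_or_isSuccLimit α with h0 | ⟨δ₀, hs⟩ | hlim
  · exact absurd (h0 ▸ hP0) hnP
  · have hPδ : P δ₀ := hPlt δ₀ (hs ▸ Order.lt_succ δ₀)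
    refine Key (F δ₀) (hFP δ₀ hPδ).1 (fun δ hδ => ?_)
    rw [← hs] at hδ
    rcases (Order.lt_succ_iff.1 hδ).lt_or_eq with h | rfl
    · exact ((hFP δ₀ hPδ).2 δ h).le
    · exact le_rfl
  · -- limit case : use spherical completeness coordinatewise
    have hmemF : ∀ δ, δ < α → ∀ i, F δ i ∈ C := fun δ h i => (hFP δ (hPlt δ h)).1 i
    have hstr : ∀ ρ σ, ρ < σ → σ < α → v (w - U (F σ)) < v (w - U (F ρ)) :=
      fun ρ σ h hσ => (hFP σ (hPlt σ hσ)).2 ρ h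
    have hdiff : ∀ ρ σ, ρ < σ → σ < α → v (U (F σ) - U (F ρ)) = v (w - U (F ρ)) := by
      intro ρ σ h hσ
      have : U (F σ) - U (F ρ) = (w - U (F ρ)) - (w - U (F σ)) := by ring
      rw [this, Valuation.map_sub_eq_of_lt_left _ (hstr ρ σ h hσ)]
    have hcoord : ∀ (i : Fin k) ρ σ, ρ < σ → σ < α →
        v (F σ i - F ρ i) ≤ v (w - U (F ρ)) * (v (b i))⁻¹ := by
      intro i ρ σ h hσ
      have hsub : ∀ j, F σ j - F ρ j ∈ C := fun j =>
        C.sub_mem (hmemF σ hσ j) (hmemF ρ (h.trans hσ) j)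
      have h1 := hsep (fun j => F σ j - F ρ j) hsub i
      have h2 : (∑ j, (F σ j - F ρ j) * b j) = U (F σ) - U (F ρ) := by
        simp only [hU, sub_mul, Finset.sum_sub_distrib]
      rw [h2, hdiff ρ σ h hσ, Valuation.map_mul] at h1
      have hbne : v (b i) ≠ 0 := v.ne_zero_iff.2 (hb0 i)
      calc v (F σ i - F ρ i)
          = v (F σ i - F ρ i) * v (b i) * (v (b i))⁻¹ := by
            rw [mul_inv_cancel_right₀ hbne]
        _ ≤ v (w - U (F ρ)) * (v (b i))⁻¹ := mul_le_mul_left h1 _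
    have hrad : ∀ (i : Fin k) ρ σ, ρ < σ → σ < α →
        v (w - U (F σ)) * (v (b i))⁻¹ < v (w - U (F ρ)) * (v (b i))⁻¹ := by
      intro i ρ σ h hσ
      have hbne : (v (b i))⁻¹ ≠ 0 := inv_ne_zero (v.ne_zero_iff.2 (hb0 i))
      refine lt_of_le_of_ne (mul_le_mul_left (hstr ρ σ h hσ).le _) (fun heq => ?_)
      exact (hstr ρ σ h hσ).ne (mul_right_cancel₀ hbne heq)
    have hx : ∀ i : Fin k, ∃ x, x ∈ C ∧ ∀ ρ, ρ < α →
        v (x - F ρ i) ≤ v (w - U (F ρ)) * (v (b i))⁻¹ := by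
      intro i
      obtain ⟨x, hxC, hxb⟩ := spherical v C hmax α hlim (fun ρ => F ρ i)
        (fun ρ => v (w - U (F ρ)) * (v (b i))⁻¹) (fun ρ h => hmemF ρ h i)
        (fun ρ σ h hσ => hcoord i ρ σ h hσ) (fun ρ σ h hσ => hrad i ρ σ h hσ)
      exact ⟨x, hxC, hxb⟩
    choose xs hxsC hxs using hx
    refine Key xs hxsC (fun δ hδ => ?_)
    have h1 : v (U (F δ) - U xs) ≤ v (w - U (F δ)) := by
      have h2 : U (F δ) - U xs = ∑ i, (F δ i - xs i) * b i := by
        simp only [hU, sub_mul, Finset.sum_sub_distrib]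
      rw [h2]
      refine Valuation.map_sum_le _ (fun i _ => ?_)
      have hbne : v (b i) ≠ 0 := v.ne_zero_iff.2 (hb0 i)
      calc v ((F δ i - xs i) * b i) = v (F δ i - xs i) * v (b i) := Valuation.map_mul _ _ _
        _ = v (xs i - F δ i) * v (b i) := by rw [v.map_sub_swap]
        _ ≤ v (w - U (F δ)) * (v (b i))⁻¹ * v (b i) :=
            mul_le_mul_left (hxs i δ hδ) _
        _ = v (w - U (F δ)) := inv_mul_cancel_right₀ hbne _
    have h4 : w - U xs = (w - U (F δ)) + (U (F δ) - U xs) := by ring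
    calc v (w - U xs) ≤ max (v (w - U (F δ))) (v (U (F δ) - U xs)) := h4 ▸ v.map_add _ _
      _ ≤ v (w - U (F δ)) := max_le le_rfl h1

variable {K : Type u} {Γ : Type w} [Field K] [LinearOrderedCommGroupWithZero Γ]

theorem extendStep (v : Valuation K Γ) (C : Subfield K) (hmax : MaximallyComplete v C)
    (V : Set K) (h0 : (0 : K) ∈ V)
    (hadd : ∀ x ∈ V, ∀ y ∈ V, x + y ∈ V)
    (hsmul : ∀ c ∈ C, ∀ x ∈ V, c * x ∈ V)
    (k : ℕ) (b : Fin k → K)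
    (hbV : ∀ i, b i ∈ V) (hb0 : ∀ i, b i ≠ 0)
    (hsep : ∀ cc : Fin k → K, (∀ i, cc i ∈ C) → ∀ j, v (cc j * b j) ≤ v (∑ i, cc i * b i))
    (hgood : ∀ i j, (∃ c ∈ C, c ≠ 0 ∧ v (b i) = v (b j) * v c) → v (b i) = v (b j))
    (w : K) (hwV : w ∈ V) :
    ∃ (k' : ℕ) (hk : k ≤ k') (b' : Fin k' → K),
      (∀ i, b' i ∈ V) ∧ (∀ i, b' i ≠ 0) ∧
      (∀ cc : Fin k' → K, (∀ i, cc i ∈ C) → ∀ j, v (cc j * b' j) ≤ v (∑ i, cc i * b' i)) ∧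
      (∀ i j, (∃ c ∈ C, c ≠ 0 ∧ v (b' i) = v (b' j) * v c) → v (b' i) = v (b' j)) ∧
      (∀ i : Fin k, b' (Fin.castLE hk i) = b i) ∧
      (∃ cc : Fin k' → K, (∀ i, cc i ∈ C) ∧ w = ∑ i, cc i * b' i) := by
  classical
  have hsubV : ∀ x ∈ V, ∀ y ∈ V, x - y ∈ V := by
    intro x hx y hy
    have : x - y = x + (-1 : K) * y := by ring
    rw [this]
    exact hadd x hx _ (hsmul (-1) (C.neg_mem C.one_mem) y hy)
  have hsumV : ∀ (cc : Fin k → K), (∀ i, cc i ∈ C) → (∑ i, cc i * b i) ∈ V := by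
    intro cc hcc
    refine Finset.sum_induction _ (· ∈ V) (fun a b' ha hb => hadd a ha b' hb) h0 ?_
    exact fun i _ => hsmul (cc i) (hcc i) (b i) (hbV i)
  by_cases hw : ∃ cc : Fin k → K, (∀ i, cc i ∈ C) ∧ w = ∑ i, cc i * b i
  · exact ⟨k, le_rfl, b, hbV, hb0, hsep, hgood, fun i => congrArg b (Fin.ext rfl), hw⟩
  · obtain ⟨cs, hcsC, hmin⟩ := attain v C hmax k b hb0 hsep w
    set d₀ : K := w - ∑ i, cs i * b i with hd₀def
    clear_value d₀
    have hd₀ : d₀ ≠ 0 := by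
      intro h
      refine hw ⟨cs, hcsC, ?_⟩
      rw [← sub_eq_zero, ← hd₀def]
      exact h
    have hmin' : ∀ cc : Fin k → K, (∀ i, cc i ∈ C) → v d₀ ≤ v (d₀ - ∑ i, cc i * b i) := by
      intro cc hcc
      have h1 : d₀ - ∑ i, cc i * b i = w - ∑ i, (cs i + cc i) * b i := by
        simp only [hd₀def, add_mul, Finset.sum_add_distrib]
        ring
      rw [h1]
      exact hmin _ (fun i => C.add_mem (hcsC i) (hcc i))
    have hd₀V : d₀ ∈ V := by
      rw [hd₀def]
      exact hsubV w hwV _ (hsumV cs hcsC)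
    -- adjust to make the value good
    have hD : ∃ d e, e ∈ C ∧ d ∈ V ∧ d ≠ 0 ∧
        (∀ cc : Fin k → K, (∀ i, cc i ∈ C) → v d ≤ v (d - ∑ i, cc i * b i)) ∧
        (∀ i, (∃ c ∈ C, c ≠ 0 ∧ (v d = v (b i) * v c ∨ v (b i) = v d * v c)) → v d = v (b i)) ∧
        w = (∑ i, cs i * b i) + e * d := by
      by_cases hadj : ∃ (i : Fin k) (c : K), c ∈ C ∧ c ≠ 0 ∧ v d₀ = v (b i) * v c
      · obtain ⟨i₀, c₀, hc₀C, hc₀0, heq⟩ := hadj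
        have hvc₀ : v c₀ ≠ 0 := v.ne_zero_iff.2 hc₀0
        refine ⟨c₀⁻¹ * d₀, c₀, hc₀C, hsmul _ (C.inv_mem hc₀C) _ hd₀V,
          mul_ne_zero (inv_ne_zero hc₀0) hd₀, ?_, ?_, ?_⟩
        · intro cc hcc
          have h1 : c₀⁻¹ * d₀ - ∑ i, cc i * b i = c₀⁻¹ * (d₀ - ∑ i, (c₀ * cc i) * b i) := by
            have hs : ∑ i, (c₀ * cc i) * b i = c₀ * ∑ i, cc i * b i := by
              rw [Finset.mul_sum]
              exact Finset.sum_congr rfl (fun i _ => by ring)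
            rw [hs, mul_sub, inv_mul_cancel_left₀ hc₀0]
          rw [h1, Valuation.map_mul, Valuation.map_mul]
          exact mul_le_mul_right (hmin' _ (fun i => C.mul_mem hc₀C (hcc i))) _
        · have hvd : v (c₀⁻¹ * d₀) = v (b i₀) := by
            rw [Valuation.map_mul, map_inv₀, heq, mul_comm (v (b i₀)) (v c₀),
              inv_mul_cancel_left₀ hvc₀]
          intro i hi
          obtain ⟨c, hcC, hc0, hor⟩ := hi
          rcases hor with h | h
          · have h1 : v (b i₀) = v (b i) * v c := by rw [← hvd]; exact h
            have h2 : v (b i₀) = v (b i) := hgood i₀ i ⟨c, hcC, hc0, h1⟩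
            rw [hvd, h2]
          · have h1 : v (b i) = v (b i₀) * v c := by rw [← hvd]; exact h
            have h2 : v (b i) = v (b i₀) := hgood i i₀ ⟨c, hcC, hc0, h1⟩
            rw [hvd, h2]
        · rw [mul_inv_cancel_left₀ hc₀0]
          rw [hd₀def]
          ring
      · refine ⟨d₀, 1, C.one_mem, hd₀V, hd₀, hmin', ?_, by rw [one_mul, hd₀def]; ring⟩
        intro i hi
        obtain ⟨c, hcC, hc0, hor⟩ := hi
        exfalso
        rcases hor with h | h
        · exact hadj ⟨i, c, hcC, hc0, h⟩
        · refine hadj ⟨i, c⁻¹, C.inv_mem hcC, inv_ne_zero hc0, ?_⟩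
          have hvc : v c ≠ 0 := v.ne_zero_iff.2 hc0
          rw [map_inv₀, eq_comm, mul_inv_eq_iff_eq_mul₀ hvc, ← h]
    obtain ⟨d, e, heC, hdV, hd0, hdmin, hlink, hwrep⟩ := hD
    refine ⟨k + 1, Nat.le_succ k, Fin.snoc b d, ?_, ?_, ?_, ?_, ?_, ?_⟩
    · intro i
      rcases Fin.eq_castSucc_or_eq_last i with ⟨j, rfl⟩ | rfl
      · rw [Fin.snoc_castSucc]; exact hbV j
      · rw [Fin.snoc_last]; exact hdV
    · intro i
      rcases Fin.eq_castSucc_or_eq_last i with ⟨j, rfl⟩ | rfl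
      · rw [Fin.snoc_castSucc]; exact hb0 j
      · rw [Fin.snoc_last]; exact hd0
    · intro cc hcc j
      have hsum : ∑ i : Fin (k+1), cc i * (Fin.snoc b d : Fin (k+1) → K) i
          = (∑ i : Fin k, cc (Fin.castSucc i) * b i) + cc (Fin.last k) * d := by
        rw [Fin.sum_univ_castSucc]
        simp only [Fin.snoc_castSucc, Fin.snoc_last]
      set u₀ : K := ∑ i : Fin k, cc (Fin.castSucc i) * b i with hu₀
      set e' : K := cc (Fin.last k) with he'
      clear_value u₀ e'
      have hA : v (e' * d) ≤ v (u₀ + e' * d) := by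
        by_cases he : e' = 0
        · simp [he]
        · set y : K := ∑ i : Fin k, ((-e'⁻¹) * cc (Fin.castSucc i)) * b i with hy
          clear_value y
          have h1 : u₀ + e' * d = e' * (d - y) := by
            have hs : e' * y = -u₀ := by
              rw [hy, Finset.mul_sum]
              have h2 : ∀ i ∈ Finset.univ, e' * (((-e'⁻¹) * cc (Fin.castSucc i)) * b i)
                  = -(cc (Fin.castSucc i) * b i) := by
                intro i _
                field_simp
              rw [Finset.sum_congr rfl h2, hu₀, ← Finset.sum_neg_distrib]
            rw [mul_sub, hs]
            ring
          rw [h1, Valuation.map_mul, Valuation.map_mul, hy]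
          refine mul_le_mul_right ?_ _
          exact hdmin (fun i => (-e'⁻¹) * cc (Fin.castSucc i))
            (fun i => C.mul_mem (C.neg_mem (C.inv_mem
              (show e' ∈ C by rw [he']; exact hcc _))) (hcc _))
      have hB : v u₀ ≤ v (u₀ + e' * d) := by
        have h1 : u₀ = (u₀ + e' * d) - e' * d := by ring
        calc v u₀ = v ((u₀ + e' * d) - e' * d) := by rw [← h1]
          _ ≤ max (v (u₀ + e' * d)) (v (e' * d)) := v.map_sub _ _
          _ ≤ v (u₀ + e' * d) := max_le le_rfl hA
      rw [hsum]
      rcases Fin.eq_castSucc_or_eq_last j with ⟨j₀, rfl⟩ | rfl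
      · rw [Fin.snoc_castSucc]
        have hsep' : v (cc (Fin.castSucc j₀) * b j₀) ≤ v u₀ := by
          rw [hu₀]
          exact hsep (fun i => cc (Fin.castSucc i)) (fun i => hcc _) j₀
        exact hsep'.trans hB
      · rw [Fin.snoc_last, ← he']; exact hA
    · intro i j hij
      rcases Fin.eq_castSucc_or_eq_last i with ⟨i₀, rfl⟩ | rfl <;>
        rcases Fin.eq_castSucc_or_eq_last j with ⟨j₀, rfl⟩ | rfl <;>
        simp only [Fin.snoc_castSucc, Fin.snoc_last] at hij ⊢
      · exact hgood i₀ j₀ hij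
      · obtain ⟨c, hcC, hc0, h⟩ := hij
        exact (hlink i₀ ⟨c, hcC, hc0, Or.inr h⟩).symm
      · obtain ⟨c, hcC, hc0, h⟩ := hij
        exact hlink j₀ ⟨c, hcC, hc0, Or.inl h⟩
    · intro i
      have h1 : Fin.castLE (Nat.le_succ k) i = Fin.castSucc i := rfl
      rw [h1, Fin.snoc_castSucc]
    · refine ⟨Fin.snoc cs e, ?_, ?_⟩
      · intro i
        rcases Fin.eq_castSucc_or_eq_last i with ⟨j, rfl⟩ | rfl
        · rw [Fin.snoc_castSucc]; exact hcsC j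
        · rw [Fin.snoc_last]; exact heC
      · rw [Fin.sum_univ_castSucc]
        simp only [Fin.snoc_castSucc, Fin.snoc_last]
        exact hwrep

theorem sum_castLE {M : Type*} [AddCommMonoid M] {m n : ℕ} (h : m ≤ n) (f : Fin n → M)
    (hf : ∀ j : Fin n, m ≤ (j : ℕ) → f j = 0) :
    ∑ j, f j = ∑ i : Fin m, f (Fin.castLE h i) := by
  classical
  have h2 : ∑ i : Fin m, f (Fin.castLE h i)
      = ∑ j ∈ Finset.univ.map (Fin.castLEEmb h), f j := by
    rw [Finset.sum_map]
    rfl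
  rw [h2]
  refine (Finset.sum_subset (Finset.subset_univ _) ?_).symm
  intro j _ hj
  refine hf j ?_
  by_contra hc
  push_neg at hc
  exact hj (Finset.mem_map.2 ⟨⟨j.1, hc⟩, Finset.mem_univ _, Fin.ext rfl⟩)

theorem sum_extend_inj {M : Type*} [AddCommMonoid M] {m k : ℕ} (g : Fin m → Fin k)
    (hg : Function.Injective g) (f : Fin m → M) :
    (∑ j : Fin k, if h : ∃ i, g i = j then f h.choose else 0) = ∑ i, f i := by
  classical
  have h2 : ∑ i : Fin m, f i
      = ∑ j ∈ Finset.univ.map ⟨g, hg⟩, if h : ∃ i, g i = j then f h.choose else 0 := by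
    rw [Finset.sum_map]
    refine Finset.sum_congr rfl (fun i _ => ?_)
    have hex : ∃ i', g i' = (⟨g, hg⟩ : Fin m ↪ Fin k) i := ⟨i, rfl⟩
    rw [dif_pos hex]
    exact (congrArg f (hg hex.choose_spec)).symm
  rw [h2]
  refine (Finset.sum_subset (Finset.subset_univ _) ?_).symm
  intro j _ hj
  rw [dif_neg]
  rintro ⟨i, rfl⟩
  exact hj (Finset.mem_map.2 ⟨i, Finset.mem_univ _, rfl⟩)

variable {K : Type u} {Γ : Type w} [Field K] [LinearOrderedCommGroupWithZero Γ]

/-- Lemma 12.2 of Haskell–Hrushovski–Macpherson.  Let `C` be a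
maximally complete valued subfield of the valued field `K` (playing the role of the
extension `A`), and let `V` be a `C`-subspace of `K` of finite or countable dimension
(encoded: `V` is spanned over `C` by a countable family `wgen`).  Then `V` has a good
separated basis `B` over `C`: a subset of `V` such that every finite tuple of distinct
elements of `B` is `C`-linearly independent and separated (the separation identity
`|∑ cᵢ bᵢ| = maxᵢ |cᵢ bᵢ|` is expressed by the reverse inequalities, the other
direction being the ultrametric inequality), `B` spans `V` over `C`, and any
`b, b' ∈ B` with `|b| ∈ |b'| ⬝ Γ_C` satisfy `|b| = |b'|`. -/
theorem good_separated_basis_exists (v : Valuation K Γ) (C : Subfield K)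
    (hmax : MaximallyComplete v C)
    (V : Set K) (h0 : (0 : K) ∈ V)
    (hadd : ∀ x ∈ V, ∀ y ∈ V, x + y ∈ V)
    (hsmul : ∀ c ∈ C, ∀ x ∈ V, c * x ∈ V)
    (wgen : ℕ → K) (hw : ∀ i, wgen i ∈ V)
    (hspan : ∀ x ∈ V, ∃ (s : Finset ℕ) (c : ℕ → K), (∀ i, c i ∈ C) ∧
      x = ∑ i ∈ s, c i * wgen i) :
    ∃ B : Set K, B ⊆ V ∧
      (∀ (k : ℕ) (b : Fin k → K), Function.Injective b → (∀ i, b i ∈ B) →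
        (∀ c : Fin k → K, (∀ i, c i ∈ C) → ∑ i, c i * b i = 0 → ∀ i, c i = 0) ∧
        (∀ c : Fin k → K, (∀ i, c i ∈ C) →
          ∀ j, v (c j * b j) ≤ v (∑ i, c i * b i))) ∧
      (∀ x ∈ V, ∃ (k : ℕ) (b c : Fin k → K),
        (∀ i, b i ∈ B) ∧ (∀ i, c i ∈ C) ∧ x = ∑ i, c i * b i) ∧
      (∀ b ∈ B, ∀ b' ∈ B, (∃ c ∈ C, c ≠ 0 ∧ v b = v b' * v c) → v b = v b') := by
  classical
  -- the type of good separated tuples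
  let X := {p : Σ kk : ℕ, Fin kk → K //
    (∀ i, p.2 i ∈ V) ∧ (∀ i, p.2 i ≠ 0) ∧
    (∀ cc : Fin p.1 → K, (∀ i, cc i ∈ C) → ∀ j, v (cc j * p.2 j) ≤ v (∑ i, cc i * p.2 i)) ∧
    (∀ i j, (∃ c ∈ C, c ≠ 0 ∧ v (p.2 i) = v (p.2 j) * v c) → v (p.2 i) = v (p.2 j))}
  have hstep' : ∀ (p : X) (n : ℕ), ∃ q : X, ∃ hk : p.1.1 ≤ q.1.1,
      (∀ i, q.1.2 (Fin.castLE hk i) = p.1.2 i) ∧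
      ∃ cc : Fin q.1.1 → K, (∀ i, cc i ∈ C) ∧ wgen n = ∑ i, cc i * q.1.2 i := by
    intro p n
    obtain ⟨hV, hne, hsep, hgood⟩ := p.2
    obtain ⟨k', hk, b', B1, B2, B3, B4, B5, B6⟩ :=
      extendStep v C hmax V h0 hadd hsmul p.1.1 p.1.2 hV hne hsep hgood (wgen n) (hw n)
    exact ⟨⟨⟨k', b'⟩, B1, B2, B3, B4⟩, hk, B5, B6⟩
  choose step hle hcompat ccf hccC hcceq using hstep'
  have base : X := ⟨⟨0, fun i => i.elim0⟩, fun i => i.elim0, fun i => i.elim0,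
    fun cc hcc j => j.elim0, fun i j _ => i.elim0⟩
  let chain : ℕ → X := fun n => Nat.rec base (fun n p => step p n) n
  have chain_succ : ∀ n, chain (n + 1) = step (chain n) n := fun n => rfl
  -- embeddings along the chain
  have emb : ∀ m n, m ≤ n → ∃ hk : (chain m).1.1 ≤ (chain n).1.1,
      ∀ i, (chain n).1.2 (Fin.castLE hk i) = (chain m).1.2 i := by
    intro m n hmn
    induction n with
    | zero =>
      have hm : m = 0 := Nat.le_zero.1 hmn
      subst hm
      exact ⟨le_rfl, fun i => congrArg _ (Fin.ext rfl)⟩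
    | succ n ih =>
      rcases eq_or_lt_of_le hmn with rfl | hlt
      · exact ⟨le_rfl, fun i => congrArg _ (Fin.ext rfl)⟩
      · have hmn' : m ≤ n := Nat.lt_succ_iff.1 hlt
        obtain ⟨hk1, hc1⟩ := ih hmn'
        refine ⟨hk1.trans (hle (chain n) n), fun i => ?_⟩
        have h1 : Fin.castLE (hk1.trans (hle (chain n) n)) i
            = Fin.castLE (hle (chain n) n) (Fin.castLE hk1 i) := Fin.ext rfl
        rw [h1]
        exact (hcompat (chain n) n (Fin.castLE hk1 i)).trans (hc1 i)
  have hrange : ∀ m n, m ≤ n → ∀ x, x ∈ Set.range (chain m).1.2 →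
      x ∈ Set.range (chain n).1.2 := by
    intro m n hmn x hx
    obtain ⟨i, hi⟩ := hx
    obtain ⟨hk, hc⟩ := emb m n hmn
    exact ⟨Fin.castLE hk i, by rw [hc]; exact hi⟩
  have hspanmono : ∀ m n, m ≤ n → ∀ x : K,
      (∃ cc : Fin (chain m).1.1 → K, (∀ i, cc i ∈ C) ∧ x = ∑ i, cc i * (chain m).1.2 i) →
      (∃ cc : Fin (chain n).1.1 → K, (∀ i, cc i ∈ C) ∧ x = ∑ i, cc i * (chain n).1.2 i) := by
    intro m n hmn x hx
    obtain ⟨cc, hccC', hxeq⟩ := hx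
    obtain ⟨hk, hc⟩ := emb m n hmn
    have hcinj : Function.Injective (Fin.castLE hk) := Fin.castLE_injective hk
    refine ⟨fun j => if h : ∃ i, Fin.castLE hk i = j then cc h.choose else 0, fun j => ?_, ?_⟩
    · dsimp only
      split
      · exact hccC' _
      · exact C.zero_mem
    · have h1 : ∀ j' : Fin (chain n).1.1,
          (if h : ∃ i, Fin.castLE hk i = j' then cc h.choose else 0) * (chain n).1.2 j'
          = (if h : ∃ i, Fin.castLE hk i = j' then
              cc h.choose * (chain n).1.2 (Fin.castLE hk h.choose) else 0) := by
        intro j'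
        by_cases h : ∃ i, Fin.castLE hk i = j'
        · rw [dif_pos h, dif_pos h, h.choose_spec]
        · rw [dif_neg h, dif_neg h, zero_mul]
      calc x = ∑ i, cc i * (chain m).1.2 i := hxeq
        _ = ∑ i, cc i * (chain n).1.2 (Fin.castLE hk i) :=
            Finset.sum_congr rfl (fun i _ => by rw [hc i])
        _ = ∑ j' : Fin (chain n).1.1,
            (if h : ∃ i, Fin.castLE hk i = j' then
              cc h.choose * (chain n).1.2 (Fin.castLE hk h.choose) else 0) :=
            (sum_extend_inj (Fin.castLE hk) hcinj
              (fun i => cc i * (chain n).1.2 (Fin.castLE hk i))).symm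
        _ = ∑ j' : Fin (chain n).1.1,
            (if h : ∃ i, Fin.castLE hk i = j' then cc h.choose else 0) * (chain n).1.2 j' :=
            Finset.sum_congr rfl (fun j' _ => (h1 j').symm)
  have hwgen : ∀ n N, n < N → ∃ cc : Fin (chain N).1.1 → K,
      (∀ i, cc i ∈ C) ∧ wgen n = ∑ i, cc i * (chain N).1.2 i := by
    intro n N hnN
    refine hspanmono (n + 1) N hnN (wgen n) ?_
    exact ⟨ccf (chain n) n, hccC (chain n) n, hcceq (chain n) n⟩
  refine ⟨⋃ n, Set.range (chain n).1.2, ?_, ?_, ?_, ?_⟩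
  · intro x hx
    simp only [Set.mem_iUnion, Set.mem_range] at hx
    obtain ⟨n, i, rfl⟩ := hx
    exact (chain n).2.1 i
  · intro m t htinj htB
    have hN : ∀ i : Fin m, ∃ n, t i ∈ Set.range (chain n).1.2 := by
      intro i
      have := htB i
      simpa [Set.mem_iUnion] using this
    choose nf hnf using hN
    set N : ℕ := Finset.univ.sup nf with hNdef
    have hinN : ∀ i, t i ∈ Set.range (chain N).1.2 :=
      fun i => hrange _ _ (Finset.le_sup (Finset.mem_univ i)) _ (hnf i)
    choose g hg using hinN
    have hginj : Function.Injective g :=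
      fun i j hij => htinj (by rw [← hg i, ← hg j, hij])
    have ht0 : ∀ i, t i ≠ 0 := fun i => by rw [← hg i]; exact (chain N).2.2.1 (g i)
    have hsepB : ∀ cc : Fin m → K, (∀ i, cc i ∈ C) →
        ∀ j, v (cc j * t j) ≤ v (∑ i, cc i * t i) := by
      intro cc hcc j
      have hsum : (∑ j' : Fin (chain N).1.1,
          (if h : ∃ i, g i = j' then cc h.choose else 0) * (chain N).1.2 j')
          = ∑ i, cc i * t i := by
        have h1 : ∀ j' : Fin (chain N).1.1,
            (if h : ∃ i, g i = j' then cc h.choose else 0) * (chain N).1.2 j'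
            = (if h : ∃ i, g i = j' then cc h.choose * (chain N).1.2 (g h.choose) else 0) := by
          intro j'
          by_cases h : ∃ i, g i = j'
          · rw [dif_pos h, dif_pos h, h.choose_spec]
          · rw [dif_neg h, dif_neg h, zero_mul]
        calc (∑ j' : Fin (chain N).1.1,
            (if h : ∃ i, g i = j' then cc h.choose else 0) * (chain N).1.2 j')
            = ∑ j' : Fin (chain N).1.1,
              (if h : ∃ i, g i = j' then cc h.choose * (chain N).1.2 (g h.choose) else 0) :=
              Finset.sum_congr rfl (fun j' _ => h1 j')
          _ = ∑ i, cc i * (chain N).1.2 (g i) :=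
              sum_extend_inj g hginj (fun i => cc i * (chain N).1.2 (g i))
          _ = ∑ i, cc i * t i :=
              Finset.sum_congr rfl (fun i _ => by rw [hg i])
      have hmemC : ∀ j' : Fin (chain N).1.1,
          (if h : ∃ i, g i = j' then cc h.choose else 0) ∈ C := by
        intro j'
        by_cases h : ∃ i, g i = j'
        · rw [dif_pos h]; exact hcc _
        · rw [dif_neg h]; exact C.zero_mem
      have hj' := (chain N).2.2.2.1 _ hmemC (g j)
      have hgj : (if h : ∃ i, g i = g j then cc h.choose else 0) = cc j := by
        rw [dif_pos ⟨j, rfl⟩]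
        exact congrArg cc (hginj (Exists.choose_spec (⟨j, rfl⟩ : ∃ i, g i = g j)))
      rw [hsum, hgj, hg j] at hj'
      exact hj'
    refine ⟨?_, hsepB⟩
    intro cc hcc hsum0 i
    have h1 := hsepB cc hcc i
    rw [hsum0] at h1
    have h2 : v (cc i * t i) = 0 := le_antisymm (by simpa using h1) zero_le'
    have h3 : cc i * t i = 0 := v.zero_iff.1 h2
    rcases mul_eq_zero.1 h3 with h | h
    · exact h
    · exact absurd h (ht0 i)
  · intro x hxV
    obtain ⟨s, cnat, hcnatC, hxsum⟩ := hspan x hxV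
    set N : ℕ := s.sup id + 1 with hNdef
    have hsN : ∀ i ∈ s, i < N := fun i hi => Nat.lt_succ_of_le (Finset.le_sup (f := id) hi)
    have hrepi : ∀ i ∈ s, ∃ cc : Fin (chain N).1.1 → K,
        (∀ j, cc j ∈ C) ∧ wgen i = ∑ j, cc j * (chain N).1.2 j :=
      fun i hi => hwgen i N (hsN i hi)
    set dd : ℕ → Fin (chain N).1.1 → K := fun i =>
      if h : ∃ cc : Fin (chain N).1.1 → K,
        (∀ j, cc j ∈ C) ∧ wgen i = ∑ j, cc j * (chain N).1.2 j
      then h.choose else fun _ => 0 with hdd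
    have hddC : ∀ i j, dd i j ∈ C := by
      intro i j
      rw [hdd]
      dsimp only
      split
      · next h => exact h.choose_spec.1 j
      · exact C.zero_mem
    have hddeq : ∀ i ∈ s, wgen i = ∑ j, dd i j * (chain N).1.2 j := by
      intro i hi
      rw [hdd]
      dsimp only
      rw [dif_pos (hrepi i hi)]
      exact (hrepi i hi).choose_spec.2
    refine ⟨(chain N).1.1, (chain N).1.2, fun j => ∑ i ∈ s, cnat i * dd i j,
      fun j => Set.mem_iUnion.2 ⟨N, Set.mem_range_self j⟩,
      fun j => sum_mem (fun i hi => C.mul_mem (hcnatC i) (hddC i j)), ?_⟩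
    calc x = ∑ i ∈ s, cnat i * wgen i := hxsum
      _ = ∑ i ∈ s, cnat i * ∑ j, dd i j * (chain N).1.2 j :=
          Finset.sum_congr rfl (fun i hi => by rw [← hddeq i hi])
      _ = ∑ i ∈ s, ∑ j, cnat i * (dd i j * (chain N).1.2 j) :=
          Finset.sum_congr rfl (fun i _ => Finset.mul_sum _ _ _)
      _ = ∑ j, ∑ i ∈ s, cnat i * (dd i j * (chain N).1.2 j) := Finset.sum_comm
      _ = ∑ j, (∑ i ∈ s, cnat i * dd i j) * (chain N).1.2 j := by
          refine Finset.sum_congr rfl (fun j _ => ?_)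
          rw [Finset.sum_mul]
          exact Finset.sum_congr rfl (fun i _ => (mul_assoc _ _ _).symm)
  · intro bb hbb bb' hbb' hyp
    simp only [Set.mem_iUnion, Set.mem_range] at hbb hbb'
    obtain ⟨n1, i1, rfl⟩ := hbb
    obtain ⟨n2, i2, rfl⟩ := hbb'
    obtain ⟨hk1, hc1⟩ := emb n1 (max n1 n2) (le_max_left _ _)
    obtain ⟨hk2, hc2⟩ := emb n2 (max n1 n2) (le_max_right _ _)
    rw [← hc1 i1, ← hc2 i2] at hyp ⊢
    exact (chain (max n1 n2)).2.2.2.2 _ _ hyp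

end Stmt7
end

section
/- Let K be an algebraically closed valued field and let C ≤ A and C ≤ B be algebraically closed valued subfields of K, with C maximally complete. Assume Γ_C = Γ_A and that k(A) and k(B) (as subfields of k(K)) are linearly disjoint over k(C). Let E be the subring of K generated by A ∪ B. Then: (i) for any a₁,…,a_n ∈ A and b₁,…,b_n ∈ B there exist d₁,…,d_k ∈ A and b′₁,…,b′_k ∈ B such that a₁ ⊗ b₁ + … + a_n ⊗ b_n = d₁ ⊗ b′₁ + … + d_k ⊗ b′_k in the tensor product A ⊗_C B, while in K one has |d₁b′₁ + … + d_kb′_k| = max_j |d_j||b′_j|; (ii) consequently {|e| : e ∈ E, e ≠ 0} = Γ_B, i.e. the value group of the fraction field of E equals Γ_B. -/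
universe u w

open scoped TensorProduct

namespace Stmt8

variable {K : Type u} {Γ : Type w} [Field K] [LinearOrderedCommGroupWithZero Γ]

/-- The restriction of `a` below the ordinal `α` is a pseudo-convergent sequence with
respect to the valuation `v` : `|a ν − a μ| < |a λ − a μ|` whenever `λ < μ < ν < α`. -/
def PseudoConvergent (v : Valuation K Γ) (α : Ordinal.{u}) (a : Ordinal.{u} → K) : Prop :=
  ∀ ⦃l m n : Ordinal.{u}⦄, l < m → m < n → n < α → v (a n - a m) < v (a l - a m)

/-- `x` is a pseudo-limit of the sequence `a` (restricted below `α`): for some `λ < α`,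
`|a μ − a ν| = |x − a μ|` for all `λ < μ < ν < α`. -/
def IsPseudoLimit (v : Valuation K Γ) (α : Ordinal.{u}) (a : Ordinal.{u} → K) (x : K) :
    Prop :=
  ∃ l, l < α ∧ ∀ ⦃m n : Ordinal.{u}⦄, l < m → m < n → n < α → v (a m - a n) = v (x - a m)

/-- The valued subfield `C` of `K` is maximally complete: every pseudo-convergent
sequence (indexed by a limit ordinal) with terms in `C` has a pseudo-limit in `C`. -/
def MaximallyComplete (v : Valuation K Γ) (C : Subfield K) : Prop :=
  ∀ α : Ordinal.{u}, Order.IsSuccLimit α → ∀ a : Ordinal.{u} → K,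
    (∀ γ, γ < α → a γ ∈ C) → PseudoConvergent v α a → ∃ x ∈ C, IsPseudoLimit v α a x

/-- The valuation `v` is nontrivial on the subfield `C`. -/
def NontriviallyValued (v : Valuation K Γ) (C : Subfield K) : Prop :=
  ∃ x ∈ C, v x ≠ 0 ∧ v x ≠ 1

/-- The residues of the tuple `a` of elements of the valuation ring of `K` are linearly
independent over the residue field of the subfield `E`: whenever coefficients
`c i ∈ E` with `|c i| ≤ 1` give `res (∑ cᵢ aᵢ) = 0` (i.e. `|∑ cᵢ aᵢ| < 1`), all
`res (c i) = 0` (i.e. `|c i| < 1`). -/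
def ResLinIndepOver (v : Valuation K Γ) (E : Subfield K) {n : ℕ} (a : Fin n → K) :
    Prop :=
  ∀ c : Fin n → K, (∀ i, c i ∈ E ∧ v (c i) ≤ 1) →
    v (∑ i, c i * a i) < 1 → ∀ i, v (c i) < 1

/-- The residue fields `k(A)` and `k(B)` (as subfields of the residue field of `K`) are
linearly disjoint over `k(C)`: every finite tuple from the valuation ring of `A` whose
residues are linearly independent over `k(C)` has residues linearly independent over
`k(B)`. -/
def ResidueLinearDisjoint (v : Valuation K Γ) (C A B : Subfield K) : Prop :=
  ∀ (n : ℕ) (a : Fin n → K), (∀ i, a i ∈ A ∧ v (a i) ≤ 1) →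
    ResLinIndepOver v C a → ResLinIndepOver v B a

attribute [local instance] Classical.propDecidable

set_option maxHeartbeats 1000000
set_option synthInstance.maxHeartbeats 100000

/-- auxiliary transfinite sequence of ball indices -/
noncomputable def seq (v : Valuation K Γ) {ι : Type u} [Nonempty ι] (c : ι → K) (r : ι → Γ) :
    Ordinal.{u} → ι :=
  Ordinal.lt_wf.fix fun o ih =>
    if h : ∃ j, ∀ δ (hδ : δ < o), r j < v (c (ih δ hδ) - c j) then h.choose
    else Classical.arbitrary ι

theorem seq_spec (v : Valuation K Γ) {ι : Type u} [Nonempty ι] (c : ι → K) (r : ι → Γ)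
    (o : Ordinal.{u}) (h : ∃ j, ∀ δ, δ < o → r j < v (c (seq v c r δ) - c j)) :
    ∀ δ, δ < o → r (seq v c r o) < v (c (seq v c r δ) - c (seq v c r o)) := by
  have heq : seq v c r o =
      if h : ∃ j, ∀ δ, δ < o → r j < v (c (seq v c r δ) - c j) then h.choose
      else Classical.arbitrary ι := by
    rw [seq, WellFounded.fix_eq]
  rw [dif_pos h] at heq
  intro δ hδ
  rw [heq]
  exact h.choose_spec δ hδ

/-- `C` is spherically complete: every chain of closed balls with centers in `C`
has a common point in `C`. -/
theorem sphC (v : Valuation K Γ) (C : Subfield K) (hmax : MaximallyComplete v C)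
    {ι : Type u} [Nonempty ι] (c : ι → K) (hc : ∀ i, c i ∈ C) (r : ι → Γ)
    (hchain : ∀ i j, v (c i - c j) ≤ max (r i) (r j)) :
    ∃ x ∈ C, ∀ i, v (x - c i) ≤ r i := by
  classical
  set g : Ordinal.{u} → ι := seq v c r with hg
  have hch : ∀ i j, v (c i - c j) ≤ max (r i) (r j) := by
    intro i j; exact hchain i j
  -- if ok o then g o is a witness
  have hgo : ∀ o : Ordinal.{u}, (∃ j, ∀ δ, δ < o → r j < v (c (g δ) - c j)) →
      ∀ δ, δ < o → r (g o) < v (c (g δ) - c (g o)) := fun o h => seq_spec v c r o h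
  -- there is a stage where no new ball can be chosen
  have hT : ∃ o : Ordinal.{u}, ¬ (∃ j, ∀ δ, δ < o → r j < v (c (g δ) - c j)) := by
    by_contra hcon
    push_neg at hcon
    have hdec : ∀ {δ o : Ordinal.{u}}, δ < o → r (g o) < r (g δ) := by
      intro δ o hδ
      have h1 := hgo o (hcon o) δ hδ
      rcases le_max_iff.mp (hch (g δ) (g o)) with h | h
      · exact lt_of_lt_of_le h1 h
      · exact absurd (lt_of_lt_of_le h1 h) (lt_irrefl _)
    have hinj : Function.Injective (fun o : Ordinal.{u} => (⟨r (g o), Set.mem_range_self _⟩ :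
        Set.range r)) := by
      intro o₁ o₂ h
      by_contra hne
      rcases lt_or_gt_of_ne hne with hlt | hlt
      · exact absurd (congrArg Subtype.val h).symm (ne_of_lt (hdec hlt))
      · exact absurd (congrArg Subtype.val h) (ne_of_lt (hdec hlt))
    exact not_small_ordinal.{u} (small_of_injective hinj)
  obtain ⟨α, hα, hαmin⟩ := Ordinal.lt_wf.has_min _ hT
  have hok_lt : ∀ δ, δ < α → (∃ j, ∀ δ', δ' < δ → r j < v (c (g δ') - c j)) := by
    intro δ hδ; by_contra h; exact hαmin δ h hδ
  have gprop : ∀ {δ' δ : Ordinal.{u}}, δ' < δ → δ < α → r (g δ) < v (c (g δ') - c (g δ)) :=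
    fun {δ' δ} h1 h2 => hgo δ (hok_lt δ h2) δ' h1
  have contain : ∀ {δ' δ : Ordinal.{u}}, δ' < δ → δ < α → v (c (g δ') - c (g δ)) ≤ r (g δ') := by
    intro δ' δ h1 h2
    rcases le_max_iff.mp (hch (g δ') (g δ)) with h | h
    · exact h
    · exact absurd (lt_of_lt_of_le (gprop h1 h2) h) (lt_irrefl _)
  have hα0 : α ≠ 0 := by
    intro h
    exact hα ⟨Classical.arbitrary ι, fun δ hδ => absurd hδ (by simp [h])⟩
  rcases Ordinal.zero_or_succ_or_isSuccLimit α with h0 | ⟨β, hβ⟩ | hlim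
  · exact absurd h0 hα0
  · -- successor case : x = c (g β)
    subst hβ
    refine ⟨c (g β), hc _, fun i => ?_⟩
    by_contra hi
    push_neg at hi
    apply hα
    refine ⟨i, fun δ hδ => ?_⟩
    have hδβ : δ ≤ β := Order.lt_succ_iff.mp hδ
    have hle : v (c (g β) - c i) ≤ r (g β) := by
      rcases le_max_iff.mp (hch (g β) i) with h | h
      · exact h
      · exact absurd (lt_of_lt_of_le hi h) (lt_irrefl _)
    rcases eq_or_lt_of_le hδβ with rfl | hlt
    · exact hi
    · have h1 : v (c (g β) - c i) < v (c (g δ) - c (g β)) :=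
        lt_of_le_of_lt hle (gprop hlt (Order.lt_succ β))
      have h2 : v (c (g δ) - c i) = v (c (g δ) - c (g β)) := by
        have h3 : c (g δ) - c i = (c (g δ) - c (g β)) + (c (g β) - c i) := by ring
        rw [h3, Valuation.map_add_eq_of_lt_left _ h1]
      rw [h2]
      exact lt_of_lt_of_le hi (hle.trans (le_of_lt (gprop hlt (Order.lt_succ β))))
  · -- limit case
    set a : Ordinal.{u} → K := fun γ => c (g γ) with ha
    have hpc : PseudoConvergent v α a := by
      intro l m n hlm hmn hnα
      have h1 : v (a n - a m) ≤ r (g m) := by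
        rw [show v (a n - a m) = v (a m - a n) from Valuation.map_sub_swap v _ _]
        exact contain hmn hnα
      have h2 : r (g m) < v (a l - a m) := gprop hlm (hmn.trans hnα)
      exact lt_of_le_of_lt h1 h2
    obtain ⟨x, hxC, l, hlα, hx⟩ := hmax α hlim a (fun γ _ => hc _) hpc
    refine ⟨x, hxC, fun i => ?_⟩
    -- x is within r (g m) of a m for l < m < α
    have hxm : ∀ m, l < m → m < α → v (x - a m) ≤ r (g m) := by
      intro m hlm hmα
      have hm1 : m < Order.succ m := Order.lt_succ m
      have hsα : Order.succ m < α := hlim.succ_lt hmα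
      rw [← hx hlm hm1 hsα]
      exact contain hm1 hsα
    by_cases hcase : ∃ m, l < m ∧ m < α ∧ r (g m) ≤ r i
    · obtain ⟨m, hlm, hmα, hri⟩ := hcase
      have h1 : v (x - c i) ≤ max (v (x - a m)) (v (a m - c i)) := by
        have : x - c i = (x - a m) + (a m - c i) := by ring
        rw [this]; exact v.map_add _ _
      have h2 : v (a m - c i) ≤ max (r (g m)) (r i) := hch (g m) i
      calc v (x - c i) ≤ max (v (x - a m)) (v (a m - c i)) := h1
        _ ≤ max (r (g m)) (max (r (g m)) (r i)) := max_le_max (hxm m hlm hmα) h2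
        _ ≤ r i := by
            rw [max_le_iff]; exact ⟨hri, max_le hri (le_refl _)⟩
    · -- otherwise i would be a valid choice at stage α, contradiction
      exfalso
      push_neg at hcase
      apply hα
      refine ⟨i, fun δ hδ => ?_⟩
      set m : Ordinal.{u} := Order.succ (max δ l) with hm
      have hδm : δ < m := lt_of_le_of_lt (le_max_left _ _) (Order.lt_succ _)
      have hlm : l < m := lt_of_le_of_lt (le_max_right _ _) (Order.lt_succ _)
      have hmα : m < α := hlim.succ_lt (max_lt (hδ) hlα)
      have hri : r i < r (g m) := hcase m hlm hmα
      have h1 : v (c (g m) - c i) ≤ r (g m) := by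
        rcases le_max_iff.mp (hch (g m) i) with h | h
        · exact h
        · exact h.trans (le_of_lt hri)
      have h2 : v (c (g m) - c i) < v (c (g δ) - c (g m)) :=
        lt_of_le_of_lt h1 (gprop hδm hmα)
      have h3 : v (c (g δ) - c i) = v (c (g δ) - c (g m)) := by
        have h4 : c (g δ) - c i = (c (g δ) - c (g m)) + (c (g m) - c i) := by ring
        rw [h4, Valuation.map_add_eq_of_lt_left _ h2]
      rw [h3]
      exact hri.trans (gprop hδm hmα)

/-- `d` is a separated family over `E`. -/
def Sep (v : Valuation K Γ) (E : Subfield K) {m : ℕ} (d : Fin m → K) : Prop :=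
  ∀ t : Fin m → K, (∀ j, t j ∈ E) → ∀ j, v (t j) * v (d j) ≤ v (∑ i, t i * d i)

theorem sep_tail (v : Valuation K Γ) (E : Subfield K) {m : ℕ} {d : Fin (m+1) → K}
    (hd : Sep v E d) : Sep v E (fun j : Fin m => d j.castSucc) := by
  intro t ht j
  have h := hd (Fin.snoc t 0) (fun j => by
    refine Fin.lastCases ?_ ?_ j
    · simp [Fin.snoc_last]
    · intro i; simp [Fin.snoc_castSucc]; exact ht i) j.castSucc
  simpa [Fin.sum_univ_castSucc, Fin.snoc_castSucc, Fin.snoc_last] using h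

/-- spherical completeness of finite-dimensional `C`-spans with separated basis -/
theorem sphSpan (v : Valuation K Γ) (C : Subfield K) (hmax : MaximallyComplete v C) :
    ∀ (m : ℕ) (d : Fin m → K), Sep v C d →
    ∀ {ι : Type u} [Nonempty ι] (x : ι → K) (t : ι → Fin m → K),
      (∀ i j, t i j ∈ C) → (∀ i, x i = ∑ j, t i j * d j) →
      ∀ r : ι → Γ, (∀ i i', v (x i - x i') ≤ max (r i) (r i')) →
      ∃ s : Fin m → K, (∀ j, s j ∈ C) ∧ ∀ i, v ((∑ j, s j * d j) - x i) ≤ r i := by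
  intro m
  induction m with
  | zero =>
    intro d _ ι _ x t ht hx r hr
    refine ⟨fun j => 0, fun j => C.zero_mem, fun i => ?_⟩
    have h0 : x i = 0 := by rw [hx i]; simp
    rw [h0]
    simpa using zero_le'
  | succ m ih =>
    intro d hd ι _ x t ht hx r hr
    by_cases hdm : d (Fin.last m) = 0
    · -- last vector zero: reduce to first m
      have hx' : ∀ i, x i = ∑ j : Fin m, t i j.castSucc * d j.castSucc := by
        intro i; rw [hx i, Fin.sum_univ_castSucc, hdm]; simp
      obtain ⟨s, hs, hsx⟩ := ih (fun j => d j.castSucc) (sep_tail v C hd) x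
        (fun i j => t i j.castSucc) (fun i j => ht i _) hx' r hr
      refine ⟨Fin.snoc s (0:K), fun j => ?_, fun i => ?_⟩
      · refine Fin.lastCases ?_ ?_ j
        · simp [Fin.snoc_last]
        · intro j; simp [Fin.snoc_castSucc]; exact hs j
      · have : (∑ j, (Fin.snoc s (0:K) : Fin (m+1) → K) j * d j) = ∑ j : Fin m, s j * d j.castSucc := by
          rw [Fin.sum_univ_castSucc]; simp [Fin.snoc_castSucc, Fin.snoc_last]
        rw [this]; exact hsx i
    · -- last vector nonzero
      have hvdm : v (d (Fin.last m)) ≠ 0 := by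
        simpa [Valuation.zero_iff] using hdm
      -- coefficients of the last coordinate form a chain of balls in C
      have hcoef : ∀ i i', v (t i (Fin.last m) - t i' (Fin.last m)) * v (d (Fin.last m)) ≤
          v (x i - x i') := by
        intro i i'
        have h := hd (fun j => t i j - t i' j) (fun j => C.sub_mem (ht i j) (ht i' j))
          (Fin.last m)
        have h2 : (∑ j, (t i j - t i' j) * d j) = x i - x i' := by
          rw [hx i, hx i', ← Finset.sum_sub_distrib]
          congr 1; funext j; ring
        rwa [h2] at h
      have hpos : (0:Γ) < v (d (Fin.last m)) := zero_lt_iff.mpr hvdm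
      have hchainC : ∀ i i', v (t i (Fin.last m) - t i' (Fin.last m)) ≤
          max (r i / v (d (Fin.last m))) (r i' / v (d (Fin.last m))) := by
        intro i i'
        rcases le_max_iff.mp ((hcoef i i').trans (hr i i')) with h | h
        · exact le_max_of_le_left ((le_div_iff₀ hpos).mpr h)
        · exact le_max_of_le_right ((le_div_iff₀ hpos).mpr h)
      obtain ⟨cc, hccC, hcc⟩ := sphC v C hmax (fun i => t i (Fin.last m))
        (fun i => ht i _) (fun i => r i / v (d (Fin.last m)))
        hchainC
      -- new centers
      set y : ι → K := fun i => ∑ j : Fin m, t i j.castSucc * d j.castSucc with hy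
      have hxy : ∀ i, x i = y i + t i (Fin.last m) * d (Fin.last m) := by
        intro i; rw [hx i, Fin.sum_univ_castSucc]
      have hychain : ∀ i i', v (y i - y i') ≤ max (r i) (r i') := by
        intro i i'
        have h1 : y i - y i' = (x i - x i') -
            (t i (Fin.last m) - t i' (Fin.last m)) * d (Fin.last m) := by
          rw [hxy i, hxy i']; ring
        rw [h1]
        refine Valuation.map_sub_le v (hr i i') ?_
        rw [Valuation.map_mul]
        exact le_trans (hcoef i i') (hr i i')
      obtain ⟨s, hsC, hs⟩ := ih (fun j => d j.castSucc) (sep_tail v C hd) y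
        (fun i j => t i j.castSucc) (fun i j => ht i _) (fun i => rfl) r hychain
      refine ⟨Fin.snoc s cc, fun j => ?_, fun i => ?_⟩
      · refine Fin.lastCases ?_ ?_ j
        · simpa [Fin.snoc_last] using hccC
        · intro j; simp [Fin.snoc_castSucc]; exact hsC j
      · have h1 : (∑ j, (Fin.snoc s cc : Fin (m+1) → K) j * d j) =
            (∑ j : Fin m, s j * d j.castSucc) + cc * d (Fin.last m) := by
          rw [Fin.sum_univ_castSucc]; simp [Fin.snoc_castSucc, Fin.snoc_last]
        have h2 : (∑ j, (Fin.snoc s cc : Fin (m+1) → K) j * d j) - x i =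
            ((∑ j : Fin m, s j * d j.castSucc) - y i) +
            (cc - t i (Fin.last m)) * d (Fin.last m) := by
          rw [h1, hxy i]; ring
        rw [h2]
        refine Valuation.map_add_le v (hs i) ?_
        rw [Valuation.map_mul]
        calc v (cc - t i (Fin.last m)) * v (d (Fin.last m))
            ≤ r i := (le_div_iff₀ hpos).mp (hcc i)

/-- distance from a point to a finite-dimensional separated span is attained -/
theorem distMin (v : Valuation K Γ) (C : Subfield K) (hmax : MaximallyComplete v C)
    {m : ℕ} (d : Fin m → K) (hd : Sep v C d) (a : K) :
    ∃ t : Fin m → K, (∀ j, t j ∈ C) ∧ ∀ t' : Fin m → K, (∀ j, t' j ∈ C) →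
      v (a - ∑ j, t j * d j) ≤ v (a - ∑ j, t' j * d j) := by
  classical
  let ι : Type u := {t : Fin m → K // ∀ j, t j ∈ C}
  have : Nonempty ι := ⟨⟨fun _ => 0, fun _ => C.zero_mem⟩⟩
  set x : ι → K := fun t => ∑ j, t.1 j * d j with hxdef
  set r : ι → Γ := fun t => v (a - x t) with hrdef
  have hchain : ∀ i i' : ι, v (x i - x i') ≤ max (r i) (r i') := by
    intro i i'
    have h : x i - x i' = (a - x i') - (a - x i) := by ring
    rw [h]
    exact Valuation.map_sub_le v (le_max_right _ _) (le_max_left _ _)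
  obtain ⟨s, hsC, hs⟩ := sphSpan v C hmax m d hd x (fun i => i.1) (fun i j => i.2 j)
    (fun i => rfl) r hchain
  refine ⟨s, hsC, fun t' ht' => ?_⟩
  have h1 := hs ⟨t', ht'⟩
  have h2 : a - ∑ j, s j * d j = (a - x ⟨t', ht'⟩) - ((∑ j, s j * d j) - x ⟨t', ht'⟩) := by
    ring
  rw [h2]
  exact Valuation.map_sub_le v (le_refl _) h1

/-- every finite subset of `A` lies in the span of a separated family of
nonzero elements of `A` -/
theorem spanSep (v : Valuation K Γ) (C A : Subfield K) (hCA : C ≤ A)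
    (hmax : MaximallyComplete v C) :
    ∀ (n : ℕ) (a : Fin n → K), (∀ i, a i ∈ A) →
    ∃ (m : ℕ) (d : Fin m → K), (∀ j, d j ∈ A ∧ d j ≠ 0) ∧ Sep v C d ∧
      ∀ i, ∃ t : Fin m → K, (∀ j, t j ∈ C) ∧ a i = ∑ j, t j * d j := by
  intro n
  induction n with
  | zero =>
    intro a _
    exact ⟨0, fun j => j.elim0, fun j => j.elim0, fun t _ j => j.elim0, fun i => i.elim0⟩
  | succ n ih =>
    intro a ha
    obtain ⟨m, d, hdA, hd, hrep⟩ := ih (fun i => a i.castSucc) (fun i => ha _)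
    obtain ⟨t, htC, htmin⟩ := distMin v C hmax d hd (a (Fin.last n))
    set y : K := ∑ j, t j * d j with hy
    by_cases hay : a (Fin.last n) = y
    · refine ⟨m, d, hdA, hd, fun i => ?_⟩
      refine Fin.lastCases ⟨t, htC, hay⟩ (fun i => hrep i) i
    · -- extend the family by a - y
      have hyA : y ∈ A := by
        refine A.sum_mem (fun j _ => A.mul_mem (hCA (htC j)) (hdA j).1)
      refine ⟨m + 1, Fin.snoc d (a (Fin.last n) - y), fun j => ?_, ?_, fun i => ?_⟩
      · refine Fin.lastCases ?_ ?_ j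
        · rw [Fin.snoc_last]
          exact ⟨A.sub_mem (ha _) hyA, sub_ne_zero_of_ne hay⟩
        · intro j; rw [Fin.snoc_castSucc]; exact hdA j
      · -- separatedness of the extended family
        intro s hs j
        set u : K := ∑ i : Fin m, s i.castSucc * d i with hu
        set cl : K := s (Fin.last m) with hcl
        have hsum : (∑ i, s i * (Fin.snoc d (a (Fin.last n) - y) : Fin (m+1) → K) i)
            = u + cl * (a (Fin.last n) - y) := by
          rw [Fin.sum_univ_castSucc]
          simp only [Fin.snoc_castSucc, Fin.snoc_last]
          rfl
        -- claim 1 : v cl * v (a - y) ≤ v (u + cl * (a - y))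
        have claim1 : v cl * v (a (Fin.last n) - y) ≤ v (u + cl * (a (Fin.last n) - y)) := by
          by_cases hcl0 : cl = 0
          · simp [hcl0]
          · have hrw : u + cl * (a (Fin.last n) - y) =
                cl * (a (Fin.last n) - (y - cl⁻¹ * u)) := by
              field_simp
              ring
            have hcoef : ∀ j', t j' - cl⁻¹ * s j'.castSucc ∈ C := fun j' =>
              C.sub_mem (htC j') (C.mul_mem (C.inv_mem (hs (Fin.last m))) (hs _))
            have hyu : y - cl⁻¹ * u = ∑ j', (t j' - cl⁻¹ * s j'.castSucc) * d j' := by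
              rw [hy, hu, Finset.mul_sum, ← Finset.sum_sub_distrib]
              congr 1; funext j'; ring
            have hmin := htmin _ hcoef
            rw [← hyu] at hmin
            rw [hrw, Valuation.map_mul]
            exact mul_le_mul_right hmin _
        -- claim 2 : the other coefficients
        have claim2 : ∀ j' : Fin m, v (s j'.castSucc) * v (d j') ≤
            v (u + cl * (a (Fin.last n) - y)) := by
          intro j'
          have h1 : v (s j'.castSucc) * v (d j') ≤ v u :=
            hd (fun i => s i.castSucc) (fun i => hs _) j'
          refine h1.trans ?_
          rcases lt_or_ge (v (cl * (a (Fin.last n) - y))) (v u) with h | h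
          · rw [Valuation.map_add_eq_of_lt_left _ h]
          · refine h.trans ?_
            rw [Valuation.map_mul] at h ⊢
            exact claim1
        rw [hsum]
        refine Fin.lastCases ?_ ?_ j
        · rw [Fin.snoc_last]; exact claim1
        · intro j'; rw [Fin.snoc_castSucc]; exact claim2 j'
      · -- representations
        refine Fin.lastCases ?_ ?_ i
        · refine ⟨Fin.snoc t 1, fun j => ?_, ?_⟩
          · refine Fin.lastCases ?_ ?_ j
            · rw [Fin.snoc_last]; exact C.one_mem
            · intro j; rw [Fin.snoc_castSucc]; exact htC j
          · rw [Fin.sum_univ_castSucc]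
            simp only [Fin.snoc_castSucc, Fin.snoc_last, one_mul]
            rw [← hy]
            ring
        · intro i
          obtain ⟨t', ht'C, ht'⟩ := hrep i
          refine ⟨Fin.snoc t' 0, fun j => ?_, ?_⟩
          · refine Fin.lastCases ?_ ?_ j
            · rw [Fin.snoc_last]; exact C.zero_mem
            · intro j; rw [Fin.snoc_castSucc]; exact ht'C j
          · rw [Fin.sum_univ_castSucc]
            simp only [Fin.snoc_castSucc, Fin.snoc_last, zero_mul, add_zero]
            exact ht'

/-- normalized separated spanning family -/
theorem spanSepNorm (v : Valuation K Γ) (C A : Subfield K) (hCA : C ≤ A)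
    (hmax : MaximallyComplete v C)
    (hval : ∀ x ∈ A, x ≠ 0 → ∃ c ∈ C, c ≠ 0 ∧ v c = v x) :
    ∀ (n : ℕ) (a : Fin n → K), (∀ i, a i ∈ A) →
    ∃ (m : ℕ) (d : Fin m → K), (∀ j, d j ∈ A ∧ v (d j) = 1) ∧ Sep v C d ∧
      ∀ i, ∃ t : Fin m → K, (∀ j, t j ∈ C) ∧ a i = ∑ j, t j * d j := by
  intro n a ha
  obtain ⟨m, d, hdA, hd, hrep⟩ := spanSep v C A hCA hmax n a ha
  choose c hcC hc0 hcv using fun j => hval (d j) (hdA j).1 (hdA j).2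
  set d' : Fin m → K := fun j => d j * (c j)⁻¹ with hd'
  have hvc : ∀ j, v (c j) ≠ 0 := fun j => by
    simpa [Valuation.zero_iff] using hc0 j
  have hvd'1 : ∀ j, v (d' j) = 1 := by
    intro j
    rw [hd']
    simp only [Valuation.map_mul, map_inv₀, hcv j]
    exact mul_inv_cancel₀ (by rw [← hcv j]; exact hvc j)
  refine ⟨m, d', fun j => ⟨A.mul_mem (hdA j).1 (A.inv_mem (hCA (hcC j))), hvd'1 j⟩, ?_, ?_⟩
  · intro t ht j
    have h1 : (∑ i, t i * d' i) = ∑ i, (t i * (c i)⁻¹) * d i := by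
      congr 1; funext i; rw [hd']; ring
    have h2 := hd (fun i => t i * (c i)⁻¹)
      (fun i => C.mul_mem (ht i) (C.inv_mem (hcC i))) j
    rw [h1]
    refine le_trans (le_of_eq ?_) h2
    rw [hvd'1 j, mul_one, Valuation.map_mul, map_inv₀, hcv j, mul_assoc,
      inv_mul_cancel₀ (show v (d j) ≠ 0 by rw [← hcv j]; exact hvc j), mul_one]
  · intro i
    obtain ⟨t, htC, ht⟩ := hrep i
    refine ⟨fun j => t j * c j, fun j => C.mul_mem (htC j) (hcC j), ?_⟩
    rw [ht]
    congr 1; funext j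
    have h3 : d' j = d j * (c j)⁻¹ := rfl
    rw [h3, ← div_eq_mul_inv, ← mul_div_assoc, eq_div_iff (hc0 j)]
    ring
  
/-- a family in `A` which is separated over `C` with all values 1 is separated over `B`
(in the weak sense needed) -/
theorem sepB (v : Valuation K Γ) (C A B : Subfield K)
    (hdisj : ∀ (n : ℕ) (a : Fin n → K), (∀ i, a i ∈ A ∧ v (a i) ≤ 1) →
      (∀ c : Fin n → K, (∀ i, c i ∈ C ∧ v (c i) ≤ 1) → v (∑ i, c i * a i) < 1 → ∀ i, v (c i) < 1) →
      (∀ c : Fin n → K, (∀ i, c i ∈ B ∧ v (c i) ≤ 1) → v (∑ i, c i * a i) < 1 → ∀ i, v (c i) < 1))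
    {m : ℕ} (d : Fin m → K) (hdA : ∀ j, d j ∈ A ∧ v (d j) = 1) (hd : Sep v C d) :
    ∀ β : Fin m → K, (∀ j, β j ∈ B) → ∀ j, v (β j) ≤ v (∑ i, β i * d i) := by
  have hlin : ∀ c : Fin m → K, (∀ i, c i ∈ B ∧ v (c i) ≤ 1) →
      v (∑ i, c i * d i) < 1 → ∀ i, v (c i) < 1 := by
    refine hdisj m d (fun j => ⟨(hdA j).1, le_of_eq (hdA j).2⟩) ?_
    intro c hc hsum i
    have := hd c (fun i => (hc i).1) i
    rw [(hdA i).2, mul_one] at this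
    exact lt_of_le_of_lt this hsum
  intro β hβ j
  by_cases hβ0 : ∀ j', v (β j') = 0
  · rw [hβ0 j]; exact zero_le'
  push_neg at hβ0
  obtain ⟨j₁, hj₁⟩ := hβ0
  obtain ⟨j₀, _, hj₀⟩ := Finset.exists_max_image Finset.univ (fun j' => v (β j'))
    ⟨j₁, Finset.mem_univ j₁⟩
  have hvj₀ : v (β j₀) ≠ 0 := fun h => hj₁ (le_antisymm (h ▸ hj₀ j₁ (Finset.mem_univ _)) zero_le')
  have hβj₀ : β j₀ ≠ 0 := fun h => hvj₀ (by simp [h])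
  have hmain : v (β j₀) ≤ v (∑ i, β i * d i) := by
    by_contra hlt
    push_neg at hlt
    have h1 : v (∑ i, (β i / β j₀) * d i) < 1 := by
      have hsum : (∑ i, (β i / β j₀) * d i) = (∑ i, β i * d i) / β j₀ := by
        rw [Finset.sum_div]; congr 1; funext i; ring
      rw [hsum, Valuation.map_div]
      rw [div_lt_iff₀ (zero_lt_iff.mpr hvj₀), one_mul]
      exact hlt
    have h2 := hlin (fun i => β i / β j₀)
      (fun i => ⟨B.div_mem (hβ i) (hβ j₀), by
        rw [Valuation.map_div]
        exact div_le_one_of_le₀ (hj₀ i (Finset.mem_univ _)) zero_le'⟩) h1 j₀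
    simp [div_self hβj₀] at h2
  exact le_trans (hj₀ j (Finset.mem_univ _)) hmain

theorem closure_rep (A B : Subfield K) {e : K}
    (he : e ∈ Subring.closure ((A : Set K) ∪ (B : Set K))) :
    ∃ (n : ℕ) (a b : Fin n → K), (∀ i, a i ∈ A ∧ b i ∈ B) ∧ e = ∑ i, a i * b i := by
  induction he using Subring.closure_induction with
  | mem x hx =>
    rcases hx with hx | hx
    · exact ⟨1, fun _ => x, fun _ => 1, fun i => ⟨hx, B.one_mem⟩, by simp⟩
    · exact ⟨1, fun _ => 1, fun _ => x, fun i => ⟨A.one_mem, hx⟩, by simp⟩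
  | zero => exact ⟨0, fun i => i.elim0, fun i => i.elim0, fun i => i.elim0, by simp⟩
  | one => exact ⟨1, fun _ => 1, fun _ => 1, fun i => ⟨A.one_mem, B.one_mem⟩, by simp⟩
  | add x y hx hy ihx ihy =>
    obtain ⟨n1, a1, b1, h1, e1⟩ := ihx
    obtain ⟨n2, a2, b2, h2, e2⟩ := ihy
    refine ⟨n1 + n2, Fin.append a1 a2, Fin.append b1 b2, fun i => ?_, ?_⟩
    · refine Fin.addCases (fun i => ?_) (fun i => ?_) i
      · rw [Fin.append_left, Fin.append_left]; exact h1 i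
      · rw [Fin.append_right, Fin.append_right]; exact h2 i
    · rw [Fin.sum_univ_add]
      simp only [Fin.append_left, Fin.append_right]
      rw [e1, e2]
  | neg x hx ihx =>
    obtain ⟨n1, a1, b1, h1, e1⟩ := ihx
    refine ⟨n1, fun i => -a1 i, b1, fun i => ⟨A.neg_mem (h1 i).1, (h1 i).2⟩, ?_⟩
    rw [e1, ← Finset.sum_neg_distrib]
    congr 1; funext i; ring
  | mul x y hx hy ihx ihy =>
    obtain ⟨n1, a1, b1, h1, e1⟩ := ihx
    obtain ⟨n2, a2, b2, h2, e2⟩ := ihy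
    refine ⟨n1 * n2,
      fun k => a1 (finProdFinEquiv.symm k).1 * a2 (finProdFinEquiv.symm k).2,
      fun k => b1 (finProdFinEquiv.symm k).1 * b2 (finProdFinEquiv.symm k).2,
      fun k => ⟨A.mul_mem (h1 _).1 (h2 _).1, B.mul_mem (h1 _).2 (h2 _).2⟩, ?_⟩
    calc x * y = ∑ i, ∑ j, (a1 i * b1 i) * (a2 j * b2 j) := by
          rw [e1, e2, Finset.sum_mul_sum]
      _ = ∑ p : Fin n1 × Fin n2, (a1 p.1 * a2 p.2) * (b1 p.1 * b2 p.2) := by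
          rw [Fintype.sum_prod_type]
          congr 1; funext i; congr 1; funext j; ring
      _ = ∑ k : Fin (n1 * n2),
            (a1 (finProdFinEquiv.symm k).1 * a2 (finProdFinEquiv.symm k).2) *
            (b1 (finProdFinEquiv.symm k).1 * b2 (finProdFinEquiv.symm k).2) :=
          (Equiv.sum_comp finProdFinEquiv.symm _).symm


/-- Lemma 12.4 (i), (ii) of Haskell–Hrushovski–Macpherson.  `K` is an
algebraically closed valued field, `C ≤ A`, `C ≤ B` are algebraically closed valued
subfields, `C` maximally complete, `Γ_C = Γ_A`, and `k(A)`, `k(B)` linearly disjoint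
over `k(C)`.  The algebra structures `Algebra ↥C ↥A`, `Algebra ↥C ↥B` are required to
be the canonical inclusion ones (`halgA`, `halgB`), so that the tensor product
`↥A ⊗[↥C] ↥B` is available.  (i) Any `∑ aᵢ ⊗ bᵢ` can be rewritten as `∑ dⱼ ⊗ b'ⱼ`
with `|∑ dⱼ b'ⱼ| = maxⱼ |dⱼ||b'ⱼ|` in `K`; the equality with the maximum is expressed
by the reverse inequalities `|dⱼ||b'ⱼ| ≤ |∑ dⱼ b'ⱼ|` (the other direction is the
ultrametric inequality).  (ii) With `E` the subring of `K` generated by `A ∪ B`,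
`{|e| : e ∈ E, e ≠ 0} = Γ_B`. -/
theorem tensor_separated_and_value_group (v : Valuation K Γ) [IsAlgClosed K]
    (C A B : Subfield K) (hCA : C ≤ A) (hCB : C ≤ B)
    [IsAlgClosed ↥C] [IsAlgClosed ↥A] [IsAlgClosed ↥B]
    [Algebra ↥C ↥A] [Algebra ↥C ↥B]
    (halgA : ∀ c : ↥C, ((algebraMap ↥C ↥A c : ↥A) : K) = (c : K))
    (halgB : ∀ c : ↥C, ((algebraMap ↥C ↥B c : ↥B) : K) = (c : K))
    (hmax : MaximallyComplete v C)
    (hval : ∀ x ∈ A, x ≠ 0 → ∃ c ∈ C, c ≠ 0 ∧ v c = v x)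
    (hdisj : ResidueLinearDisjoint v C A B) :
    (∀ (n : ℕ) (a : Fin n → ↥A) (b : Fin n → ↥B),
      ∃ (k : ℕ) (d : Fin k → ↥A) (b' : Fin k → ↥B),
        (∑ i, a i ⊗ₜ[↥C] b i) = (∑ j, d j ⊗ₜ[↥C] b' j) ∧
        ∀ j₀ : Fin k, v (d j₀ : K) * v (b' j₀ : K) ≤ v (∑ j, ((d j : K) * (b' j : K)))) ∧
    {g : Γ | ∃ e ∈ Subring.closure ((A : Set K) ∪ (B : Set K)), e ≠ 0 ∧ v e = g} =
      {g : Γ | ∃ x ∈ B, x ≠ 0 ∧ v x = g} := by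
  have hdisj' : ∀ (n : ℕ) (a : Fin n → K), (∀ i, a i ∈ A ∧ v (a i) ≤ 1) →
      (∀ c : Fin n → K, (∀ i, c i ∈ C ∧ v (c i) ≤ 1) → v (∑ i, c i * a i) < 1 → ∀ i, v (c i) < 1) →
      (∀ c : Fin n → K, (∀ i, c i ∈ B ∧ v (c i) ≤ 1) → v (∑ i, c i * a i) < 1 → ∀ i, v (c i) < 1) := hdisj

  constructor
  · -- part (i)
    intro n a b
    obtain ⟨m, d, hdA, hd, hrep⟩ := spanSepNorm v C A hCA hmax hval n
      (fun i => (a i : K)) (fun i => (a i).2)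
    choose t htC htrep using hrep
    have hsepB := sepB v C A B hdisj' d hdA hd
    set dA : Fin m → ↥A := fun j => ⟨d j, (hdA j).1⟩ with hdA'
    set tC : Fin n → Fin m → ↥C := fun i j => ⟨t i j, htC i j⟩ with htC'
    set b' : Fin m → ↥B := fun j => ∑ i, tC i j • b i with hb'
    have hsumB : ∀ {k : ℕ} (f : Fin k → ↥B), ((∑ i, f i : ↥B) : K) = ∑ i, (f i : K) := by
      intro k f
      exact AddSubmonoidClass.coe_finset_sum f Finset.univ
    have hsumA : ∀ {k : ℕ} (f : Fin k → ↥A), ((∑ i, f i : ↥A) : K) = ∑ i, (f i : K) := by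
      intro k f
      exact AddSubmonoidClass.coe_finset_sum f Finset.univ
    have hsmulB : ∀ (c : ↥C) (x : ↥B), ((c • x : ↥B) : K) = (c : K) * (x : K) := by
      intro c x
      rw [Algebra.smul_def]
      push_cast
      rw [halgB]
    have hsmulA : ∀ (c : ↥C) (x : ↥A), ((c • x : ↥A) : K) = (c : K) * (x : K) := by
      intro c x
      rw [Algebra.smul_def]
      push_cast
      rw [halgA]
    have hb'K : ∀ j, (b' j : K) = ∑ i, t i j * (b i : K) := by
      intro j
      rw [hb']
      simp only
      rw [hsumB]
      congr 1; funext i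
      rw [hsmulB]
    have harep : ∀ i, a i = ∑ j, tC i j • dA j := by
      intro i
      apply Subtype.ext
      rw [hsumA, htrep i]
      congr 1; funext j
      rw [hsmulA]
    refine ⟨m, dA, b', ?_, ?_⟩
    · calc (∑ i, a i ⊗ₜ[↥C] b i) = ∑ i, (∑ j, tC i j • dA j) ⊗ₜ[↥C] b i := by
            congr 1; funext i; rw [harep i]
        _ = ∑ i, ∑ j, (tC i j • dA j) ⊗ₜ[↥C] b i := by
            congr 1; funext i; rw [TensorProduct.sum_tmul]
        _ = ∑ i, ∑ j, dA j ⊗ₜ[↥C] (tC i j • b i) := by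
            congr 1; funext i; congr 1; funext j; rw [TensorProduct.smul_tmul]
        _ = ∑ j, ∑ i, dA j ⊗ₜ[↥C] (tC i j • b i) := Finset.sum_comm
        _ = ∑ j, dA j ⊗ₜ[↥C] b' j := by
            congr 1; funext j; rw [← TensorProduct.tmul_sum]
    · intro j₀
      have h1 : v (dA j₀ : K) = 1 := (hdA j₀).2
      have h2 : (∑ j, ((dA j : K) * (b' j : K))) = ∑ j, (b' j : K) * d j := by
        congr 1; funext j; ring
      rw [h1, one_mul, h2]
      exact hsepB (fun j => (b' j : K)) (fun j => (b' j).2) j₀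
  · -- part (ii)
    ext g
    simp only [Set.mem_setOf_eq]
    constructor
    · rintro ⟨e, he, he0, rfl⟩
      obtain ⟨n, aK, bK, hab, rfl⟩ := closure_rep A B he
      obtain ⟨m, d, hdA, hd, hrep⟩ := spanSepNorm v C A hCA hmax hval n aK
        (fun i => (hab i).1)
      choose t htC htrep using hrep
      have hsepB := sepB v C A B hdisj' d hdA hd
      set β : Fin m → K := fun j => ∑ i, t i j * bK i with hβ
      have hβB : ∀ j, β j ∈ B := fun j =>
        B.sum_mem (fun i _ => B.mul_mem (hCB (htC i j)) (hab i).2)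
      have heq : (∑ i, aK i * bK i) = ∑ j, β j * d j := by
        calc (∑ i, aK i * bK i) = ∑ i, ∑ j, (t i j * bK i) * d j := by
              congr 1; funext i
              rw [htrep i, Finset.sum_mul]
              congr 1; funext j; ring
          _ = ∑ j, ∑ i, (t i j * bK i) * d j := Finset.sum_comm
          _ = ∑ j, β j * d j := by
              congr 1; funext j; rw [hβ]; simp only; rw [Finset.sum_mul]
      have hm : m ≠ 0 := by
        intro hm0
        subst hm0
        rw [heq] at he0
        simp at he0
      have : Nonempty (Fin m) := ⟨⟨0, Nat.pos_of_ne_zero hm⟩⟩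
      obtain ⟨j₀, _, hj₀⟩ := Finset.exists_max_image Finset.univ (fun j => v (β j))
        ⟨Classical.arbitrary (Fin m), Finset.mem_univ _⟩
      have hle1 : v (∑ i, aK i * bK i) ≤ v (β j₀) := by
        rw [heq]
        refine Valuation.map_sum_le v (fun j _ => ?_)
        rw [Valuation.map_mul, (hdA j).2, mul_one]
        exact hj₀ j (Finset.mem_univ _)
      have hle2 : v (β j₀) ≤ v (∑ i, aK i * bK i) := by
        rw [heq]; exact hsepB β hβB j₀
      have hveq : v (β j₀) = v (∑ i, aK i * bK i) := le_antisymm hle2 hle1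
      refine ⟨β j₀, hβB j₀, ?_, hveq⟩
      intro h0
      rw [h0, Valuation.map_zero] at hveq
      exact he0 ((Valuation.zero_iff v).mp hveq.symm)
    · rintro ⟨x, hx, hx0, rfl⟩
      exact ⟨x, Subring.subset_closure (Or.inr hx), hx0, rfl⟩


end Stmt8
end
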